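/- arXiv:2502.20278 — 9 statements merged into one kernel-verified Lean document; each statement's English description precedes it below -/
import Mathlib

section
/- If a graph Γ contains no odd cycle of length at most 2t+1, then its t-fold Mycielskian M_t(Γ) also contains no odd cycle of length at most 2t+1. -/
/-- `G` contains no odd cycle of length at most `L`. -/
def OddGirthGT {V : Type*} (G : SimpleGraph V) (L : ℕ) : Prop :=
  ∀ ⦃v : V⦄ (w : G.Walk v v), w.IsCycle → Odd w.length → L < w.length

/-- Adjacency-generating relation for the `t`-fold Mycielskian.
Layers `1,…,t+1` are encoded by `Fin (t+1)` (layer `ℓ` is index `ℓ-1`),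
and the extra root vertex `r` is `Sum.inr ()`. -/
def mycRel {V : Type*} (t : ℕ) (Γ : SimpleGraph V) :
    ((V × Fin (t + 1)) ⊕ Unit) → ((V × Fin (t + 1)) ⊕ Unit) → Prop
  | Sum.inl (v, i), Sum.inl (w, j) =>
      Γ.Adj v w ∧ (((i : ℕ) = t ∧ (j : ℕ) = t) ∨ (j : ℕ) = (i : ℕ) + 1)
  | Sum.inl (_, i), Sum.inr _ => (i : ℕ) = 0
  | _, _ => False

/-- The `t`-fold Mycielskian `M_t(Γ)`. -/
def Myc {V : Type*} (t : ℕ) (Γ : SimpleGraph V) :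
    SimpleGraph ((V × Fin (t + 1)) ⊕ Unit) :=
  SimpleGraph.fromRel (mycRel t Γ)

/-!
An odd closed walk contains an odd cycle that is no longer, so the odd girth can be tested on
closed walks. An odd closed walk of `M_t(Γ)` avoiding the root `r` projects, via `(v, i) ↦ v`, to
an odd closed walk of `Γ` of the same length. One through `r` must reach the top layer: every other
edge joins consecutive layers, so a closed walk using only such edges has even length. Going from
`r` up to the top layer and back takes at least `2 (t + 1)` steps.
-/

namespace SimpleGraph.Walk

variable {V : Type*} {G : SimpleGraph V}

theorem exists_isPath_or_exists_odd_isCycle [DecidableEq V] : ∀ {a b : V} (p : G.Walk a b),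
    (∃ q : G.Walk a b, q.IsPath ∧ q.length ≤ p.length ∧ Even (p.length + q.length)) ∨
      ∃ (x : V) (c : G.Walk x x), c.IsCycle ∧ Odd c.length ∧ c.length ≤ p.length
  | _, _, nil => .inl ⟨nil, by simp, le_rfl, by simp⟩
  | a, _, cons h p => by
    obtain ⟨q, hq, hql, hqe⟩ | ⟨x, c, hc, hco, hcl⟩ := exists_isPath_or_exists_odd_isCycle p
    swap
    · exact .inr ⟨x, c, hc, hco, by rw [length_cons]; omega⟩
    -- If `a` lies on the path `q`, the edge `a — v` closes a cycle with the part of `q` before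
    -- `a`; when that cycle is even, the part of `q` after `a` has the parity of `cons h p`.
    by_cases ha : a ∈ q.support
    · have hsplit := congrArg length (q.take_spec ha)
      rw [length_append] at hsplit
      by_cases hodd : Odd (cons h (q.takeUntil a ha)).length
      · refine .inr ⟨a, _, isCycle_iff_isPath_tail_and_le_length.mpr ⟨?_, ?_⟩, hodd, ?_⟩
        · simpa using hq.takeUntil ha
        · have hpos : (q.takeUntil a ha).length ≠ 0 := fun h0 =>
            h.ne (eq_of_length_eq_zero h0).symm
          rw [length_cons] at hodd ⊢
          rcases hodd with ⟨k, hk⟩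
          omega
        · rw [length_cons, length_cons]
          omega
      · refine .inl ⟨q.dropUntil a ha, hq.dropUntil ha, by rw [length_cons]; omega, ?_⟩
        rw [Nat.not_odd_iff_even, length_cons] at hodd
        rw [length_cons]
        rcases hodd with ⟨k, hk⟩
        rcases hqe with ⟨m, hm⟩
        exact ⟨m + 1 - k, by omega⟩
    · refine .inl ⟨cons h q, hq.cons ha, by simpa using hql, ?_⟩
      rw [length_cons, length_cons]
      rcases hqe with ⟨m, hm⟩
      exact ⟨m + 1, by omega⟩

theorem exists_odd_isCycle_length_le {u : V} (w : G.Walk u u) (hw : Odd w.length) :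
    ∃ (x : V) (c : G.Walk x x), c.IsCycle ∧ Odd c.length ∧ c.length ≤ w.length := by
  classical
  refine w.exists_isPath_or_exists_odd_isCycle.resolve_left ?_
  rintro ⟨q, hq, -, he⟩
  rw [(isPath_iff_nil.mp hq).length_eq_zero, add_zero] at he
  exact Nat.not_even_iff_odd.mpr hw he

theorem abs_sub_le_length {f : V → ℤ} (hf : ∀ x y, G.Adj x y → |f x - f y| ≤ 1) :
    ∀ {u v : V} (p : G.Walk u v), |f u - f v| ≤ p.length
  | _, _, nil => by simp
  | u, v, cons (v := w) h p => by
    have := abs_sub_le (f u) (f w) (f v)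
    have := abs_sub_le_length hf p
    push_cast [length_cons]
    linarith [hf _ _ h]

theorem even_length_sub_of_forall_darts {f : V → ℤ} :
    ∀ {u v : V} (p : G.Walk u v), (∀ d ∈ p.darts, Odd (f d.snd - f d.fst)) →
      Even ((p.length : ℤ) - (f v - f u))
  | _, _, nil, _ => by simp
  | u, v, cons (v := w) h p, hp => by
    obtain ⟨b, hb⟩ : Odd (f w - f u) := hp ⟨(u, w), h⟩ (by simp)
    obtain ⟨a, ha⟩ := even_length_sub_of_forall_darts p fun d hd => hp d (by simp [hd])
    exact ⟨a - b, by push_cast [length_cons]; omega⟩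

@[simp]
theorem length_induce {s : Set V} {u v : V} (w : G.Walk u v) (hw : ∀ x ∈ w.support, x ∈ s) :
    (w.induce s hw).length = w.length := by
  conv_rhs => rw [← w.map_induce hw]
  exact (length_map ..).symm

end SimpleGraph.Walk

open SimpleGraph

namespace Myc

variable {V : Type*} {t : ℕ} {Γ : SimpleGraph V}

def level : (V × Fin (t + 1)) ⊕ Unit → ℤ :=
  Sum.elim (fun x => (x.2 : ℤ)) fun _ => -1

theorem adj_level {x y : (V × Fin (t + 1)) ⊕ Unit} (h : (Myc t Γ).Adj x y) :
    level y = level x + 1 ∨ level x = level y + 1 ∨ (level x = t ∧ level y = t) := by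
  rw [Myc, fromRel_adj] at h
  obtain ⟨-, h | h⟩ := h <;>
  rcases x with ⟨v, i⟩ | _ <;> rcases y with ⟨w, j⟩ | _ <;>
  simp only [mycRel] at h <;> simp only [level, Sum.elim_inl, Sum.elim_inr] <;> omega

theorem abs_level_sub_le_one {x y : (V × Fin (t + 1)) ⊕ Unit} (h : (Myc t Γ).Adj x y) :
    |level x - level y| ≤ 1 := by
  rw [abs_le]
  have := adj_level h
  omega

theorem odd_level_sub {x y : (V × Fin (t + 1)) ⊕ Unit} (h : (Myc t Γ).Adj x y)
    (hx : level x ≠ t) : Odd (level y - level x) := by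
  rcases adj_level h with h | h | ⟨hx', -⟩
  · exact ⟨0, by omega⟩
  · exact ⟨-1, by omega⟩
  · exact absurd hx' hx

def projHom : (Myc t Γ).induce {x | x.isLeft} →g Γ where
  toFun x := (x.1.getLeft x.2).1
  map_rel' {x y} h := by
    obtain ⟨⟨a, i⟩ | _, hx⟩ := x <;> obtain ⟨⟨b, j⟩ | _, hy⟩ := y <;> simp at hx hy
    rw [comap_adj, Myc, fromRel_adj] at h
    obtain ⟨-, h | h⟩ := h
    exacts [h.1, h.1.symm]

theorem two_mul_add_two_le_length_of_odd (w : (Myc t Γ).Walk (.inr ()) (.inr ()))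
    (hw : Odd w.length) : 2 * t + 2 ≤ w.length := by
  classical
  obtain ⟨u, hu, hut⟩ : ∃ u ∈ w.support, level u = t := by
    by_contra! hno
    have := w.even_length_sub_of_forall_darts fun d hd =>
      odd_level_sub d.adj (hno _ (w.dart_fst_mem_support_of_mem_darts hd))
    rw [sub_self, sub_zero, Int.even_coe_nat] at this
    exact Nat.not_even_iff_odd.mpr hw this
  have hsplit := congrArg Walk.length (w.take_spec hu)
  rw [Walk.length_append] at hsplit
  have h₁ := (w.takeUntil u hu).abs_sub_le_length fun _ _ => abs_level_sub_le_one
  have h₂ := (w.dropUntil u hu).abs_sub_le_length fun _ _ => abs_level_sub_le_one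
  rw [hut] at h₁ h₂
  simp only [level, Sum.elim_inr] at h₁ h₂
  rw [abs_le] at h₁ h₂
  omega

end Myc

theorem oddGirthGT_iff_forall_odd_length {V : Type*} {G : SimpleGraph V} {L : ℕ} :
    OddGirthGT G L ↔ ∀ ⦃u : V⦄ (w : G.Walk u u), Odd w.length → L < w.length := by
  refine ⟨fun h u w hw => ?_, fun h u w _ hw => h w hw⟩
  obtain ⟨x, c, hc, hco, hcl⟩ := w.exists_odd_isCycle_length_le hw
  exact (h c hc hco).trans_le hcl

theorem stmt_0 {V : Type*} (t : ℕ) (Γ : SimpleGraph V)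
    (h : OddGirthGT Γ (2 * t + 1)) :
    OddGirthGT (Myc t Γ) (2 * t + 1) := by
  classical
  rw [oddGirthGT_iff_forall_odd_length] at h ⊢
  intro a w hw
  by_cases hr : Sum.inr () ∈ w.support
  · have := Myc.two_mul_add_two_le_length_of_odd (w.rotate _ hr) (by simpa using hw)
    rw [Walk.length_rotate] at this
    omega
  · have hleft : ∀ x ∈ w.support, x ∈ {x | x.isLeft} := by
      rintro (_ | ⟨⟨⟩⟩) hx
      exacts [rfl, absurd hx hr]
    simpa using h ((w.induce _ hleft).map Myc.projHom) (by simpa using hw)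
end

section
/- Let G be a graph with vertex partition V(G) = U ⊔ I such that I, N(I), N²(I), ..., N^t(I) are all independent sets in G. If G[U] admits a graph homomorphism to Γ, then G admits a graph homomorphism to the t-fold Mycielskian M_t(Γ). -/
/-- The set of vertices of `G` at graph distance exactly `i` from the set `X`:
there is a walk of length `i` from `X`, and no shorter walk from `X`. -/
def distSet {V : Type*} (G : SimpleGraph V) (X : Set V) (i : ℕ) : Set V :=
  {v | (∃ x ∈ X, ∃ w : G.Walk x v, w.length = i) ∧
       ∀ x ∈ X, ∀ w : G.Walk x v, i ≤ w.length}

/-- `S` is an independent set in `G`. -/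
def IsIndep {V : Type*} (G : SimpleGraph V) (S : Set V) : Prop :=
  ∀ a ∈ S, ∀ b ∈ S, ¬ G.Adj a b

/-!
Let `d v ∈ ℕ∞` be the distance from `v` to `I` (`⊤` if `v` is not reachable from `I`). Send `I`
to the root and a vertex `v ∉ I` to `(f v, min (d v) (t + 1))`, where `f` is the homomorphism on
`G[U]`. Along an edge `d` changes by at most one, and it cannot stay constant at a value `≤ t`
because `N^i(I)` is independent. So an edge from `I` ends at distance `1`, i.e. in the layer
adjacent to the root, and every other edge joins consecutive layers or lies in the top layer,
which is a copy of `Γ`.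
-/

open SimpleGraph

section Mycielskian

variable {W : Type*} {Γ : SimpleGraph W} {t : ℕ}

theorem myc_adj_inl_inr {a : W} {i : Fin (t + 1)} :
    (Myc t Γ).Adj (Sum.inl (a, i)) (Sum.inr ()) ↔ (i : ℕ) = 0 := by
  simp [Myc, mycRel]

theorem myc_adj_inl_inl {a b : W} {i j : Fin (t + 1)} (hab : Γ.Adj a b)
    (hij : ((i : ℕ) = t ∧ (j : ℕ) = t) ∨ (j : ℕ) = i + 1) :
    (Myc t Γ).Adj (Sum.inl (a, i)) (Sum.inl (b, j)) := by
  simp [Myc, mycRel, hab, hab.ne, hij]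

end Mycielskian

namespace SimpleGraph

variable {V : Type*} {G : SimpleGraph V} {X : Set V} {u v : V}

noncomputable def setEDist (G : SimpleGraph V) (X : Set V) (v : V) : ℕ∞ :=
  sInf ((G.edist · v) '' X)

theorem setEDist_le_length {x : V} (hx : x ∈ X) (w : G.Walk x v) :
    G.setEDist X v ≤ w.length :=
  (csInf_le (OrderBot.bddBelow _) (Set.mem_image_of_mem _ hx)).trans (edist_le w)

theorem exists_walk_of_setEDist_eq_coe {n : ℕ} (h : G.setEDist X v = n) :
    ∃ x ∈ X, ∃ w : G.Walk x v, w.length = n := by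
  have hne : ((G.edist · v) '' X).Nonempty :=
    Set.nonempty_iff_ne_empty.2 fun he => by simp [setEDist, he] at h
  obtain ⟨x, hx, hxv⟩ := csInf_mem hne
  obtain ⟨w, hw⟩ := exists_walk_of_edist_eq_coe (hxv.trans h)
  exact ⟨x, hx, w, hw⟩

theorem mem_distSet_of_setEDist_eq {n : ℕ} (h : G.setEDist X v = n) : v ∈ distSet G X n :=
  ⟨exists_walk_of_setEDist_eq_coe h, fun _ hx w => by
    exact_mod_cast h ▸ setEDist_le_length hx w⟩

theorem setEDist_eq_zero_iff : G.setEDist X v = 0 ↔ v ∈ X := by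
  refine ⟨fun h => ?_, fun hv => nonpos_iff_eq_zero.1 (setEDist_le_length hv .nil)⟩
  obtain ⟨x, hx, w, hw⟩ := exists_walk_of_setEDist_eq_coe (n := 0) h
  exact w.eq_of_length_eq_zero hw ▸ hx

theorem one_le_setEDist_of_notMem (hv : v ∉ X) : 1 ≤ G.setEDist X v :=
  Order.one_le_iff_ne_zero.2 (mt setEDist_eq_zero_iff.1 hv)

theorem Adj.setEDist_le (h : G.Adj u v) : G.setEDist X v ≤ G.setEDist X u + 1 := by
  cases hu : G.setEDist X u using ENat.recTopCoe with
  | top => simp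
  | coe n =>
    obtain ⟨x, hx, w, hw⟩ := exists_walk_of_setEDist_eq_coe hu
    simpa [hw] using setEDist_le_length hx (w.concat h)

theorem not_adj_of_setEDist_eq {t : ℕ} (hind : ∀ i ≤ t, IsIndep G (distSet G X i))
    (huv : G.setEDist X u = G.setEDist X v) (ht : G.setEDist X u ≤ t) : ¬ G.Adj u v := by
  obtain ⟨n, hn⟩ := ENat.ne_top_iff_exists.1 (ne_top_of_le_ne_top (ENat.natCast_ne_top t) ht)
  exact hind n (by exact_mod_cast hn ▸ ht) u (mem_distSet_of_setEDist_eq hn.symm) v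
    (mem_distSet_of_setEDist_eq (huv ▸ hn.symm))

end SimpleGraph

section Layer

noncomputable def mycLayer (t : ℕ) (d : ℕ∞) : Fin (t + 1) :=
  ⟨(min d ((t + 1 : ℕ) : ℕ∞)).toNat - 1, by
    have := ENat.toNat_le_of_le_natCast (min_le_right d ((t + 1 : ℕ) : ℕ∞)); omega⟩

theorem mycLayer_natCast (t n : ℕ) : (mycLayer t n : ℕ) = min n (t + 1) - 1 := by
  rw [mycLayer, Fin.val_mk, ← Nat.mono_cast.map_min, ENat.toNat_natCast]

theorem mycLayer_top (t : ℕ) : (mycLayer t ⊤ : ℕ) = t := by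
  rw [mycLayer, Fin.val_mk, min_eq_right le_top, ENat.toNat_natCast, Nat.add_sub_cancel]

theorem mycLayer_one (t : ℕ) : (mycLayer t 1 : ℕ) = 0 := by
  simpa using mycLayer_natCast t 1

theorem mycLayer_top_or_succ {t : ℕ} {a b : ℕ∞} (ha : 1 ≤ a) (hab : a ≤ b) (hba : b ≤ a + 1)
    (hsame : a = b → (t : ℕ∞) < a) :
    ((mycLayer t a : ℕ) = t ∧ (mycLayer t b : ℕ) = t) ∨
      (mycLayer t b : ℕ) = mycLayer t a + 1 := by
  cases a using ENat.recTopCoe with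
  | top => simp [top_le_iff.1 hab, mycLayer_top]
  | coe m =>
    cases b using ENat.recTopCoe with
    | top => exact absurd hba (by simp)
    | coe n =>
      simp only [mycLayer_natCast, Nat.cast_le, Nat.cast_lt, Nat.one_le_cast,
        Nat.cast_inj] at *
      norm_cast at hba
      omega

end Layer

section MycMap

variable {V W : Type*} {G : SimpleGraph V} {Γ : SimpleGraph W} {U I : Set V}

open Classical in
noncomputable def mycMap (t : ℕ) (hpart : U ∪ I = Set.univ) (f : G.induce U →g Γ) (v : V) :
    (W × Fin (t + 1)) ⊕ Unit :=
  if hv : v ∈ I then Sum.inr ()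
  else Sum.inl (f ⟨v, (hpart ▸ Set.mem_univ v : v ∈ U ∪ I).resolve_right hv⟩,
    mycLayer t (G.setEDist I v))

theorem mycMap_adj_of_le {t : ℕ} (hpart : U ∪ I = Set.univ) (f : G.induce U →g Γ)
    (hind : ∀ i ≤ t, IsIndep G (distSet G I i)) {u v : V} (hadj : G.Adj u v)
    (hle : G.setEDist I u ≤ G.setEDist I v) :
    (Myc t Γ).Adj (mycMap t hpart f u) (mycMap t hpart f v) := by
  by_cases hu : u ∈ I <;> by_cases hv : v ∈ I
  · have h0 : G.setEDist I u = 0 := setEDist_eq_zero_iff.2 hu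
    exact absurd hadj (not_adj_of_setEDist_eq hind
      (h0.trans (setEDist_eq_zero_iff.2 hv).symm) (by simp [h0]))
  · have hv1 : G.setEDist I v = 1 := le_antisymm
      (hadj.setEDist_le.trans (by simp [setEDist_eq_zero_iff.2 hu]))
      (one_le_setEDist_of_notMem hv)
    simp only [mycMap, dif_pos hu, dif_neg hv]
    exact (myc_adj_inl_inr.2 (hv1 ▸ mycLayer_one t)).symm
  · exact absurd (setEDist_eq_zero_iff.1 (nonpos_iff_eq_zero.1
      (hle.trans_eq (setEDist_eq_zero_iff.2 hv)))) hu
  · simp only [mycMap, dif_neg hu, dif_neg hv]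
    exact myc_adj_inl_inl (f.map_adj hadj) <| mycLayer_top_or_succ
      (one_le_setEDist_of_notMem hu) hle hadj.setEDist_le
      fun h => lt_of_not_ge (not_adj_of_setEDist_eq hind h · hadj)

noncomputable def mycHom (t : ℕ) (hpart : U ∪ I = Set.univ) (f : G.induce U →g Γ)
    (hind : ∀ i ≤ t, IsIndep G (distSet G I i)) : G →g Myc t Γ where
  toFun := mycMap t hpart f
  map_rel' {u v} hadj := by
    rcases le_total (G.setEDist I u) (G.setEDist I v) with h | h
    · exact mycMap_adj_of_le hpart f hind hadj h
    · exact (mycMap_adj_of_le hpart f hind hadj.symm h).symm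

end MycMap

theorem stmt_2_general {V W : Type*} (t : ℕ) (G : SimpleGraph V) (Γ : SimpleGraph W)
    (U I : Set V) (hpart : U ∪ I = Set.univ)
    (hind : ∀ i ≤ t, IsIndep G (distSet G I i))
    (hhom : Nonempty (G.induce U →g Γ)) :
    Nonempty (G →g Myc t Γ) :=
  hhom.map fun f => mycHom t hpart f hind

theorem stmt_2 {V W : Type*} (t : ℕ) (G : SimpleGraph V) (Γ : SimpleGraph W)
    (U I : Set V) (hpart : U ∪ I = Set.univ) (hdisj : Disjoint U I)
    (hind : ∀ i ≤ t, IsIndep G (distSet G I i))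
    (hhom : Nonempty (G.induce U →g Γ)) :
    Nonempty (G →g Myc t Γ) :=
  stmt_2_general t G Γ U I hpart hind hhom
end

section
/- Let t ≥ 1 and δ > 0, and let G be a graph with no odd cycle of length at most 2t+5 and minimum degree at least δ|V(G)|. Then G has a graph homomorphism to a graph Γ with no odd cycle of length at most 2t+1 and with |V(Γ)| ≤ (t+1)^{2/δ}. -/
open Finset SimpleGraph

namespace SimpleGraph

variable {V W : Type*} {G : SimpleGraph V} {H : SimpleGraph W}

theorem Walk.exists_isCycle_odd_length_le {v : V} (w : G.Walk v v) (hw : Odd w.length) :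
    ∃ (u : V) (c : G.Walk u u), c.IsCycle ∧ Odd c.length ∧ c.length ≤ w.length := by
  induction hn : w.length using Nat.strong_induction_on generalizing v with
  | _ n ih =>
  subst hn
  cases w with
  | nil => simp at hw
  | cons h q =>
    by_cases hq : q.IsPath
    · refine ⟨v, cons h q, isCycle_iff_isPath_tail_and_le_length.mpr ⟨by simpa using hq, ?_⟩,
        hw, le_rfl⟩
      cases q with
      | nil => exact (G.loopless.irrefl _ h).elim
      | cons => grind [length_cons]
    · obtain ⟨x, c, ⟨ru, rv, rfl⟩, hc⟩ : ∃ x, ∃ c : G.Walk x x, c.IsSubwalk q ∧ ¬c.Nil := by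
        simpa [isPath_iff_isSubwalk_imp_nil] using hq
      -- Cutting the closed subwalk `c` out of the walk leaves the shorter closed walk `w'`.
      set w' := cons h (ru.append rv)
      have hc : 0 < c.length := not_nil_iff_lt_length.mp hc
      have hw' : 0 < w'.length := Nat.succ_pos _
      have hlen : (cons h ((ru.append c).append rv)).length = c.length + w'.length := by
        simp only [w', length_cons, length_append]
        omega
      rw [hlen] at hw ⊢
      rcases Nat.even_or_odd c.length with hc_even | hc_odd
      · obtain ⟨u, d, hd, hd_odd, hd_le⟩ :=
          ih _ (by omega) w' ((Nat.odd_add'.mp hw).mpr hc_even) rfl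
        exact ⟨u, d, hd, hd_odd, by omega⟩
      · obtain ⟨u, d, hd, hd_odd, hd_le⟩ := ih _ (by omega) c hc_odd rfl
        exact ⟨u, d, hd, hd_odd, by omega⟩

theorem _root_.OddGirthGT.lt_length {L : ℕ} (hG : OddGirthGT G L) {v : V} (w : G.Walk v v)
    (hw : Odd w.length) : L < w.length := by
  obtain ⟨_, c, hc, hc_odd, hc_le⟩ := w.exists_isCycle_odd_length_le hw
  exact (hG c hc hc_odd).trans_le hc_le

theorem _root_.OddGirthGT.of_hom {L : ℕ} (f : G →g H) (hH : OddGirthGT H L) : OddGirthGT G L :=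
  fun _ w _ hw ↦ by simpa using hH.lt_length (w.map f) (by simpa using hw)

theorem _root_.OddGirthGT.dist_ne_of_adj {L : ℕ} (hG : OddGirthGT G L) {a b c : V}
    (hab : G.Adj a b) (hca : G.Reachable c a) (hL : 2 * G.dist c a < L) :
    G.dist c a ≠ G.dist c b := by
  intro hdist
  obtain ⟨p, hp⟩ := hca.exists_walk_length_eq_dist
  obtain ⟨q, hq⟩ := (hca.trans hab.reachable).exists_walk_length_eq_dist
  have := hG.lt_length ((p.reverse.append q).concat hab.symm) (by simp [hp, hq, ← hdist])
  simp only [Walk.length_concat, Walk.length_append, Walk.length_reverse, hp, hq, ← hdist] at this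
  omega

theorem exists_finset_walk_length_le_two_sum_degree_le [Fintype V] [DecidableRel G.Adj] :
    ∃ S : Finset V, (∀ v, ∃ u ∈ S, ∃ p : G.Walk u v, p.length ≤ 2) ∧
      ∑ u ∈ S, (G.degree u + 1) ≤ Fintype.card V := by
  classical
  set ball : V → Finset V := fun u ↦ insert u (G.neighborFinset u)
  have mem_ball {u x : V} (hx : x ∈ ball u) : ∃ p : G.Walk u x, p.length ≤ 1 := by
    rcases Finset.mem_insert.mp hx with rfl | hx
    · exact ⟨.nil, by simp⟩
    · exact ⟨.cons ((G.mem_neighborFinset u x).mp hx) .nil, by simp⟩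
  obtain ⟨S, hS, hmax⟩ := Finset.exists_max_image
    {T : Finset V | (T : Set V).PairwiseDisjoint ball} Finset.card ⟨∅, by simp⟩
  rw [Finset.mem_filter] at hS
  refine ⟨S, fun v ↦ ?_, ?_⟩
  · by_contra! hv
    have hdisj : ∀ u ∈ S, Disjoint (ball u) (ball v) := by
      refine fun u hu ↦ Finset.disjoint_left.mpr fun x hxu hxv ↦ ?_
      obtain ⟨p, hp⟩ := mem_ball hxu
      obtain ⟨q, hq⟩ := mem_ball hxv
      refine (hv u hu (p.append q.reverse)).not_ge ?_
      simp only [Walk.length_append, Walk.length_reverse]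
      omega
    have hvS : v ∉ S := fun h ↦ (hv v h .nil).not_ge (by simp)
    have := hmax (insert v S) (by
      simp only [Finset.mem_filter, Finset.mem_univ, true_and, Finset.coe_insert]
      exact hS.2.insert fun u hu _ ↦ (hdisj u hu).symm)
    rw [Finset.card_insert_of_notMem hvS] at this
    omega
  · calc ∑ u ∈ S, (G.degree u + 1) = #(S.biUnion ball) := by
          rw [Finset.card_biUnion hS.2]
          refine Finset.sum_congr rfl fun u _ ↦ ?_
          rw [Finset.card_insert_of_notMem (by simp), card_neighborFinset_eq_degree]
      _ ≤ Fintype.card V := Finset.card_le_univ _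

end SimpleGraph

/-- Adjacency in the path `0 - 1 - ⋯ - m` with a loop at `m`. -/
def LoopyPathAdj (m x y : ℕ) : Prop :=
  x + 1 = y ∨ y + 1 = x ∨ (x = m ∧ y = m)

theorem LoopyPathAdj.symm {m x y : ℕ} (h : LoopyPathAdj m x y) : LoopyPathAdj m y x := by
  unfold LoopyPathAdj at *; omega

theorem le_add_of_loopyPathAdj {m n : ℕ} {f : ℕ → ℕ}
    (hf : ∀ j < n, LoopyPathAdj m (f j) (f (j + 1))) : ∀ j ≤ n, f j ≤ f 0 + j := by
  intro j hj
  induction j with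
  | zero => simp
  | succ j ih => have := hf j hj; unfold LoopyPathAdj at this; omega

theorem le_add_half_of_loopyPathAdj_of_odd {m n : ℕ} {f : ℕ → ℕ}
    (hf : ∀ j < n, LoopyPathAdj m (f j) (f (j + 1))) (hn : f n = f 0) (hodd : Odd n) :
    m ≤ f 0 + n / 2 := by
  by_contra! hlt
  have hfwd := le_add_of_loopyPathAdj hf
  have hbwd := le_add_of_loopyPathAdj (n := n) (f := fun k ↦ f (n - k))
    fun k hk ↦ by
      have := (hf (n - (k + 1)) (by omega)).symm
      rwa [show n - (k + 1) + 1 = n - k by omega] at this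
  have hlt : ∀ j ≤ n, f j < m := fun j hj ↦ by
    have h1 := hfwd j hj
    have h2 := hbwd (n - j) (by omega)
    simp only [Nat.sub_sub_self hj, Nat.sub_zero, hn] at h2
    omega
  -- Away from the loop every step changes the value by one.
  have hpar : ∀ j ≤ n, (f j + j) % 2 = f 0 % 2 := by
    intro j hj
    induction j with
    | zero => simp
    | succ j ih =>
      have := hf j hj; have := hlt j (by omega); have := hlt (j + 1) hj
      unfold LoopyPathAdj at *; omega
  obtain ⟨s, rfl⟩ := hodd
  have := hpar _ le_rfl
  omega

def profileGraph (t : ℕ) (I : Type*) : SimpleGraph (I → Fin (t + 3)) where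
  Adj p q := (∃ i, (p i : ℕ) ≤ 1) ∧ (∃ i, (q i : ℕ) ≤ 1) ∧ ∀ i, LoopyPathAdj (t + 2) (p i) (q i)
  symm := ⟨fun _ _ h ↦ ⟨h.2.1, h.1, fun i ↦ (h.2.2 i).symm⟩⟩
  loopless := ⟨fun p ⟨⟨i, hi⟩, _, h⟩ ↦ by have := h i; unfold LoopyPathAdj at this; omega⟩

theorem profileGraph_adj {t : ℕ} {I : Type*} {p q : I → Fin (t + 3)} :
    (profileGraph t I).Adj p q ↔
      (∃ i, (p i : ℕ) ≤ 1) ∧ (∃ i, (q i : ℕ) ≤ 1) ∧ ∀ i, LoopyPathAdj (t + 2) (p i) (q i) :=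
  Iff.rfl

theorem profileGraph_oddGirthGT (t : ℕ) (I : Type*) :
    OddGirthGT (profileGraph t I) (2 * t + 1) := by
  intro p w _ hodd
  obtain ⟨i, hi⟩ := (profileGraph_adj.mp (w.adj_getVert_succ hodd.pos)).1
  have := le_add_half_of_loopyPathAdj_of_odd (f := fun j ↦ (w.getVert j i : ℕ))
    (fun j hj ↦ (profileGraph_adj.mp (w.adj_getVert_succ hj)).2.2 i) (by simp) hodd
  simp only [Walk.getVert_zero] at hi this
  omega

namespace SimpleGraph

variable {V : Type*} {G : SimpleGraph V}

open Classical in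
noncomputable def foldedDist (G : SimpleGraph V) (m : ℕ) (c v : V) : ℕ :=
  if G.Reachable c v then min (Nat.dist (G.dist c v) 1) m else m

theorem foldedDist_le (m : ℕ) (c v : V) : G.foldedDist m c v ≤ m := by
  unfold foldedDist; split_ifs <;> omega

theorem foldedDist_le_one {m : ℕ} {c v : V} (p : G.Walk c v) (hp : p.length ≤ 2) :
    G.foldedDist m c v ≤ 1 := by
  have := G.dist_le p
  simp only [foldedDist, if_pos p.reachable, Nat.dist]
  omega

theorem _root_.OddGirthGT.loopyPathAdj_foldedDist {m : ℕ} (hG : OddGirthGT G (2 * m + 1))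
    {a b : V} (hab : G.Adj a b) (c : V) :
    LoopyPathAdj m (G.foldedDist m c a) (G.foldedDist m c b) := by
  by_cases hca : G.Reachable c a
  · have hcb := hca.trans hab.reachable
    have hne (h : G.dist c a ≤ m) := hG.dist_ne_of_adj hab hca (by omega)
    have := hab.diff_dist_adj (u := c)
    simp only [foldedDist, if_pos hca, if_pos hcb, LoopyPathAdj, Nat.dist]
    omega
  · have hcb : ¬ G.Reachable c b := fun h ↦ hca (h.trans hab.symm.reachable)
    simp [foldedDist, hca, hcb, LoopyPathAdj]

noncomputable def profileHom {t : ℕ} (hG : OddGirthGT G (2 * t + 5)) (S : Finset V)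
    (hS : ∀ v, ∃ u ∈ S, ∃ p : G.Walk u v, p.length ≤ 2) : G →g profileGraph t S where
  toFun v u := ⟨G.foldedDist (t + 2) u v, Nat.lt_succ_of_le (foldedDist_le _ _ _)⟩
  map_rel' {a b} hab :=
    have hcover (v : V) : ∃ u : S, G.foldedDist (t + 2) u v ≤ 1 :=
      let ⟨u, hu, p, hp⟩ := hS v
      ⟨⟨u, hu⟩, foldedDist_le_one p hp⟩
    profileGraph_adj.mpr
      ⟨hcover a, hcover b, fun u ↦ hG.loopyPathAdj_foldedDist (m := t + 2) hab u⟩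

end SimpleGraph

theorem add_three_pow_le_add_one_rpow {t k : ℕ} {δ : ℝ} (ht : 1 ≤ t) (hδ : 0 < δ)
    (hk : k * δ ≤ 1) : ((t : ℝ) + 3) ^ k ≤ ((t : ℝ) + 1) ^ (2 / δ) := by
  have ht : (1 : ℝ) ≤ t := by exact_mod_cast ht
  calc ((t : ℝ) + 3) ^ k ≤ (((t : ℝ) + 1) ^ 2) ^ k := by gcongr; nlinarith
    _ = ((t : ℝ) + 1) ^ ((2 * k : ℕ) : ℝ) := by rw [Real.rpow_natCast, pow_mul]
    _ ≤ ((t : ℝ) + 1) ^ (2 / δ) := by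
      refine Real.rpow_le_rpow_of_exponent_le (by linarith) ?_
      rw [le_div_iff₀ hδ]
      push_cast
      linarith

theorem stmt_4 {V : Type*} [Fintype V] (t : ℕ) (ht : 1 ≤ t) (δ : ℝ) (hδ : 0 < δ)
    (G : SimpleGraph V) [DecidableRel G.Adj]
    (hfree : OddGirthGT G (2 * t + 5))
    (hdeg : ∀ v : V, δ * Fintype.card V ≤ G.degree v) :
    ∃ (n : ℕ) (Γ : SimpleGraph (Fin n)),
      OddGirthGT Γ (2 * t + 1) ∧ (n : ℝ) ≤ ((t : ℝ) + 1) ^ (2 / δ) ∧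
      Nonempty (G →g Γ) := by
  classical
  obtain ⟨S, hcover, hsum⟩ := G.exists_finset_walk_length_le_two_sum_degree_le
  have hS : (#S : ℝ) * δ ≤ 1 := by
    have : (#S : ℝ) * (δ * Fintype.card V + 1) ≤ Fintype.card V :=
      calc (#S : ℝ) * (δ * Fintype.card V + 1) = ∑ _u ∈ S, (δ * Fintype.card V + 1) := by
            rw [sum_const, nsmul_eq_mul]
        _ ≤ ∑ u ∈ S, ((G.degree u : ℝ) + 1) := by gcongr with u; exact hdeg u
        _ ≤ Fintype.card V := by exact_mod_cast hsum
    nlinarith [mul_nonneg hδ.le (Nat.cast_nonneg (α := ℝ) (Fintype.card V))]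
  refine ⟨_, (profileGraph t S).overFin rfl,
    (profileGraph_oddGirthGT t S).of_hom (overFinIso _ rfl).symm.toHom, ?_,
    ⟨(overFinIso _ rfl).toHom.comp (profileHom hfree S hcover)⟩⟩
  simpa using add_three_pow_le_add_one_rpow ht hδ hS
end

section
/- If G is a graph with VC dimension at most d and minimum degree at least δ|V(G)|, then the domination number of G is at most (8d/δ)·log₂(8d/δ). -/
open Finset

/-!
Every neighbourhood has at least `δ n` vertices, so a set meeting all neighbourhoods dominates `G`;
such a set of size `m = ⌊(8d/δ) log₂(8d/δ)⌋` is found by the double-sampling proof of the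
Haussler–Welzl ε-net theorem. If a uniform sample `x ∈ Vᵐ` misses some neighbourhood `N(v)`, then by
Chebyshev (as `δ m ≥ 8`) an independent sample `y` hits `N(v)` at least `δ m / 2` times with
probability at least `1/2`. On the other hand, for fixed `x, y`, randomly swapping their coordinates puts
all those hits into `y` with probability at most `2^(-δ m / 2)`, and by Sauer–Shelah only
`(2m + 1)^d` traces of neighbourhoods on the `2m` sampled points need to be considered. The choice
of `m` makes `2 (2m + 1)^d < 2^(δ m / 2)`, so some sample meets every neighbourhood.
-/

/-- The graph `G` has VC dimension at most `d`: every set of vertices shattered by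
the family of neighbourhoods `{N(v) : v ∈ V(G)}` has size at most `d`. -/
def VCDimLE {V : Type*} (G : SimpleGraph V) (d : ℕ) : Prop :=
  ∀ S : Finset V, (∀ T ⊆ S, ∃ v : V, ∀ s ∈ S, G.Adj v s ↔ s ∈ T) → S.card ≤ d

/-- `D` is a dominating set of `G`. -/
def IsDomSet {V : Type*} (G : SimpleGraph V) (D : Finset V) : Prop :=
  ∀ v : V, v ∈ D ∨ ∃ u ∈ D, G.Adj u v

/-- The domination number of `G`. -/
noncomputable def domNum {V : Type*} [Fintype V] (G : SimpleGraph V) : ℕ :=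
  sInf {k | ∃ D : Finset V, D.card = k ∧ IsDomSet G D}

theorem card_filter_prod_eq_sum_card_filter {β γ : Type*} [Fintype β] [Fintype γ]
    (P : β × γ → Prop) [DecidablePred P] :
    #{q : β × γ | P q} = ∑ b, #{c | P (b, c)} := by
  simp only [card_filter, Fintype.sum_prod_type]

section Sampling
variable {ι α : Type*} [Fintype ι] [DecidableEq α]

def hitCount (y : ι → α) (R : Finset α) : ℕ := #{j | y j ∈ R}

theorem hitCount_eq_sum (y : ι → α) (R : Finset α) :
    (hitCount y R : ℝ) = ∑ j, if y j ∈ R then 1 else 0 := by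
  simp [hitCount, sum_boole]

theorem hitCount_inter_of_forall_mem {y : ι → α} {W : Finset α} (hy : ∀ j, y j ∈ W)
    (s : Finset α) : hitCount y (W ∩ s) = hitCount y s := by
  simp [hitCount, hy]

variable [DecidableEq ι] [Fintype α]

theorem card_filter_forall_mem (J : Finset ι) (S : ι → Finset α) :
    #{y : ι → α | ∀ j ∈ J, y j ∈ S j} =
      (∏ j ∈ J, #(S j)) * Fintype.card α ^ (Fintype.card ι - #J) := by
  have hpi : ({y : ι → α | ∀ j ∈ J, y j ∈ S j} : Finset _) =
      Fintype.piFinset fun j => if j ∈ J then S j else univ := by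
    ext y
    simp only [mem_filter, mem_univ, true_and, Fintype.mem_piFinset]
    exact forall_congr' fun j => by split_ifs <;> simp [*]
  simp only [hpi, Fintype.card_piFinset, apply_ite card]
  rw [prod_ite, filter_mem_eq_inter, univ_inter, prod_const, card_univ, filter_not,
    card_sdiff, ← card_univ]
  simp

theorem card_filter_forall_mem_const [Nonempty α] (J : Finset ι) (R : Finset α) :
    (#{y : ι → α | ∀ j ∈ J, y j ∈ R} : ℝ) =
      (#R / Fintype.card α : ℝ) ^ #J * Fintype.card α ^ Fintype.card ι := by
  have hn : (Fintype.card α : ℝ) ≠ 0 := by positivity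
  rw [card_filter_forall_mem, prod_const, div_pow, Nat.cast_mul, Nat.cast_pow, Nat.cast_pow,
    ← pow_sub_mul_pow _ (card_le_univ J)]
  field_simp

variable [Nonempty α] (R : Finset α)

theorem sum_hitCount :
    ∑ y : ι → α, (hitCount y R : ℝ) =
      Fintype.card ι * (#R / Fintype.card α) * Fintype.card α ^ Fintype.card ι := by
  simp_rw [hitCount_eq_sum]
  rw [sum_comm]
  have h (j : ι) : ∑ y : ι → α, (if y j ∈ R then (1 : ℝ) else 0) =
      (#R / Fintype.card α : ℝ) * Fintype.card α ^ Fintype.card ι := by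
    simpa [sum_boole] using card_filter_forall_mem_const {j} R
  simp [h, mul_assoc]

theorem sum_hitCount_sq :
    ∑ y : ι → α, (hitCount y R : ℝ) ^ 2 =
      (Fintype.card ι * (#R / Fintype.card α) + Fintype.card ι * (Fintype.card ι - 1) *
        (#R / Fintype.card α) ^ 2) * Fintype.card α ^ Fintype.card ι := by
  set p : ℝ := #R / Fintype.card α
  have hpair (j j' : ι) : ∑ y : ι → α,
      ((if y j ∈ R then (1 : ℝ) else 0) * if y j' ∈ R then 1 else 0) =
        p ^ #({j, j'} : Finset ι) * Fintype.card α ^ Fintype.card ι := by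
    rw [← card_filter_forall_mem_const]
    simp_rw [ite_zero_mul_ite_zero, mul_one]
    rw [sum_boole]
    simp
  have hrow (j : ι) : ∑ j', p ^ #({j, j'} : Finset ι) = p + (Fintype.card ι - 1) * p ^ 2 := by
    have : Nonempty ι := ⟨j⟩
    rw [← add_sum_erase _ _ (mem_univ j), sum_congr rfl fun j' hj' => by
      rw [card_pair (ne_of_mem_erase hj').symm]]
    simp [card_univ, Nat.cast_pred Fintype.card_pos]
  calc ∑ y : ι → α, (hitCount y R : ℝ) ^ 2
      = ∑ j, ∑ j', ∑ y : ι → α,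
          ((if y j ∈ R then (1 : ℝ) else 0) * if y j' ∈ R then 1 else 0) := by
        simp_rw [hitCount_eq_sum, sq, sum_mul_sum]
        rw [sum_comm]
        exact sum_congr rfl fun j _ => sum_comm
    _ = _ := by
        simp_rw [hpair, ← sum_mul, hrow, sum_const, card_univ, nsmul_eq_mul]
        ring

theorem sum_sq_hitCount_sub_mean :
    ∑ y : ι → α, ((hitCount y R : ℝ) - Fintype.card ι * (#R / Fintype.card α)) ^ 2 =
      Fintype.card ι * (#R / Fintype.card α) * (1 - #R / Fintype.card α) *
        Fintype.card α ^ Fintype.card ι := by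
  simp_rw [sub_sq, sum_add_distrib, sum_sub_distrib, ← sum_mul, ← mul_sum, sum_hitCount_sq,
    sum_hitCount, sum_const, card_univ, Fintype.card_fun, nsmul_eq_mul]
  push_cast
  ring

-- Chebyshev's inequality
theorem pow_card_le_two_mul_card_le_hitCount {k : ℕ}
    (h8 : 8 ≤ Fintype.card ι * (#R / Fintype.card α : ℝ))
    (hk : (k : ℝ) ≤ Fintype.card ι * (#R / Fintype.card α : ℝ) / 2 + 1) :
    Fintype.card α ^ Fintype.card ι ≤ 2 * #{y : ι → α | k ≤ hitCount y R} := by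
  set μ : ℝ := Fintype.card ι * (#R / Fintype.card α)
  set N := Fintype.card α ^ Fintype.card ι
  set bad := #{y : ι → α | hitCount y R < k}
  have hsplit : #{y : ι → α | k ≤ hitCount y R} + bad = N := by
    simp_rw [bad, ← not_le]
    rw [card_filter_add_card_filter_not, card_univ, Fintype.card_fun]
  have hbad : bad * (μ / 2) ^ 2 ≤ μ * N :=
    calc bad * (μ / 2) ^ 2
        ≤ ∑ y ∈ {y : ι → α | hitCount y R < k}, ((hitCount y R : ℝ) - μ) ^ 2 := by
          rw [← nsmul_eq_mul]
          refine card_nsmul_le_sum _ _ _ fun y hy => ?_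
          have : (hitCount y R : ℝ) + 1 ≤ k := by exact_mod_cast (mem_filter.1 hy).2
          nlinarith
      _ ≤ ∑ y : ι → α, ((hitCount y R : ℝ) - μ) ^ 2 :=
          sum_le_sum_of_subset_of_nonneg (subset_univ _) fun _ _ _ => sq_nonneg _
      _ = μ * (1 - #R / Fintype.card α) * N := by rw [sum_sq_hitCount_sub_mean, Nat.cast_pow]
      _ ≤ μ * N := by
          have : 0 ≤ μ * (#R / Fintype.card α) * N := by positivity
          linarith
  have : (bad * μ) * μ ≤ (4 * N) * μ := by nlinarith
  have : (bad : ℝ) * 8 ≤ 4 * N := by nlinarith [le_of_mul_le_mul_right this (by positivity)]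
  have : bad * 2 ≤ N := by exact_mod_cast (by linarith : (bad : ℝ) * 2 ≤ N)
  omega

end Sampling

section Swap
variable {ι α : Type*}

def swapAt (σ : ι → Bool) (p : (ι → α) × (ι → α)) : (ι → α) × (ι → α) :=
  (fun j => bif σ j then p.2 j else p.1 j, fun j => bif σ j then p.1 j else p.2 j)

theorem swapAt_involutive (σ : ι → Bool) : Function.Involutive (swapAt (α := α) σ) := by
  intro p
  ext j <;> simp only [swapAt] <;> cases σ j <;> rfl

theorem swapAt_apply_mem {σ : ι → Bool} {p : (ι → α) × (ι → α)} {W : Set α}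
    (h₁ : ∀ j, p.1 j ∈ W) (h₂ : ∀ j, p.2 j ∈ W) (j : ι) :
    (swapAt σ p).1 j ∈ W ∧ (swapAt σ p).2 j ∈ W := by
  simp only [swapAt]
  cases σ j <;> exact ⟨by simp [*], by simp [*]⟩

theorem card_filter_swapAt_mem [Fintype ι] [DecidableEq ι] [Fintype α] [DecidableEq α]
    (σ : ι → Bool) (E : Finset ((ι → α) × (ι → α))) : #{p | swapAt σ p ∈ E} = #E :=
  card_nbij' (swapAt σ) (swapAt σ) (fun p hp => (mem_filter.1 hp).2)
    (fun p hp => by simpa [swapAt_involutive σ p] using hp)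
    (fun p _ => swapAt_involutive σ p) (fun p _ => swapAt_involutive σ p)

variable [Fintype ι] [DecidableEq ι] [DecidableEq α]

-- A random swap moves all `k` hits into the second sample with probability at most `2⁻ᵏ`.
theorem card_swapAt_event_mul_le (p : (ι → α) × (ι → α)) (R : Finset α) (k : ℕ) :
    #{σ : ι → Bool | (∀ j, (swapAt σ p).1 j ∉ R) ∧ k ≤ hitCount (swapAt σ p).2 R} * 2 ^ k ≤
      2 ^ Fintype.card ι := by
  set A : Finset ι := {j | p.1 j ∈ R ∨ p.2 j ∈ R}
  have hcoord (σ : ι → Bool) (j : ι) (h : (swapAt σ p).1 j ∉ R) :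
      ((swapAt σ p).2 j ∈ R ↔ j ∈ A) ∧ (j ∈ A → σ j = decide (p.1 j ∈ R)) := by
    cases hσ : σ j <;> simp_all [swapAt, A]
  set E : Finset (ι → Bool) :=
    {σ | (∀ j, (swapAt σ p).1 j ∉ R) ∧ k ≤ hitCount (swapAt σ p).2 R}
  obtain hE | ⟨σ₀, hσ₀⟩ := E.eq_empty_or_nonempty
  · simp [hE]
  have hhit {σ} (hσ : σ ∈ E) : hitCount (swapAt σ p).2 R = #A := by
    obtain ⟨h, -⟩ := (mem_filter.1 hσ).2
    rw [hitCount]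
    congr 1
    ext j
    simpa using (hcoord σ j (h j)).1
  have hkA : k ≤ #A := hhit hσ₀ ▸ (mem_filter.1 hσ₀).2.2
  have hEsub : E ⊆ ({σ | ∀ j ∈ A, σ j ∈ ({decide (p.1 j ∈ R)} : Finset Bool)} : Finset _) :=
    fun σ hσ => mem_filter.2 ⟨mem_univ _, fun j hj =>
      mem_singleton.2 ((hcoord σ j ((mem_filter.1 hσ).2.1 j)).2 hj)⟩
  calc #E * 2 ^ k ≤ 2 ^ (Fintype.card ι - #A) * 2 ^ k := by
        gcongr
        refine (card_le_card hEsub).trans_eq ?_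
        rw [card_filter_forall_mem]
        simp
    _ ≤ 2 ^ Fintype.card ι := by
        rw [← pow_add]
        exact Nat.pow_le_pow_right two_pos (by have := card_le_univ A; omega)

end Swap

section EpsNet
variable {ι α : Type*} [Fintype ι] [DecidableEq ι] [Fintype α] [DecidableEq α]

def failingSamples (𝒮 : Finset (Finset α)) : Finset (ι → α) :=
  {x | ∃ s ∈ 𝒮, ∀ j, x j ∉ s}

def missHitPairs (𝒮 : Finset (Finset α)) (k : ℕ) : Finset ((ι → α) × (ι → α)) :=
  {p : (ι → α) × (ι → α) | ∃ s ∈ 𝒮, (∀ j, p.1 j ∉ s) ∧ k ≤ hitCount p.2 s}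

theorem card_failingSamples_mul_le [Nonempty α] (𝒮 : Finset (Finset α)) {ε : ℝ} {k : ℕ}
    (h8 : 8 ≤ ε * Fintype.card ι) (hk : (k : ℝ) ≤ ε * Fintype.card ι / 2 + 1)
    (hsize : ∀ s ∈ 𝒮, ε * Fintype.card α ≤ #s) :
    #(failingSamples (ι := ι) 𝒮) * Fintype.card α ^ Fintype.card ι ≤
      2 * #(missHitPairs (ι := ι) 𝒮 k) := by
  have hgood {x : ι → α} (hx : x ∈ failingSamples 𝒮) :
      Fintype.card α ^ Fintype.card ι ≤ 2 * #{y | (x, y) ∈ missHitPairs 𝒮 k} := by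
    obtain ⟨s, hs, hmiss⟩ := (mem_filter.1 hx).2
    have hε : ε ≤ #s / Fintype.card α := (le_div_iff₀ (by positivity)).2 (hsize s hs)
    have hεm : ε * Fintype.card ι ≤ Fintype.card ι * (#s / Fintype.card α) := by
      rw [mul_comm]; gcongr
    refine (pow_card_le_two_mul_card_le_hitCount (k := k) s (by linarith) (by linarith)).trans ?_
    refine Nat.mul_le_mul_left 2 (card_le_card fun y hy => ?_)
    simp only [missHitPairs, mem_filter, mem_univ, true_and] at hy ⊢
    exact ⟨s, hs, hmiss, hy⟩
  calc #(failingSamples (ι := ι) 𝒮) * Fintype.card α ^ Fintype.card ι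
      = ∑ x ∈ failingSamples 𝒮, Fintype.card α ^ Fintype.card ι := by rw [sum_const, smul_eq_mul]
    _ ≤ ∑ x ∈ failingSamples 𝒮, 2 * #{y | (x, y) ∈ missHitPairs 𝒮 k} :=
        sum_le_sum fun x hx => hgood hx
    _ ≤ ∑ x, 2 * #{y | (x, y) ∈ missHitPairs 𝒮 k} :=
        sum_le_sum_of_subset_of_nonneg (subset_univ _) fun _ _ _ => Nat.zero_le _
    _ = 2 * #(missHitPairs (ι := ι) 𝒮 k) := by
        rw [← mul_sum, ← card_filter_prod_eq_sum_card_filter (· ∈ missHitPairs (ι := ι) 𝒮 k),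
          filter_univ_mem]

theorem card_swapAt_mem_missHitPairs_mul_le (𝒮 : Finset (Finset α)) (k Φ : ℕ)
    (htrace : ∀ W : Finset α, #W ≤ 2 * Fintype.card ι → #(𝒮.image (W ∩ ·)) ≤ Φ)
    (p : (ι → α) × (ι → α)) :
    #{σ : ι → Bool | swapAt σ p ∈ missHitPairs 𝒮 k} * 2 ^ k ≤ Φ * 2 ^ Fintype.card ι := by
  set W := univ.image p.1 ∪ univ.image p.2
  have hW (σ : ι → Bool) (j : ι) : (swapAt σ p).1 j ∈ W ∧ (swapAt σ p).2 j ∈ W := by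
    simpa using swapAt_apply_mem (W := (W : Set α)) (σ := σ)
      (fun j => by simp [W]) (fun j => by simp [W]) j
  have hsub : ({σ | swapAt σ p ∈ missHitPairs 𝒮 k} : Finset (ι → Bool)) ⊆
      (𝒮.image (W ∩ ·)).biUnion
        fun t => {σ | (∀ j, (swapAt σ p).1 j ∉ t) ∧ k ≤ hitCount (swapAt σ p).2 t} := by
    intro σ hσ
    obtain ⟨s, hs, hmiss, hhit⟩ := mem_filter.1 (mem_filter.1 hσ).2 |>.2
    refine mem_biUnion.2 ⟨W ∩ s, mem_image_of_mem _ hs, mem_filter.2 ⟨mem_univ _, ?_, ?_⟩⟩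
    · exact fun j hj => hmiss j (mem_inter.1 hj).2
    · rwa [hitCount_inter_of_forall_mem fun j => (hW σ j).2]
  have hWcard : #W ≤ 2 * Fintype.card ι := by
    grw [card_union_le, card_image_le, card_image_le, card_univ]
    omega
  calc #{σ : ι → Bool | swapAt σ p ∈ missHitPairs 𝒮 k} * 2 ^ k
      ≤ (∑ t ∈ 𝒮.image (W ∩ ·),
          #{σ : ι → Bool | (∀ j, (swapAt σ p).1 j ∉ t) ∧ k ≤ hitCount (swapAt σ p).2 t}) *
          2 ^ k := by
        gcongr
        exact (card_le_card hsub).trans card_biUnion_le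
    _ ≤ ∑ t ∈ 𝒮.image (W ∩ ·), 2 ^ Fintype.card ι := by
        rw [sum_mul]
        exact sum_le_sum fun t _ => card_swapAt_event_mul_le p t k
    _ ≤ Φ * 2 ^ Fintype.card ι := by
        rw [sum_const, smul_eq_mul]
        gcongr
        exact htrace W hWcard

theorem card_missHitPairs_mul_le (𝒮 : Finset (Finset α)) (k Φ : ℕ)
    (htrace : ∀ W : Finset α, #W ≤ 2 * Fintype.card ι → #(𝒮.image (W ∩ ·)) ≤ Φ) :
    #(missHitPairs (ι := ι) 𝒮 k) * 2 ^ k ≤ Φ * (Fintype.card α ^ Fintype.card ι) ^ 2 := by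
  set E := missHitPairs (ι := ι) 𝒮 k
  set m := Fintype.card ι
  have hcomm : ∑ σ : ι → Bool, #{p | swapAt σ p ∈ E} = ∑ p, #{σ : ι → Bool | swapAt σ p ∈ E} := by
    simp only [card_filter]
    exact sum_comm
  have : 2 ^ m * (#E * 2 ^ k) ≤ 2 ^ m * (Φ * (Fintype.card α ^ m) ^ 2) :=
    calc 2 ^ m * (#E * 2 ^ k) = ∑ p, #{σ : ι → Bool | swapAt σ p ∈ E} * 2 ^ k := by
          rw [← sum_mul, ← hcomm]
          simp [card_filter_swapAt_mem, m, mul_assoc]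
      _ ≤ ∑ _p : (ι → α) × (ι → α), Φ * 2 ^ m :=
          sum_le_sum fun p _ => card_swapAt_mem_missHitPairs_mul_le 𝒮 k Φ htrace p
      _ = 2 ^ m * (Φ * (Fintype.card α ^ m) ^ 2) := by
          rw [sum_const, card_univ, Fintype.card_prod, Fintype.card_fun, smul_eq_mul]
          ring
  exact Nat.le_of_mul_le_mul_left this (by positivity)

end EpsNet

theorem exists_hitting_set_card_le {α : Type*} [Fintype α] [DecidableEq α] [Nonempty α]
    (𝒮 : Finset (Finset α)) {ε : ℝ} {m Φ : ℕ} (h8 : 8 ≤ ε * m)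
    (hsize : ∀ s ∈ 𝒮, ε * Fintype.card α ≤ #s)
    (htrace : ∀ W : Finset α, #W ≤ 2 * m → #(𝒮.image (W ∩ ·)) ≤ Φ)
    (hΦ : 2 * Φ < 2 ^ ⌈ε * m / 2⌉₊) :
    ∃ D : Finset α, #D ≤ m ∧ ∀ s ∈ 𝒮, ∃ a ∈ D, a ∈ s := by
  set k := ⌈ε * m / 2⌉₊
  have hk : (k : ℝ) ≤ ε * Fintype.card (Fin m) / 2 + 1 := by
    simpa using (Nat.ceil_lt_add_one (by linarith : 0 ≤ ε * m / 2)).le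
  obtain ⟨x, hx⟩ : ∃ x : Fin m → α, x ∉ failingSamples 𝒮 := by
    by_contra! h
    set N := Fintype.card α ^ m
    have hF : #(failingSamples (ι := Fin m) 𝒮) = N := by
      rw [eq_univ_of_forall h, card_univ, Fintype.card_fun, Fintype.card_fin]
    have hE := card_failingSamples_mul_le 𝒮 (by simpa using h8) hk hsize
    have hE' := card_missHitPairs_mul_le (ι := Fin m) 𝒮 k Φ (by simpa using htrace)
    rw [hF, Fintype.card_fin] at hE
    rw [Fintype.card_fin] at hE'
    have hN : 0 < N ^ 2 := by positivity
    have : N ^ 2 * 2 ^ k < N ^ 2 * 2 ^ k :=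
      calc N ^ 2 * 2 ^ k ≤ 2 * (#(missHitPairs (ι := Fin m) 𝒮 k) * 2 ^ k) := by
            rw [sq, ← mul_assoc]; exact Nat.mul_le_mul_right _ hE |>.trans_eq (by ring)
        _ ≤ 2 * Φ * N ^ 2 := by rw [mul_assoc]; exact Nat.mul_le_mul_left 2 hE'
        _ < N ^ 2 * 2 ^ k := by rw [mul_comm]; exact Nat.mul_lt_mul_of_pos_left hΦ hN
    exact lt_irrefl _ this
  refine ⟨univ.image x, card_image_le.trans (by simp), fun s hs => ?_⟩
  simp only [failingSamples, mem_filter, mem_univ, true_and, not_exists, not_and,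
    not_forall, not_not] at hx
  obtain ⟨j, hj⟩ := hx s hs
  exact ⟨x j, mem_image_of_mem x (mem_univ j), hj⟩

section Numerics
variable {d : ℕ} {δ : ℝ} {m : ℕ}

theorem three_le_logb_two {r : ℝ} (hr : 8 ≤ r) : 3 ≤ Real.logb 2 r := by
  rw [Real.le_logb_iff_rpow_le one_lt_two (by linarith)]
  norm_num [hr]

theorem logb_two_le_two_mul {r : ℝ} (hr : 0 < r) : Real.logb 2 r ≤ 2 * r := by
  rw [Real.logb, div_le_iff₀ (Real.log_pos one_lt_two)]
  nlinarith [Real.log_le_self hr.le, Real.log_two_gt_d9]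

theorem eight_le_div_of_le_one (hd : 1 ≤ d) (hδ : 0 < δ) (hδ1 : δ ≤ 1) : 8 ≤ 8 * d / δ := by
  rw [le_div_iff₀ hδ]
  have : (1 : ℝ) ≤ d := by exact_mod_cast hd
  nlinarith

theorem eight_le_mul_of_lt_floor_add_one (hd : 1 ≤ d) (hδ : 0 < δ) (hδ1 : δ ≤ 1)
    (hm : 8 * d / δ * Real.logb 2 (8 * d / δ) < m + 1) : 8 ≤ δ * m := by
  have hr := eight_le_div_of_le_one hd hδ hδ1
  have hL := three_le_logb_two hr
  have hδr : δ * (8 * d / δ) = 8 * d := by field_simp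
  have : (1 : ℝ) ≤ d := by exact_mod_cast hd
  nlinarith

theorem two_mul_pow_lt_two_pow_ceil (hd : 1 ≤ d) (hδ : 0 < δ) (hδ1 : δ ≤ 1)
    (hm₁ : (m : ℝ) ≤ 8 * d / δ * Real.logb 2 (8 * d / δ))
    (hm₂ : 8 * d / δ * Real.logb 2 (8 * d / δ) < m + 1) :
    2 * (2 * m + 1) ^ d < 2 ^ ⌈δ * m / 2⌉₊ := by
  have hr := eight_le_div_of_le_one hd hδ hδ1
  have hδr : δ * (8 * d / δ) = 8 * d := by field_simp
  have hL := three_le_logb_two hr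
  have hLr := logb_two_le_two_mul (by linarith : 0 < 8 * d / δ)
  set r := 8 * d / δ
  set L := Real.logb 2 r
  have hd' : (1 : ℝ) ≤ d := by exact_mod_cast hd
  have hlog : Real.logb 2 (2 * m + 1) ≤ 4 * L - 2 := by
    have h4 : 4 * (2 * (m : ℝ) + 1) ≤ r ^ 4 := by
      have hr2 : 64 ≤ r ^ 2 := by nlinarith
      have : r * L ≤ 2 * r ^ 2 := by nlinarith
      nlinarith
    have := Real.logb_le_logb_of_le one_lt_two (by positivity) h4
    rw [Real.logb_mul (by norm_num) (by positivity), Real.logb_pow,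
      show (4 : ℝ) = 2 ^ 2 by norm_num, Real.logb_pow, Real.logb_self_eq_one one_lt_two] at this
    push_cast at this
    linarith
  have hexp : 1 + d * Real.logb 2 (2 * m + 1) < ⌈δ * m / 2⌉₊ := by
    have := Nat.le_ceil (δ * m / 2)
    nlinarith
  have : (2 * (2 * m + 1) ^ d : ℝ) < 2 ^ ⌈δ * m / 2⌉₊ := by
    rw [← Real.logb_lt_logb_iff one_lt_two (by positivity) (by positivity),
      Real.logb_mul (by norm_num) (by positivity), Real.logb_pow, Real.logb_pow,
      Real.logb_self_eq_one one_lt_two]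
    linarith
  exact_mod_cast this

end Numerics

section SauerShelah
variable {α : Type*} [DecidableEq α]

theorem sum_Iic_choose_le_pow (N d : ℕ) : ∑ k ∈ Iic d, N.choose k ≤ (N + 1) ^ d := by
  rw [← Nat.range_succ_eq_Iic]
  induction d with
  | zero => simp
  | succ d ih =>
    rw [sum_range_succ, pow_succ']
    have : N.choose (d + 1) ≤ N * (N + 1) ^ d :=
      (Nat.choose_le_pow N (d + 1)).trans <| by
        rw [pow_succ']; exact Nat.mul_le_mul_left N (Nat.pow_le_pow_left N.le_succ d)
    linarith

theorem card_shatterer_le_sum_choose {𝒜 : Finset (Finset α)} {W : Finset α}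
    (h𝒜 : ∀ t ∈ 𝒜, t ⊆ W) : #𝒜.shatterer ≤ ∑ k ∈ Iic 𝒜.vcDim, (#W).choose k := by
  simp_rw [← card_powersetCard]
  refine (card_le_card fun s hs => mem_biUnion.2 ⟨#s, ?_⟩).trans card_biUnion_le
  have hs := mem_shatterer.1 hs
  obtain ⟨t, ht, hst⟩ := hs.exists_superset
  exact ⟨mem_Iic.2 hs.card_le_vcDim, mem_powersetCard.2 ⟨hst.trans (h𝒜 t ht), rfl⟩⟩

theorem vcDim_image_inter_le (𝒮 : Finset (Finset α)) (W : Finset α) :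
    (𝒮.image (W ∩ ·)).vcDim ≤ 𝒮.vcDim := by
  refine Finset.sup_le fun s hs => Shatters.card_le_vcDim fun t hts => ?_
  have hs := mem_shatterer.1 hs
  obtain ⟨_, hu, hsW⟩ := hs.exists_superset
  obtain ⟨u, -, rfl⟩ := mem_image.1 hu
  obtain ⟨_, hut, hst⟩ := hs hts
  obtain ⟨u', hu', rfl⟩ := mem_image.1 hut
  exact ⟨u', hu', by rw [← hst, ← inter_assoc, inter_eq_left.2 (hsW.trans inter_subset_left)]⟩

theorem card_image_inter_le_pow (𝒮 : Finset (Finset α)) (W : Finset α) :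
    #(𝒮.image (W ∩ ·)) ≤ (#W + 1) ^ 𝒮.vcDim :=
  calc #(𝒮.image (W ∩ ·)) ≤ #(𝒮.image (W ∩ ·)).shatterer := card_le_card_shatterer _
    _ ≤ ∑ k ∈ Iic (𝒮.image (W ∩ ·)).vcDim, (#W).choose k :=
        card_shatterer_le_sum_choose (by simp)
    _ ≤ (#W + 1) ^ (𝒮.image (W ∩ ·)).vcDim := sum_Iic_choose_le_pow _ _
    _ ≤ (#W + 1) ^ 𝒮.vcDim := Nat.pow_le_pow_right (Nat.succ_pos _) (vcDim_image_inter_le 𝒮 W)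

end SauerShelah

theorem SimpleGraph.vcDim_image_neighborFinset_le {V : Type*} [Fintype V] [DecidableEq V]
    {G : SimpleGraph V} [DecidableRel G.Adj] {d : ℕ} (hvc : VCDimLE G d) :
    (univ.image fun v => G.neighborFinset v).vcDim ≤ d := by
  refine Finset.sup_le fun s hs => hvc s fun T hT => ?_
  obtain ⟨_, hu, hsv⟩ := mem_shatterer.1 hs hT
  obtain ⟨v, -, rfl⟩ := mem_image.1 hu
  exact ⟨v, fun a ha => by rw [← hsv]; simp [ha]⟩

theorem VCDimLE.one_le_of_adj {V : Type*} {G : SimpleGraph V} {d : ℕ} (hvc : VCDimLE G d)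
    {u v : V} (huv : G.Adj u v) : 1 ≤ d := by
  classical
  refine hvc {v} fun T _ => ?_
  by_cases hv : v ∈ T
  · exact ⟨u, by simp [huv, hv]⟩
  · exact ⟨v, by simp [hv]⟩

theorem domNum_le_card {V : Type*} [Fintype V] {G : SimpleGraph V} {D : Finset V}
    (hD : IsDomSet G D) : domNum G ≤ #D :=
  Nat.sInf_le ⟨D, rfl, hD⟩

theorem SimpleGraph.exists_isDomSet_card_le {V : Type*} [Fintype V] [DecidableEq V]
    [Nonempty V] {G : SimpleGraph V} [DecidableRel G.Adj] {d m : ℕ} {δ : ℝ} (hvc : VCDimLE G d)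
    (hdeg : ∀ v : V, δ * Fintype.card V ≤ G.degree v) (h8 : 8 ≤ δ * m)
    (hm : 2 * (2 * m + 1) ^ d < 2 ^ ⌈δ * m / 2⌉₊) :
    ∃ D : Finset V, IsDomSet G D ∧ #D ≤ m := by
  obtain ⟨D, hDm, hDhit⟩ := exists_hitting_set_card_le (univ.image fun v => G.neighborFinset v)
    h8 (by simpa using hdeg)
    (fun W hW => (card_image_inter_le_pow _ W).trans <|
      (Nat.pow_le_pow_left (by omega) _).trans <|
        Nat.pow_le_pow_right (by omega) (G.vcDim_image_neighborFinset_le hvc)) hm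
  refine ⟨D, fun v => ?_, hDm⟩
  obtain ⟨u, hu, huv⟩ := hDhit _ (mem_image_of_mem _ (mem_univ v))
  exact Or.inr ⟨u, hu, ((G.mem_neighborFinset v u).1 huv).symm⟩

theorem stmt_6 {V : Type*} [Fintype V] [Nonempty V] (G : SimpleGraph V)
    [DecidableRel G.Adj] (d : ℕ) (δ : ℝ) (hδ : 0 < δ)
    (hvc : VCDimLE G d)
    (hdeg : ∀ v : V, δ * Fintype.card V ≤ G.degree v) :
    (domNum G : ℝ) ≤ (8 * d / δ) * Real.logb 2 (8 * d / δ) := by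
  classical
  obtain ⟨v₀⟩ := ‹Nonempty V›
  have hdeg₀ : (0 : ℝ) < G.degree v₀ := (by positivity : (0 : ℝ) < δ * _).trans_le (hdeg v₀)
  obtain ⟨u₀, hu₀⟩ := (G.degree_pos_iff_exists_adj v₀).1 (by exact_mod_cast hdeg₀)
  have hd : 1 ≤ d := hvc.one_le_of_adj hu₀
  have hδ1 : δ ≤ 1 := by
    have : (G.degree v₀ : ℝ) < Fintype.card V := by exact_mod_cast G.degree_lt_card_verts v₀
    nlinarith [hdeg v₀]
  set M := 8 * d / δ * Real.logb 2 (8 * d / δ)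
  have hM : 0 ≤ M := by
    have := three_le_logb_two (eight_le_div_of_le_one hd hδ hδ1)
    positivity
  obtain ⟨D, hD, hDm⟩ := G.exists_isDomSet_card_le hvc hdeg
    (eight_le_mul_of_lt_floor_add_one hd hδ hδ1 (Nat.lt_floor_add_one M))
    (two_mul_pow_lt_two_pow_ceil hd hδ hδ1 (Nat.floor_le hM) (Nat.lt_floor_add_one M))
  calc (domNum G : ℝ) ≤ #D := by exact_mod_cast domNum_le_card hD
    _ ≤ ⌊M⌋₊ := by exact_mod_cast hDm
    _ ≤ M := Nat.floor_le hM
end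

section
/- For every n-vertex graph G and every ε > 0, there exist vertices v_1,...,v_k ∈ V(G) (not necessarily distinct) and pairwise disjoint sets S_1,...,S_k ⊆ V(G) such that: (1) |S_i| = εn/3 for all i, hence k ≤ 3/ε; (2) v_i is adjacent to every vertex of S_i; and (3) the number of edges of G incident to X := V(G) \ (S_1 ∪ ... ∪ S_k) is at most εn²/2. -/
/-!
Greedily set aside `m = εn/3` neighbours of a vertex, as long as some vertex still has `m`
neighbours among the vertices not yet set aside. Disjointness gives `k m ≤ n`, i.e. `k ≤ 3/ε`.
When the process stops, every vertex has fewer than `m` neighbours in the leftover set `X`, and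
counting each edge incident to `X` from its other endpoint bounds their number by
`n m = εn²/3 ≤ εn²/2`.
-/

open Finset Function

section

variable {V : Type*}

lemma pairwise_disjoint_fin_cons {k : ℕ} {T : Finset V} {S : Fin k → Finset V}
    (hS : Pairwise (Disjoint on S)) (hT : ∀ i, Disjoint T (S i)) :
    Pairwise (Disjoint on (Fin.cons T S : Fin (k + 1) → Finset V)) := by
  intro i j hij
  induction i using Fin.cases <;> induction j using Fin.cases
  · exact absurd rfl hij
  · exact hT _
  · exact (hT _).symm
  · exact hS fun h => hij (congrArg Fin.succ h)

lemma card_mul_le_of_pairwise_disjoint {ι : Type*} [Fintype ι] [DecidableEq V]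
    {S : ι → Finset V} {R : Finset V} {m : ℕ} (hdisj : Pairwise (Disjoint on S))
    (hsub : ∀ i, S i ⊆ R) (hcard : ∀ i, #(S i) = m) :
    Fintype.card ι * m ≤ #R := calc
  Fintype.card ι * m = #(univ.biUnion S) := by
    rw [card_biUnion (hdisj.set_pairwise _)]; simp [hcard]
  _ ≤ #R := card_le_card (biUnion_subset.mpr fun i _ => hsub i)

lemma exists_star_packing [DecidableEq V] (G : SimpleGraph V) [DecidableRel G.Adj]
    {m : ℕ} (hm : 0 < m) (R : Finset V) :
    ∃ (k : ℕ) (v : Fin k → V) (S : Fin k → Finset V),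
      Pairwise (Disjoint on S) ∧ (∀ i, S i ⊆ R) ∧ (∀ i, #(S i) = m) ∧
      (∀ i, ∀ x ∈ S i, G.Adj (v i) x) ∧
      ∀ w, #{x ∈ R | (∀ i, x ∉ S i) ∧ G.Adj w x} < m := by
  induction R using Finset.strongInduction with
  | H R ih =>
  by_cases h : ∃ w, m ≤ #{x ∈ R | G.Adj w x}
  · obtain ⟨w, hw⟩ := h
    obtain ⟨T, hTN, hTcard⟩ := exists_subset_card_eq hw
    have hTR : T ⊆ R := hTN.trans (filter_subset _ _)
    have hT : T.Nonempty := card_pos.mp (hTcard ▸ hm)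
    obtain ⟨k, v, S, hdisj, hsub, hcard, hadj, hres⟩ :=
      ih (R \ T) (sdiff_ssubset hTR hT)
    refine ⟨k + 1, Fin.cons w v, Fin.cons T S,
      pairwise_disjoint_fin_cons hdisj fun i => disjoint_of_subset_right (hsub i) disjoint_sdiff,
      Fin.cases hTR fun i => (hsub i).trans sdiff_subset, Fin.cases hTcard hcard,
      Fin.cases (fun x hx => (mem_filter.mp (hTN hx)).2) hadj, fun u => ?_⟩
    convert hres u using 2
    ext x
    simp only [Fin.forall_fin_succ, Fin.cons_zero, Fin.cons_succ, mem_filter, mem_sdiff]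
    tauto
  · push Not at h
    exact ⟨0, Fin.elim0, Fin.elim0, fun i => i.elim0, fun i => i.elim0, fun i => i.elim0,
      fun i => i.elim0, by simpa using h⟩

lemma ncard_incident_edges_le [Fintype V] (G : SimpleGraph V) [DecidableRel G.Adj]
    (P : V → Prop) [DecidablePred P] {d : ℕ} (hd : ∀ w, #{x | P x ∧ G.Adj w x} ≤ d) :
    {e : Sym2 V | e ∈ G.edgeSet ∧ ∃ x ∈ e, P x}.ncard ≤ Fintype.card V * d := by
  classical
  have hsub : {e : Sym2 V | e ∈ G.edgeSet ∧ ∃ x ∈ e, P x} ⊆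
      ((univ.sigma fun w => ({x | P x ∧ G.Adj w x} : Finset V)).image
        fun p => s(p.1, p.2) : Finset (Sym2 V)) := by
    rintro e ⟨he, x, hxe, hx⟩
    obtain ⟨w, rfl⟩ := Sym2.mem_iff_exists.mp hxe
    exact mem_image.mpr ⟨⟨w, x⟩, by simpa using ⟨hx, he.symm⟩, Sym2.eq_swap⟩
  calc _ ≤ #((univ.sigma fun w => ({x | P x ∧ G.Adj w x} : Finset V)).image
        fun p => s(p.1, p.2)) := by
          rw [← Set.ncard_coe_finset]; exact Set.ncard_le_ncard hsub
    _ ≤ ∑ w, #({x | P x ∧ G.Adj w x} : Finset V) := card_image_le.trans (card_sigma _ _).le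
    _ ≤ Fintype.card V * d := (sum_le_sum fun w _ => hd w).trans (by simp)

end

theorem stmt_7_general {V : Type*} [Fintype V] (G : SimpleGraph V)
    (ε : ℝ) (hε : 0 < ε) (m : ℕ) (hm : (m : ℝ) = ε * Fintype.card V / 3) :
    ∃ (k : ℕ) (v : Fin k → V) (S : Fin k → Finset V),
      (k : ℝ) ≤ 3 / ε ∧
      (∀ i j : Fin k, i ≠ j → Disjoint (S i) (S j)) ∧
      (∀ i : Fin k, (S i).card = m) ∧
      (∀ i : Fin k, ∀ x ∈ S i, G.Adj (v i) x) ∧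
      (Set.ncard {e : Sym2 V | e ∈ G.edgeSet ∧ ∃ x ∈ e, ∀ i : Fin k, x ∉ S i} : ℝ)
        ≤ ε * (Fintype.card V : ℝ) ^ 2 / 2 := by
  classical
  obtain hm0 | hmpos := m.eq_zero_or_pos
  · have : IsEmpty V := by
      rw [← Fintype.card_eq_zero_iff]
      subst hm0
      exact_mod_cast (by simpa [hε.ne'] using hm.symm : (Fintype.card V : ℝ) = 0)
    exact ⟨0, Fin.elim0, Fin.elim0, by rw [Nat.cast_zero]; positivity, fun i => i.elim0,
      fun i => i.elim0, fun i => i.elim0, by simp⟩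
  obtain ⟨k, v, S, hdisj, hsub, hcard, hadj, hres⟩ := exists_star_packing G hmpos univ
  have hkm : (k * m : ℕ) ≤ (Fintype.card V : ℝ) := by
    exact_mod_cast by simpa using card_mul_le_of_pairwise_disjoint hdisj hsub hcard
  have hedges := ncard_incident_edges_le G (fun x => ∀ i, x ∉ S i) (d := m)
    fun w => by simpa using (hres w).le
  refine ⟨k, v, S, ?_, fun i j h => hdisj h, hcard, hadj, ?_⟩
  · have hn : (0 : ℝ) < Fintype.card V := by
      have : (0 : ℝ) < m := by exact_mod_cast hmpos
      nlinarith
    rw [le_div_iff₀ hε]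
    push_cast at hkm
    nlinarith
  · calc _ ≤ ((Fintype.card V * m : ℕ) : ℝ) := by exact_mod_cast hedges
      _ ≤ _ := by push_cast; rw [hm]; nlinarith [sq_nonneg (Fintype.card V : ℝ)]

theorem stmt_7 {V : Type*} [Fintype V] [DecidableEq V] (G : SimpleGraph V)
    (ε : ℝ) (hε : 0 < ε) (m : ℕ) (hm : (m : ℝ) = ε * Fintype.card V / 3) :
    ∃ (k : ℕ) (v : Fin k → V) (S : Fin k → Finset V),
      (k : ℝ) ≤ 3 / ε ∧
      (∀ i j : Fin k, i ≠ j → Disjoint (S i) (S j)) ∧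
      (∀ i : Fin k, (S i).card = m) ∧
      (∀ i : Fin k, ∀ x ∈ S i, G.Adj (v i) x) ∧
      (Set.ncard {e : Sym2 V | e ∈ G.edgeSet ∧ ∃ x ∈ e, ∀ i : Fin k, x ∉ S i} : ℝ)
        ≤ ε * (Fintype.card V : ℝ) ^ 2 / 2 :=
  stmt_7_general G ε hε m hm
end

section
/- Let F and H be graphs such that H has a homomorphism to the 2-subdivision F•• of F. Then for every ε > 0, every H-hom-free graph G admits an ε-approximate homomorphism to an F-hom-free graph Γ with |V(Γ)| ≤ 1 + 3/ε. -/
/-- The 2-subdivision `F••` of `F`: every edge of `F` is replaced by a path with two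
new internal vertices. The internal vertices are indexed by the darts of `F`:
the subdivision vertex `(u,v)` is the one adjacent to the original vertex `u`. -/
def TwoSubdivision {V : Type*} (F : SimpleGraph V) :
    SimpleGraph (V ⊕ {p : V × V // F.Adj p.1 p.2}) :=
  SimpleGraph.fromRel (fun a b =>
    match a, b with
    | Sum.inl u, Sum.inr ⟨(x, _), _⟩ => u = x
    | Sum.inr ⟨(x, y), _⟩, Sum.inr ⟨(x', y'), _⟩ => x' = y ∧ y' = x
    | _, _ => False)

/-- `Γ` is `F`-hom-free: there is no graph homomorphism from `F` to `Γ`. -/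
def HomFree {VF W : Type*} (F : SimpleGraph VF) (Γ : SimpleGraph W) : Prop :=
  IsEmpty (F →g Γ)

/-- `f` is an `ε`-approximate homomorphism from `G` to `Γ`. -/
def IsApproxHom {V W : Type*} [Fintype V] (ε : ℝ) (G : SimpleGraph V)
    (Γ : SimpleGraph W) (f : V → W) : Prop :=
  (Set.ncard {e : Sym2 V | e ∈ G.edgeSet ∧ Sym2.map f e ∉ Γ.edgeSet} : ℝ)
    ≤ ε * (Fintype.card V : ℝ) ^ 2

/-! Since `H` maps to `F••`, the graph `G` admits no homomorphism from `F••`; in particular it is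
triangle-free. With `n = |V(G)|`, choose a set `S` of hubs maximising `#N(S) - εn·#S`, where `N(S)`
is the set of vertices with a neighbour in `S`. Then `#S ≤ 1/ε`, and no vertex has more than `εn`
neighbours outside `N(S)`, so by double counting at most `εn²` edges meet the complement of `N(S)`.
Send each vertex of `N(S)` to an adjacent hub, the others to one extra vertex, and join two hubs
of `Γ` when a walk of length three connects them in `G`. An edge inside `N(S)` then goes to an edge
of `Γ` (its ends go to distinct hubs since `G` has no triangle), and a homomorphism `F → Γ` would
lift to `F•• → G` by routing every edge of `F` along its walk of length three. -/

section

open Finset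

variable {VF VG W : Type*}

section TwoSubdivision

variable (F : SimpleGraph VF)

lemma twoSubdivision_not_adj_inl_inl (x y : VF) :
    ¬ (TwoSubdivision F).Adj (.inl x) (.inl y) := by
  simp [TwoSubdivision]

lemma twoSubdivision_adj_inl_inr (x : VF) (p : {p : VF × VF // F.Adj p.1 p.2}) :
    (TwoSubdivision F).Adj (.inl x) (.inr p) ↔ x = p.1.1 := by
  obtain ⟨⟨y, z⟩, hyz⟩ := p
  simp [TwoSubdivision]

lemma twoSubdivision_adj_inr_inr (p q : {p : VF × VF // F.Adj p.1 p.2}) :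
    (TwoSubdivision F).Adj (.inr p) (.inr q) ↔ q.1 = p.1.swap := by
  obtain ⟨⟨x, y⟩, hxy⟩ := p
  obtain ⟨⟨x', y'⟩, hxy'⟩ := q
  simp only [TwoSubdivision, SimpleGraph.fromRel_adj, ne_eq, Sum.inr.injEq, Subtype.mk.injEq,
    Prod.mk.injEq, Prod.swap_prod_mk]
  constructor
  · rintro ⟨-, h | ⟨rfl, rfl⟩⟩ <;> tauto
  · rintro ⟨rfl, rfl⟩
    exact ⟨fun h => hxy.ne h.1, Or.inl ⟨rfl, rfl⟩⟩

variable {F} (G : SimpleGraph VG)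

lemma nonempty_twoSubdivision_hom (h : VF → VG)
    (hwalk : ∀ x y, F.Adj x y → ∃ u v, G.Adj (h x) u ∧ G.Adj u v ∧ G.Adj v (h y)) :
    Nonempty (TwoSubdivision F →g G) := by
  classical
  let : LinearOrder VF := IsWellOrder.linearOrder WellOrderingRel
  choose u v hu huv hv using hwalk
  -- both darts of an edge use the walk chosen for its increasing orientation
  let m (p : {p : VF × VF // F.Adj p.1 p.2}) : VG :=
    if p.1.1 < p.1.2 then u _ _ p.2 else v _ _ p.2.symm
  have hm_hub (p) : G.Adj (h p.1.1) (m p) := by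
    unfold m; split_ifs
    exacts [hu _ _ _, (hv _ _ _).symm]
  have hm_swap (p q) (hpq : q.1 = p.1.swap) : G.Adj (m p) (m q) := by
    obtain ⟨⟨x, y⟩, hxy⟩ := p
    obtain ⟨⟨x', y'⟩, hxy'⟩ := q
    simp only [Prod.swap_prod_mk, Prod.mk.injEq] at hpq
    obtain ⟨rfl, rfl⟩ := hpq
    rcases hxy.ne.lt_or_gt with hlt | hlt
    · simp [m, hlt, hlt.not_gt, huv]
    · simp [m, hlt, hlt.not_gt, (huv _ _ _).symm]
  refine ⟨⟨Sum.elim h m, ?_⟩⟩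
  rintro (x | p) (y | q) hadj
  · exact absurd hadj (twoSubdivision_not_adj_inl_inl F x y)
  · rw [(twoSubdivision_adj_inl_inr F x q).1 hadj]
    exact hm_hub q
  · rw [(twoSubdivision_adj_inl_inr F y p).1 hadj.symm]
    exact (hm_hub p).symm
  · exact hm_swap p q ((twoSubdivision_adj_inr_inr F p q).1 hadj)

lemma not_adj_of_isEmpty_twoSubdivision_hom (hG : IsEmpty (TwoSubdivision F →g G)) {a b c : VG}
    (hab : G.Adj a b) (hac : G.Adj a c) : ¬ G.Adj b c := fun hbc =>
  hG.false (nonempty_twoSubdivision_hom G (fun _ => a) fun _ _ _ => ⟨b, c, hab, hbc, hac.symm⟩).some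

end TwoSubdivision

section HubGraph

variable (G : SimpleGraph VG)

def hubGraph (hub : W → VG) : SimpleGraph W :=
  SimpleGraph.fromRel fun a b => ∃ u v, G.Adj (hub a) u ∧ G.Adj u v ∧ G.Adj v (hub b)

variable {G}

lemma hubGraph_adj {hub : W → VG} {a b : W} :
    (hubGraph G hub).Adj a b ↔ a ≠ b ∧ ∃ u v, G.Adj (hub a) u ∧ G.Adj u v ∧ G.Adj v (hub b) := by
  rw [hubGraph, SimpleGraph.fromRel_adj]
  refine and_congr_right fun _ => or_iff_left_of_imp ?_
  rintro ⟨u, v, hbu, huv, hva⟩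
  exact ⟨v, u, hva.symm, huv.symm, hbu.symm⟩

lemma homFree_hubGraph {F : SimpleGraph VF} (hG : IsEmpty (TwoSubdivision F →g G))
    (hub : W → VG) : HomFree F (hubGraph G hub) :=
  ⟨fun φ => hG.false (nonempty_twoSubdivision_hom G (hub ∘ φ) fun _ _ hxy =>
    (hubGraph_adj.1 (φ.map_rel hxy)).2).some⟩

lemma hubGraph_adj_of_adj {F : SimpleGraph VF} (hG : IsEmpty (TwoSubdivision F →g G))
    {hub : W → VG} {a b : W} {u v : VG} (huv : G.Adj u v) (hu : G.Adj (hub a) u)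
    (hv : G.Adj (hub b) v) : (hubGraph G hub).Adj a b := by
  refine hubGraph_adj.2 ⟨?_, u, v, hu, huv, hv.symm⟩
  rintro rfl
  exact not_adj_of_isEmpty_twoSubdivision_hom G hG hu hv huv

end HubGraph

lemma Finset.exists_fin_card_add_one_subset_range {α : Type*} (S : Finset α) (a : α) :
    ∃ g : Fin (#S + 1) → α, ↑S ⊆ Set.range g := by
  refine ⟨Fin.cons a fun i => S.equivFin.symm i, fun s hs => ⟨(S.equivFin ⟨s, hs⟩).succ, ?_⟩⟩
  simp

section Counting

variable {V : Type*} [Fintype V] [DecidableEq V] (G : SimpleGraph V) [DecidableRel G.Adj]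

lemma exists_finset_card_neighborFinset_sdiff_le (t : ℝ) (ht : 0 ≤ t) :
    ∃ S : Finset V, t * #S ≤ #(S.biUnion (G.neighborFinset ·)) ∧
      ∀ x, (#(G.neighborFinset x \ S.biUnion (G.neighborFinset ·)) : ℝ) ≤ t := by
  obtain ⟨S, -, hmax⟩ := exists_max_image univ
    (fun S : Finset V => (#(S.biUnion (G.neighborFinset ·)) : ℝ) - t * #S) univ_nonempty
  refine ⟨S, by simpa using hmax ∅ (mem_univ _), fun x => ?_⟩
  by_cases hx : x ∈ S
  · rw [sdiff_eq_empty_iff_subset.2 (subset_biUnion_of_mem (G.neighborFinset ·) hx)]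
    simpa using ht
  · have hins := hmax (insert x S) (mem_univ _)
    rw [biUnion_insert, ← card_sdiff_add_card, card_insert_of_notMem hx] at hins
    push_cast at hins
    linarith

lemma sum_degree_le_card_mul (U : Finset V) (t : ℝ)
    (h : ∀ x, (#(G.neighborFinset x ∩ U) : ℝ) ≤ t) :
    (∑ u ∈ U, G.degree u : ℝ) ≤ Fintype.card V * t := by
  have hcount := sum_card_bipartiteAbove_eq_sum_card_bipartiteBelow (s := univ) (t := U) G.Adj
  have habove (x : V) : U.bipartiteAbove G.Adj x = G.neighborFinset x ∩ U := by
    ext; simp [bipartiteAbove, and_comm]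
  have hbelow (u : V) : (univ : Finset V).bipartiteBelow G.Adj u = G.neighborFinset u := by
    ext; simp [bipartiteBelow, SimpleGraph.adj_comm]
  simp only [habove, hbelow, SimpleGraph.card_neighborFinset_eq_degree] at hcount
  rw [← Nat.cast_sum, ← hcount, Nat.cast_sum]
  simpa using sum_le_sum fun x (_ : x ∈ univ) => h x

variable {F : SimpleGraph VF} {G}

lemma ncard_edges_not_mapped_hubGraph_le (hG : IsEmpty (TwoSubdivision F →g G)) (hub : W → V)
    (f : V → W) (U : Finset V) (hf : ∀ u ∉ U, G.Adj (hub (f u)) u) :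
    {e : Sym2 V | e ∈ G.edgeSet ∧ Sym2.map f e ∉ (hubGraph G hub).edgeSet}.ncard
      ≤ ∑ u ∈ U, G.degree u := by
  have hsub : {e : Sym2 V | e ∈ G.edgeSet ∧ Sym2.map f e ∉ (hubGraph G hub).edgeSet}
      ⊆ ↑(U.biUnion (G.incidenceFinset ·)) := by
    rintro ⟨u, v⟩ ⟨huv, hbad⟩
    rw [SimpleGraph.mem_edgeSet] at huv
    simp only [coe_biUnion, mem_coe, Set.mem_iUnion, SimpleGraph.mem_incidenceFinset,
      exists_prop]
    by_cases hu : u ∈ U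
    · exact ⟨u, hu, G.mk'_mem_incidenceSet_left_iff.2 huv⟩
    by_cases hv : v ∈ U
    · exact ⟨v, hv, G.mk'_mem_incidenceSet_right_iff.2 huv⟩
    exact absurd (hubGraph_adj_of_adj hG huv (hf u hu) (hf v hv)) hbad
  calc _ ≤ #(U.biUnion (G.incidenceFinset ·)) := by
        rw [← Set.ncard_coe_finset]
        exact Set.ncard_le_ncard hsub (finite_toSet _)
    _ ≤ ∑ u ∈ U, #(G.incidenceFinset u) := card_biUnion_le
    _ = ∑ u ∈ U, G.degree u := by simp only [SimpleGraph.card_incidenceFinset_eq_degree]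

end Counting

end

theorem stmt_9 {VF VH : Type*} (F : SimpleGraph VF) (H : SimpleGraph VH)
    (hHF : Nonempty (H →g TwoSubdivision F)) (ε : ℝ) (hε : 0 < ε)
    {VG : Type*} [Fintype VG] (G : SimpleGraph VG) (hG : HomFree H G) :
    ∃ (n : ℕ) (Γ : SimpleGraph (Fin n)) (f : VG → Fin n),
      HomFree F Γ ∧ (n : ℝ) ≤ 1 + 3 / ε ∧ IsApproxHom ε G Γ f := by
  classical
  have hG' : IsEmpty (TwoSubdivision F →g G) := ⟨fun ψ => hG.false (ψ.comp hHF.some)⟩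
  rcases isEmpty_or_nonempty VG with hVG | ⟨⟨v₀⟩⟩
  · refine ⟨0, hubGraph G Fin.elim0, isEmptyElim, homFree_hubGraph hG' _, ?_, ?_⟩
    · push_cast; positivity
    simp [IsApproxHom]
  set N := Fintype.card VG
  have hN : (0 : ℝ) < N := by exact_mod_cast Fintype.card_pos_iff.2 ⟨v₀⟩
  obtain ⟨S, hS, hnew⟩ := exists_finset_card_neighborFinset_sdiff_le G (ε * N) (by positivity)
  set U := (S.biUnion (G.neighborFinset ·))ᶜ
  obtain ⟨hub, hSsub⟩ := S.exists_fin_card_add_one_subset_range v₀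
  have hhub (u : VG) : ∃ i, u ∉ U → G.Adj (hub i) u := by
    by_cases hu : u ∈ U
    · exact ⟨0, absurd hu⟩
    obtain ⟨s, hs, hsu⟩ : ∃ s ∈ S, G.Adj s u := by simpa [U] using hu
    obtain ⟨i, rfl⟩ := hSsub hs
    exact ⟨i, fun _ => hsu⟩
  choose f hf using hhub
  refine ⟨S.card + 1, hubGraph G hub, f, homFree_hubGraph hG' hub, ?_, ?_⟩
  · have hSN : ε * N * S.card ≤ N := hS.trans (by exact_mod_cast Finset.card_le_univ _)
    have hS3 : (S.card : ℝ) ≤ 3 / ε := by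
      rw [le_div_iff₀ hε]; nlinarith
    push_cast
    linarith
  · calc _ ≤ (∑ u ∈ U, G.degree u : ℝ) := by
          exact_mod_cast ncard_edges_not_mapped_hubGraph_le hG' hub f U hf
      _ ≤ N * (ε * N) := sum_degree_le_card_mul G U _ fun x => by
          simpa only [Finset.sdiff_eq_inter_compl] using hnew x
      _ = ε * N ^ 2 := by ring
end

section
/- A hypergraph G has no Berge cycles if and only if it is a hyperforest, i.e., it can be built from the empty hypergraph by repeatedly adding an edge which intersects the current vertex set in at most one vertex. -/
variable {V : Type*} [DecidableEq V]

/-- A hyperforest: built from the empty hypergraph by repeatedly adding an edge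
(of size at least 2) which intersects the current vertex set in at most one vertex. -/
inductive IsHyperforest : Finset (Finset V) → Prop
  | empty : IsHyperforest ∅
  | step {H : Finset (Finset V)} {e : Finset V} : IsHyperforest H → e ∉ H →
      2 ≤ e.card → (e ∩ H.sup id).card ≤ 1 → IsHyperforest (insert e H)

/-- `H` has a Berge cycle: distinct vertices `v_1,…,v_k` and distinct edges
`e_1,…,e_k` (`k ≥ 2`) with `v_i, v_{i+1} ∈ e_i` cyclically. -/
def HasBergeCycle (H : Finset (Finset V)) : Prop :=
  ∃ k : ℕ, 2 ≤ k ∧ ∃ (v : Fin k → V) (e : Fin k → Finset V),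
    Function.Injective v ∧ Function.Injective e ∧
    ∀ i : Fin k, e i ∈ H ∧ v i ∈ e i ∧ v (finRotate k i) ∈ e i

lemma HasBergeCycle.mono {H H' : Finset (Finset V)} (hs : H ⊆ H') (h : HasBergeCycle H) :
    HasBergeCycle H' := by
  obtain ⟨k, hk, v, e, hv, he, hall⟩ := h
  exact ⟨k, hk, v, e, hv, he, fun i => ⟨hs (hall i).1, (hall i).2.1, (hall i).2.2⟩⟩

lemma cycle_of_closed_path (H : Finset (Finset V)) (n : ℕ) (hn : 1 ≤ n)
    (f : ℕ → Finset V) (v : ℕ → V) (w : V)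
    (hfH : ∀ m, m ≤ n → f m ∈ H)
    (hfinj : ∀ a, a ≤ n → ∀ b, b ≤ n → f a = f b → a = b)
    (hvinj : ∀ a, 1 ≤ a → a ≤ n → ∀ b, 1 ≤ b → b ≤ n → v a = v b → a = b)
    (hv1 : ∀ m, 1 ≤ m → m ≤ n → v m ∈ f (m-1))
    (hv2 : ∀ m, 1 ≤ m → m ≤ n → v m ∈ f m)
    (hw0 : w ∈ f 0) (hwn : w ∈ f n)
    (hwv : ∀ m, 1 ≤ m → m ≤ n → w ≠ v m) :
    HasBergeCycle H := by
  refine ⟨n+1, by omega, (fun i => if i.val = 0 then w else v i.val),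
    (fun i => f i.val), ?_, ?_, ?_⟩
  · intro a b hab
    simp only at hab
    rcases eq_or_ne a.val 0 with ha | ha <;> rcases eq_or_ne b.val 0 with hb | hb
    · exact Fin.ext (by omega)
    · rw [if_pos ha, if_neg hb] at hab
      exact absurd hab (hwv b.val (by omega) (by omega))
    · rw [if_neg ha, if_pos hb] at hab
      exact absurd hab.symm (hwv a.val (by omega) (by omega))
    · rw [if_neg ha, if_neg hb] at hab
      exact Fin.ext (hvinj a.val (by omega) (by omega) b.val (by omega) (by omega) hab)
  · intro a b hab
    exact Fin.ext (hfinj a.val (by omega) b.val (by omega) hab)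
  · intro i
    refine ⟨hfH i.val (by omega), ?_, ?_⟩
    · rcases eq_or_ne i.val 0 with h0 | h0
      · simpa [h0] using hw0
      · simpa [h0] using hv2 i.val (by omega) (by omega)
    · rw [finRotate_succ_apply]
      show (if ((i + 1 : Fin (n+1)) : ℕ) = 0 then w else v ((i + 1 : Fin (n+1)) : ℕ)) ∈ f (i : ℕ)
      rcases eq_or_ne i (Fin.last n) with h | h
      · have h0 : ((i + 1 : Fin (n+1)) : ℕ) = 0 := by rw [Fin.val_add_one, if_pos h]
        simp only [h0, if_pos rfl]
        have hi : i.val = n := by rw [h]; rfl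
        rw [hi]; exact hwn
      · have hlt : i.val < n := Fin.val_lt_last h
        have h1 : ((i + 1 : Fin (n+1)) : ℕ) = i.val + 1 := by rw [Fin.val_add_one, if_neg h]
        rw [h1, if_neg (Nat.succ_ne_zero _)]
        simpa using hv1 (i.val+1) (by omega) (by omega)

lemma cycle_of_min_deg (H : Finset (Finset V)) (hne : H.Nonempty)
    (hdeg : ∀ e ∈ H, 2 ≤ (e ∩ ((H.erase e).sup id)).card) : HasBergeCycle H := by
  by_contra hc
  obtain ⟨e0, he0⟩ := hne
  have he0ne : e0.Nonempty := by
    have h := hdeg e0 he0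
    obtain ⟨x, hx⟩ := Finset.card_pos.mp (show 0 < (e0 ∩ ((H.erase e0).sup id)).card by omega)
    exact ⟨x, (Finset.mem_inter.mp hx).1⟩
  obtain ⟨v0, -⟩ := he0ne
  set P : ℕ → Prop := fun n => ∃ (f : ℕ → Finset V) (v : ℕ → V),
    (∀ m, m ≤ n → f m ∈ H) ∧
    (∀ a, a ≤ n → ∀ b, b ≤ n → f a = f b → a = b) ∧
    (∀ a, 1 ≤ a → a ≤ n → ∀ b, 1 ≤ b → b ≤ n → v a = v b → a = b) ∧
    (∀ m, 1 ≤ m → m ≤ n → v m ∈ f (m-1) ∧ v m ∈ f m) with hP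
  have hP0 : P 0 := by
    refine ⟨fun _ => e0, fun _ => v0, fun m _ => he0, fun a ha b hb _ => by omega,
      fun a ha _ _ _ _ _ => by omega, fun m hm1 hm2 => by omega⟩
  have hstep : ∀ n, P n → P (n+1) := by
    intro n hPn
    obtain ⟨f, v, hfH, hfinj, hvinj, hv⟩ := hPn
    have hfn : f n ∈ H := hfH n le_rfl
    have h2 := hdeg (f n) hfn
    obtain ⟨w, hwmem, hwne⟩ := Finset.exists_mem_ne (s := f n ∩ ((H.erase (f n)).sup id)) (by omega) (v n)
    rw [Finset.mem_inter] at hwmem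
    obtain ⟨hwfn, hwsup⟩ := hwmem
    rw [Finset.mem_sup] at hwsup
    obtain ⟨g, hgmem, hwg⟩ := hwsup
    rw [Finset.mem_erase] at hgmem
    obtain ⟨hgne, hgH⟩ := hgmem
    simp only [id] at hwg
    by_cases hcase1 : ∃ i, 1 ≤ i ∧ i ≤ n ∧ w = v i
    · obtain ⟨i, hi1, hin, hwi⟩ := hcase1
      have hiltn : i < n := by
        rcases eq_or_lt_of_le hin with h | h
        · exact absurd (by rw [hwi, h]) hwne
        · exact h
      exact absurd (cycle_of_closed_path H (n - i) (by omega) (fun m => f (i + m))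
        (fun m => v (i + m)) w
        (fun m hm => hfH _ (by omega))
        (fun a ha b hb hab => by
          have := hfinj (i+a) (by omega) (i+b) (by omega) hab; omega)
        (fun a ha1 ha2 b hb1 hb2 hab => by
          have := hvinj (i+a) (by omega) (by omega) (i+b) (by omega) (by omega) hab; omega)
        (fun m hm1 hm2 => by
          have h := (hv (i+m) (by omega) (by omega)).1
          show v (i + m) ∈ f (i + (m - 1))
          rw [show i + (m - 1) = i + m - 1 from by omega]; exact h)
        (fun m hm1 hm2 => (hv (i+m) (by omega) (by omega)).2)
        (by rw [hwi]; exact (hv i hi1 hin).2)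
        (by show w ∈ f (i + (n - i))
            rw [show i + (n - i) = n from by omega]; exact hwfn)
        (fun m hm1 hm2 heq => by
          have := hvinj i hi1 hin (i+m) (by omega) (by omega) (by rw [← hwi, heq])
          omega)) hc
    · by_cases hcase2 : ∃ j, j ≤ n ∧ g = f j
      · obtain ⟨j, hjn, hgj⟩ := hcase2
        have hjltn : j < n := by
          rcases eq_or_lt_of_le hjn with h | h
          · exact absurd (by rw [hgj, h]) hgne
          · exact h
        exact absurd (cycle_of_closed_path H (n - j) (by omega) (fun m => f (j + m))
          (fun m => v (j + m)) w
          (fun m hm => hfH _ (by omega))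
          (fun a ha b hb hab => by
            have := hfinj (j+a) (by omega) (j+b) (by omega) hab; omega)
          (fun a ha1 ha2 b hb1 hb2 hab => by
            have := hvinj (j+a) (by omega) (by omega) (j+b) (by omega) (by omega) hab; omega)
          (fun m hm1 hm2 => by
            have h := (hv (j+m) (by omega) (by omega)).1
            show v (j + m) ∈ f (j + (m - 1))
            rw [show j + (m - 1) = j + m - 1 from by omega]; exact h)
          (fun m hm1 hm2 => (hv (j+m) (by omega) (by omega)).2)
          (by show w ∈ f (j + 0); rw [show j + 0 = j from rfl, ← hgj]; exact hwg)
          (by show w ∈ f (j + (n - j))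
              rw [show j + (n - j) = n from by omega]; exact hwfn)
          (fun m hm1 hm2 heq => hcase1 ⟨j + m, by omega, by omega, heq⟩)) hc
      · push_neg at hcase1 hcase2
        refine ⟨fun m => if m = n+1 then g else f m, fun m => if m = n+1 then w else v m,
          ?_, ?_, ?_, ?_⟩
        · intro m hm
          simp only
          by_cases h : m = n+1
          · simpa [h] using hgH
          · rw [if_neg h]; exact hfH m (by omega)
        · intro a ha b hb hab
          simp only at hab
          by_cases h1 : a = n+1 <;> by_cases h2 : b = n+1
          · omega
          · rw [if_pos h1, if_neg h2] at hab
            exact absurd hab (hcase2 b (by omega))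
          · rw [if_neg h1, if_pos h2] at hab
            exact absurd hab.symm (hcase2 a (by omega))
          · rw [if_neg h1, if_neg h2] at hab
            exact hfinj a (by omega) b (by omega) hab
        · intro a ha1 ha2 b hb1 hb2 hab
          simp only at hab
          by_cases h1 : a = n+1 <;> by_cases h2 : b = n+1
          · omega
          · rw [if_pos h1, if_neg h2] at hab
            exact absurd hab (hcase1 b hb1 (by omega))
          · rw [if_neg h1, if_pos h2] at hab
            exact absurd hab.symm (hcase1 a ha1 (by omega))
          · rw [if_neg h1, if_neg h2] at hab
            exact hvinj a ha1 (by omega) b hb1 (by omega) hab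
        · intro m hm1 hm2
          simp only
          by_cases h : m = n+1
          · subst h
            have hne : ¬(n = n + 1) := by omega
            simp [hne]
            exact ⟨hwfn, hwg⟩
          · rw [if_neg h, if_neg (show ¬(m - 1 = n + 1) by omega), if_neg h]
            exact hv m hm1 (by omega)
  have hall : ∀ n, P n := by
    intro n
    induction n with
    | zero => exact hP0
    | succ n ih => exact hstep n ih
  obtain ⟨f, v, hfH, hfinj, -, -⟩ := hall H.card
  have hcard : (Finset.range (H.card + 1)).card ≤ H.card := by
    apply Finset.card_le_card_of_injOn f
    · intro a ha
      exact hfH a (by have := Finset.mem_range.mp ha; omega)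
    · intro a ha b hb hab
      have ha' := Finset.mem_range.mp ha
      have hb' := Finset.mem_range.mp hb
      exact hfinj a (by omega) b (by omega) hab
  rw [Finset.card_range] at hcard
  omega

lemma forest_of_acyclic : ∀ (H : Finset (Finset V)), (∀ e ∈ H, 2 ≤ e.card) →
    ¬ HasBergeCycle H → IsHyperforest H := by
  intro H
  induction H using Finset.strongInduction with
  | _ H ih =>
    intro h2 hc
    rcases H.eq_empty_or_nonempty with rfl | hne
    · exact IsHyperforest.empty
    · by_cases hex : ∃ e ∈ H, (e ∩ ((H.erase e).sup id)).card ≤ 1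
      · obtain ⟨e, heH, hecard⟩ := hex
        rw [show H = insert e (H.erase e) from (Finset.insert_erase heH).symm]
        exact IsHyperforest.step
          (ih (H.erase e) (Finset.erase_ssubset heH)
            (fun x hx => h2 x (Finset.mem_of_mem_erase hx))
            (fun h => hc (h.mono (Finset.erase_subset _ _))))
          (Finset.notMem_erase _ _) (h2 e heH) hecard
      · push_neg at hex
        exact absurd (cycle_of_min_deg H hne (fun e he => hex e he)) hc

lemma acyclic_of_forest {H : Finset (Finset V)} (hf : IsHyperforest H) : ¬ HasBergeCycle H := by
  induction hf with
  | empty =>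
    rintro ⟨k, hk, v, ee, hvinj, heinj, hall⟩
    exact absurd (hall ⟨0, by omega⟩).1 (Finset.notMem_empty _)
  | @step H e hH henot hcard hint ih =>
    rintro ⟨k, hk, v, ee, hvinj, heinj, hall⟩
    by_cases hex : ∃ i, ee i = e
    · obtain ⟨i, hie⟩ := hex
      have hrotne : ∀ m : Fin k, finRotate k m ≠ m := by
        obtain ⟨k', rfl⟩ : ∃ k', k = k' + 1 := ⟨k - 1, by omega⟩
        intro m h
        rw [finRotate_succ_apply] at h
        have hval := congrArg Fin.val h
        rcases eq_or_ne m (Fin.last k') with hm | hm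
        · rw [Fin.val_add_one, if_pos hm] at hval
          have hmk : m.val = k' := by rw [hm]; rfl
          omega
        · rw [Fin.val_add_one, if_neg hm] at hval
          omega
      set j := (finRotate k).symm i with hjdef
      have hji : finRotate k j = i := Equiv.apply_symm_apply _ _
      have hjne : j ≠ i := by
        intro h
        rw [h] at hji
        exact hrotne i hji
      have hvi : v i ∈ ee j := by
        have h := (hall j).2.2
        rwa [hji] at h
      have heejH : ee j ∈ H := by
        rcases Finset.mem_insert.mp (hall j).1 with h | h
        · exact absurd (heinj (h.trans hie.symm)) hjne
        · exact h
      set i' := finRotate k i with hi'def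
      have hi'ne : i' ≠ i := hrotne i
      have hvi' : v i' ∈ ee i' := (hall i').2.1
      have heei'H : ee i' ∈ H := by
        rcases Finset.mem_insert.mp (hall i').1 with h | h
        · exact absurd (heinj (h.trans hie.symm)) hi'ne
        · exact h
      have h1 : v i ∈ e ∩ H.sup id :=
        Finset.mem_inter.mpr ⟨by rw [← hie]; exact (hall i).2.1,
          Finset.mem_sup.mpr ⟨ee j, heejH, hvi⟩⟩
      have h2 : v i' ∈ e ∩ H.sup id :=
        Finset.mem_inter.mpr ⟨by rw [← hie]; exact (hall i).2.2,
          Finset.mem_sup.mpr ⟨ee i', heei'H, hvi'⟩⟩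
      have hneq : v i ≠ v i' := fun h => hi'ne (hvinj h.symm)
      have : 2 ≤ (e ∩ H.sup id).card :=
        Finset.one_lt_card.mpr ⟨v i, h1, v i', h2, hneq⟩
      omega
    · push_neg at hex
      exact ih ⟨k, hk, v, ee, hvinj, heinj, fun i =>
        ⟨(Finset.mem_insert.mp (hall i).1).resolve_left (hex i), (hall i).2.1, (hall i).2.2⟩⟩

theorem stmt_12 (H : Finset (Finset V)) (h2 : ∀ e ∈ H, 2 ≤ e.card) :
    ¬ HasBergeCycle H ↔ IsHyperforest H := by
  exact ⟨forest_of_acyclic H h2, acyclic_of_forest⟩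
end

section
/- For every f, g ≥ 2 and every n ≥ f, there exists an n-vertex f-uniform, f-partite hypergraph with at least Ω(n^{1+1/g}) edges (the implied constant depending on f and g) and containing no Berge cycle of length at most g. -/
/-!
Deletion method. Colour the vertices by residues mod `f` and let `A` be the family of colour
transversals: `|A| ≥ (n/f)^f`, while two distinct vertices lie in at most `n^(f-2)` members
of `A`, so `A` carries at most `n^((f-1)k)` Berge `k`-cycles. Keep each member of `A`
independently with probability `p = c₀ n^(1/g) / n^(f-1)`. The expected number of kept edges is
`p|A| ≥ c₀ n^(1+1/g) / (2f)^f`, while for `2 ≤ k ≤ g` the expected number of kept Berge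
`k`-cycles is at most `(c₀ n^(1/g))^k ≤ c₀² n`; with `g c₀ = 1 / (2 (2f)^f)` these add up to at
most half of that lower bound. Fix an outcome at least as good as the
expectation and delete one edge from each of its short Berge cycles.
-/

open Finset

/-- `H` has a Berge cycle of length `k`: distinct vertices `v_1,…,v_k` and distinct
edges `e_1,…,e_k` with `v_i, v_{i+1} ∈ e_i` cyclically. -/
def HasBergeCycleLen {V : Type*} (H : Finset (Finset V)) (k : ℕ) : Prop :=
  ∃ (v : Fin k → V) (e : Fin k → Finset V),
    Function.Injective v ∧ Function.Injective e ∧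
    ∀ i : Fin k, e i ∈ H ∧ v i ∈ e i ∧ v (finRotate k i) ∈ e i

section RandomSubset

variable {α : Type*} (A : Finset α) (p : ℝ)

/-- The probability that the `p`-random subset of `A` is `S`. -/
def bernoulliWeight (S : Finset α) : ℝ :=
  p ^ #S * (1 - p) ^ (#A - #S)

theorem sum_bernoulliWeight [DecidableEq α] :
    ∑ S ∈ A.powerset, bernoulliWeight A p S = 1 := by
  have h := prod_add (fun _ => p) (fun _ => 1 - p) A
  simp only [prod_const, add_sub_cancel, one_pow] at h
  rw [h]
  refine sum_congr rfl fun S hS => ?_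
  rw [bernoulliWeight, card_sdiff_of_subset (mem_powerset.1 hS)]

theorem sum_bernoulliWeight_filter_superset [DecidableEq α] {T : Finset α} (hT : T ⊆ A) :
    ∑ S ∈ A.powerset with T ⊆ S, bernoulliWeight A p S = p ^ #T := by
  have hinj : Set.InjOn (T ∪ ·) (A \ T).powerset := fun U hU U' hU' h => by
    have hU := disjoint_of_subset_right (mem_powerset.1 hU) disjoint_sdiff
    have hU' := disjoint_of_subset_right (mem_powerset.1 hU') disjoint_sdiff
    simpa only [union_sdiff_cancel_left hU, union_sdiff_cancel_left hU'] using
      congrArg (· \ T) h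
  rw [← Icc_eq_filter_powerset, Icc_eq_image_powerset hT, sum_image hinj]
  calc ∑ U ∈ (A \ T).powerset, bernoulliWeight A p (T ∪ U)
      = ∑ U ∈ (A \ T).powerset, p ^ #T * bernoulliWeight (A \ T) p U := by
        refine sum_congr rfl fun U hU => ?_
        have hUT := mem_powerset.1 hU
        rw [bernoulliWeight, bernoulliWeight,
          card_union_of_disjoint (disjoint_of_subset_right hUT disjoint_sdiff),
          card_sdiff_of_subset hT, pow_add, mul_assoc, Nat.sub_add_eq]
    _ = p ^ #T := by rw [← mul_sum, sum_bernoulliWeight, mul_one]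

theorem sum_bernoulliWeight_mul_card_filter_subset [DecidableEq α] {β : Type*}
    (B : Finset β) (σ : β → Finset α) {k : ℕ}
    (hσ : ∀ b ∈ B, σ b ⊆ A ∧ #(σ b) = k) :
    ∑ S ∈ A.powerset, bernoulliWeight A p S * #{b ∈ B | σ b ⊆ S} = p ^ k * #B := by
  simp_rw [card_filter, Nat.cast_sum, mul_sum]
  rw [sum_comm]
  calc ∑ b ∈ B, ∑ S ∈ A.powerset,
        bernoulliWeight A p S * ((if σ b ⊆ S then 1 else 0 : ℕ) : ℝ)
      = ∑ _b ∈ B, p ^ k := sum_congr rfl fun b hb => by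
        rw [← (hσ b hb).2, ← sum_bernoulliWeight_filter_superset A p (hσ b hb).1, sum_filter]
        exact sum_congr rfl fun S _ => by split_ifs <;> simp
    _ = p ^ k * #B := by rw [sum_const, nsmul_eq_mul, mul_comm]

theorem bernoulliWeight_pos (hp₀ : 0 < p) (hp₁ : p < 1) (S : Finset α) :
    0 < bernoulliWeight A p S := by
  have : 0 < 1 - p := by linarith
  unfold bernoulliWeight
  positivity

theorem exists_le_of_sum_bernoulliWeight_mul [DecidableEq α] (hp₀ : 0 < p) (hp₁ : p < 1)
    (F : Finset α → ℝ) :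
    ∃ S ⊆ A, ∑ T ∈ A.powerset, bernoulliWeight A p T * F T ≤ F S := by
  set E := ∑ T ∈ A.powerset, bernoulliWeight A p T * F T
  obtain ⟨S, hS, h⟩ := exists_le_of_sum_le (powerset_nonempty A)
    (f := fun T => bernoulliWeight A p T * E) (g := fun T => bernoulliWeight A p T * F T)
    (by rw [← sum_mul, sum_bernoulliWeight, one_mul])
  exact ⟨S, mem_powerset.1 hS, le_of_mul_le_mul_left h (bernoulliWeight_pos A p hp₀ hp₁ S)⟩

end RandomSubset

theorem Finset.exists_card_le_forall_exists_mem {α β : Type*} [DecidableEq α] (B : Finset β)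
    (σ : β → Finset α) (hσ : ∀ b ∈ B, (σ b).Nonempty) :
    ∃ D : Finset α, #D ≤ #B ∧ ∀ b ∈ B, ∃ a ∈ σ b, a ∈ D := by
  choose a ha using hσ
  exact ⟨B.attach.image fun b => a b.1 b.2, card_image_le.trans card_attach.le,
    fun b hb => ⟨a b hb, ha b hb, mem_image_of_mem _ (mem_attach _ ⟨b, hb⟩)⟩⟩

section BergeCycle

variable {V : Type*} [Fintype V] [DecidableEq V] {k : ℕ}

def bergeCycles (k : ℕ) (H : Finset (Finset V)) :
    Finset ((Fin k → V) × (Fin k → Finset V)) :=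
  {c | Function.Injective c.1 ∧ Function.Injective c.2 ∧
    ∀ i, c.2 i ∈ H ∧ c.1 i ∈ c.2 i ∧ c.1 (finRotate k i) ∈ c.2 i}

theorem mem_bergeCycles {H : Finset (Finset V)} {c : (Fin k → V) × (Fin k → Finset V)} :
    c ∈ bergeCycles k H ↔ Function.Injective c.1 ∧ Function.Injective c.2 ∧
      ∀ i, c.2 i ∈ H ∧ c.1 i ∈ c.2 i ∧ c.1 (finRotate k i) ∈ c.2 i := by
  simp [bergeCycles]

theorem hasBergeCycleLen_iff {H : Finset (Finset V)} :
    HasBergeCycleLen H k ↔ (bergeCycles k H).Nonempty := by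
  simp [HasBergeCycleLen, bergeCycles, Finset.Nonempty]

theorem bergeCycles_eq_filter {A S : Finset (Finset V)} (hS : S ⊆ A) :
    bergeCycles k S = {c ∈ bergeCycles k A | univ.image c.2 ⊆ S} := by
  ext c
  simp only [bergeCycles, mem_filter, mem_univ, true_and, image_subset_iff, forall_const]
  constructor
  · rintro ⟨hv, he, h⟩
    exact ⟨⟨hv, he, fun i => ⟨hS (h i).1, (h i).2⟩⟩, fun i => (h i).1⟩
  · rintro ⟨⟨hv, he, h⟩, hsub⟩
    exact ⟨hv, he, fun i => ⟨hsub i, (h i).2⟩⟩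

theorem bergeCycles_mono {H S : Finset (Finset V)} (hHS : H ⊆ S) :
    bergeCycles k H ⊆ bergeCycles k S :=
  bergeCycles_eq_filter hHS ▸ filter_subset _ _

theorem image_snd_subset_and_card_of_mem_bergeCycles {A : Finset (Finset V)} {c}
    (hc : c ∈ bergeCycles k A) :
    univ.image c.2 ⊆ A ∧ #(univ.image c.2) = k := by
  simp only [bergeCycles, mem_filter, mem_univ, true_and] at hc
  refine ⟨image_subset_iff.2 fun i _ => (hc.2.2 i).1, ?_⟩
  rw [card_image_of_injective _ hc.2.1, card_univ, Fintype.card_fin]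

theorem card_bergeCycles_le {D : ℕ} (hk : 2 ≤ k) {H : Finset (Finset V)}
    (hD : ∀ x y, x ≠ y → #{e ∈ H | x ∈ e ∧ y ∈ e} ≤ D) :
    #(bergeCycles k H) ≤ (Fintype.card V * D) ^ k := by
  have hfiber (v : Fin k → V) : #{c ∈ bergeCycles k H | c.1 = v} ≤ D ^ k := by
    by_cases hv : Function.Injective v
    · let B i := {e ∈ H | v i ∈ e ∧ v (finRotate k i) ∈ e}
      have hB i : #(B i) ≤ D := hD _ _ fun h =>
        Equiv.Perm.mem_support.1 (support_finRotate_of_le hk ▸ mem_univ i) (hv h).symm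
      calc #{c ∈ bergeCycles k H | c.1 = v}
          ≤ #(Fintype.piFinset B) := by
            refine card_le_card_of_injOn Prod.snd (fun c hc => ?_) fun c hc c' hc' h => ?_
            · rw [mem_coe, mem_filter, mem_bergeCycles] at hc
              obtain ⟨⟨-, -, h⟩, rfl⟩ := hc
              exact mem_coe.2 <| Fintype.mem_piFinset.2 fun i => mem_filter.2 (h i)
            · rw [mem_coe, mem_filter] at hc hc'
              exact Prod.ext (hc.2.trans hc'.2.symm) h
        _ = ∏ i, #(B i) := Fintype.card_piFinset B
        _ ≤ D ^ k := by simpa using prod_le_pow_card univ _ D fun i _ => hB i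
    · rw [filter_eq_empty_iff.2 fun c hc (hcv : c.1 = v) => hv (hcv ▸ (mem_bergeCycles.1 hc).1)]
      exact (card_empty).trans_le (Nat.zero_le _)
  calc #(bergeCycles k H) ≤ D ^ k * #(univ : Finset (Fin k → V)) :=
        card_le_mul_card_image_of_maps_to (fun _ _ => mem_univ _) _ fun v _ => hfiber v
    _ = (Fintype.card V * D) ^ k := by
        rw [card_univ, Fintype.card_fun, Fintype.card_fin, mul_pow, mul_comm]

theorem exists_subset_forall_not_hasBergeCycleLen (A : Finset (Finset V)) {p : ℝ}
    (hp₀ : 0 < p) (hp₁ : p < 1) (g : ℕ) :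
    ∃ H ⊆ A, (∀ k ∈ Icc 2 g, ¬ HasBergeCycleLen H k) ∧
      p * #A - ∑ k ∈ Icc 2 g, p ^ k * #(bergeCycles k A) ≤ #H := by
  let F (S : Finset (Finset V)) : ℝ := #S - ∑ k ∈ Icc 2 g, (#(bergeCycles k S) : ℝ)
  have hexp : ∑ S ∈ A.powerset, bernoulliWeight A p S * F S
      = p * #A - ∑ k ∈ Icc 2 g, p ^ k * #(bergeCycles k A) := by
    simp_rw [F, mul_sub, sum_sub_distrib, mul_sum]
    rw [sum_comm (s := A.powerset)]
    congr 1
    · have hcard : ∀ S ∈ A.powerset, (#S : ℝ) = #{e ∈ A | {e} ⊆ S} := fun S hS => by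
        simp_rw [singleton_subset_iff, filter_mem_eq_inter, inter_eq_right.2 (mem_powerset.1 hS)]
      rw [sum_congr rfl fun S hS => by rw [hcard S hS]]
      simpa using sum_bernoulliWeight_mul_card_filter_subset A p A (fun e => {e}) (k := 1)
        fun e he => ⟨singleton_subset_iff.2 he, card_singleton e⟩
    · refine sum_congr rfl fun k _ => ?_
      rw [sum_congr rfl fun S hS => by rw [bergeCycles_eq_filter (mem_powerset.1 hS)]]
      exact sum_bernoulliWeight_mul_card_filter_subset A p _ _
        fun c hc => image_snd_subset_and_card_of_mem_bergeCycles hc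
  obtain ⟨S, hSA, hS⟩ := exists_le_of_sum_bernoulliWeight_mul A p hp₀ hp₁ F
  obtain ⟨D, hD, hhit⟩ := exists_card_le_forall_exists_mem
    ((Icc 2 g).sigma fun k => bergeCycles k S) (fun c => univ.image c.2.2) fun c hc =>
      ⟨c.2.2 ⟨0, by have := (mem_Icc.1 (mem_sigma.1 hc).1).1; omega⟩,
        mem_image_of_mem _ (mem_univ _)⟩
  refine ⟨S \ D, sdiff_subset.trans hSA, fun k hk hcyc => ?_, ?_⟩
  · obtain ⟨c, hc⟩ := hasBergeCycleLen_iff.1 hcyc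
    obtain ⟨e, he, heD⟩ :=
      hhit ⟨k, c⟩ (mem_sigma.2 ⟨hk, bergeCycles_mono sdiff_subset hc⟩)
    exact (mem_sdiff.1 ((image_snd_subset_and_card_of_mem_bergeCycles hc).1 he)).2 heD
  · rw [card_sigma] at hD
    have hSD : (#S : ℝ) ≤ #(S \ D) + #D := by exact_mod_cast card_le_card_sdiff_add_card
    have hD' : (#D : ℝ) ≤ ∑ k ∈ Icc 2 g, (#(bergeCycles k S) : ℝ) := by exact_mod_cast hD
    calc _ = _ := hexp.symm
      _ ≤ F S := hS
      _ ≤ #(S \ D) := by simp only [F]; linarith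

end BergeCycle

section Transversal

variable {V : Type*} [Fintype V] {f : ℕ} (χ : V → Fin f)

def transversals : Finset (Finset V) :=
  {e | ∀ j, #{x ∈ e | χ x = j} = 1}

def colorSections : Finset (Fin f → V) :=
  Fintype.piFinset fun j => {x | χ x = j}

variable {χ}

theorem mem_transversals {e : Finset V} :
    e ∈ transversals χ ↔ ∀ j, #{x ∈ e | χ x = j} = 1 := by
  simp [transversals]

theorem mem_colorSections {s : Fin f → V} : s ∈ colorSections χ ↔ ∀ j, χ (s j) = j := by
  simp [colorSections]

theorem mem_image_of_mem_colorSections [DecidableEq V] {s : Fin f → V}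
    (hs : s ∈ colorSections χ) {x : V} :
    x ∈ univ.image s ↔ s (χ x) = x := by
  refine ⟨fun hx => ?_, fun h => mem_image.2 ⟨χ x, mem_univ _, h⟩⟩
  obtain ⟨j, -, rfl⟩ := mem_image.1 hx
  rw [mem_colorSections.1 hs]

theorem transversals_eq_image_colorSections [DecidableEq V] :
    transversals χ = (colorSections χ).image fun s => univ.image s := by
  ext e
  rw [mem_transversals, mem_image]
  constructor
  · intro he
    choose s hs using fun j => card_eq_one.1 (he j)
    have hsj j : s j ∈ e ∧ χ (s j) = j := mem_filter.1 ((hs j).symm ▸ mem_singleton_self _)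
    refine ⟨s, mem_colorSections.2 fun j => (hsj j).2, ?_⟩
    ext x
    refine ⟨fun hx => ?_, fun hx => ?_⟩
    · obtain ⟨j, -, rfl⟩ := mem_image.1 hx
      exact (hsj j).1
    · have : x ∈ ({s (χ x)} : Finset V) := hs (χ x) ▸ mem_filter.2 ⟨hx, rfl⟩
      exact mem_image.2 ⟨χ x, mem_univ _, (mem_singleton.1 this).symm⟩
  · rintro ⟨s, hs, rfl⟩ j
    rw [card_eq_one]
    refine ⟨s j, ext fun x => ?_⟩
    rw [mem_filter, mem_image_of_mem_colorSections hs, mem_singleton]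
    constructor
    · rintro ⟨hx, rfl⟩
      exact hx.symm
    · rintro rfl
      exact ⟨by rw [mem_colorSections.1 hs], mem_colorSections.1 hs j⟩

theorem injOn_image_colorSections [DecidableEq V] :
    Set.InjOn (fun s => univ.image s) (colorSections χ : Set (Fin f → V)) := by
  intro s hs t ht hst
  funext j
  have : s j ∈ univ.image t := by
    rw [← show univ.image s = univ.image t from hst]
    exact mem_image_of_mem s (mem_univ j)
  rw [mem_image_of_mem_colorSections ht, mem_colorSections.1 hs] at this
  exact this.symm

theorem card_transversals [DecidableEq V] : #(transversals χ) = ∏ j, #{x | χ x = j} := by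
  rw [transversals_eq_image_colorSections, card_image_of_injOn injOn_image_colorSections,
    colorSections, Fintype.card_piFinset]

theorem card_of_mem_transversals [DecidableEq V] {e : Finset V} (he : e ∈ transversals χ) :
    #e = f := by
  rw [transversals_eq_image_colorSections, mem_image] at he
  obtain ⟨s, hs, rfl⟩ := he
  rw [card_image_of_injective univ fun i j h => by
    rw [← mem_colorSections.1 hs i, ← mem_colorSections.1 hs j, h], card_univ, Fintype.card_fin]

theorem card_transversals_containing_pair_le [DecidableEq V] {x y : V} (hxy : x ≠ y) :
    #{e ∈ transversals χ | x ∈ e ∧ y ∈ e} ≤ Fintype.card V ^ (f - 2) := by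
  by_cases hc : χ x = χ y
  · rw [filter_eq_empty_iff.2 fun e he hxye => hxy ?_, card_empty]
    · exact Nat.zero_le _
    · have := mem_transversals.1 he (χ x)
      exact card_le_one.1 this.le x (mem_filter.2 ⟨hxye.1, rfl⟩) y
        (mem_filter.2 ⟨hxye.2, hc.symm⟩)
  let t j : Finset V := if j = χ x then {x} else if j = χ y then {y} else univ
  have hsub : {e ∈ transversals χ | x ∈ e ∧ y ∈ e} ⊆
      (Fintype.piFinset t).image fun s => univ.image s := by
    intro e he
    obtain ⟨he, hxe, hye⟩ := mem_filter.1 he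
    rw [transversals_eq_image_colorSections, mem_image] at he
    obtain ⟨s, hs, rfl⟩ := he
    rw [mem_image_of_mem_colorSections hs] at hxe hye
    refine mem_image.2 ⟨s, Fintype.mem_piFinset.2 fun j => ?_, rfl⟩
    by_cases hjx : j = χ x
    · simp [t, hjx, hxe]
    by_cases hjy : j = χ y
    · subst hjy
      simp [t, Ne.symm hc, hye]
    simp [t, hjx, hjy]
  have hy : χ y ∈ univ.erase (χ x) := mem_erase.2 ⟨Ne.symm hc, mem_univ _⟩
  calc #{e ∈ transversals χ | x ∈ e ∧ y ∈ e}
      ≤ ∏ j, #(t j) :=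
        (card_le_card hsub).trans (card_image_le.trans (Fintype.card_piFinset t).le)
    _ = ∏ j ∈ (univ.erase (χ x)).erase (χ y), #(t j) := by
        rw [← mul_prod_erase _ _ (mem_univ (χ x)), ← mul_prod_erase _ _ hy]
        simp [t, Ne.symm hc]
    _ ≤ Fintype.card V ^ #((univ.erase (χ x)).erase (χ y)) :=
        prod_le_pow_card _ _ _ fun j _ => card_le_univ (t j)
    _ = Fintype.card V ^ (f - 2) := by
        rw [card_erase_of_mem hy, card_erase_of_mem (mem_univ _), card_univ, Fintype.card_fin,
          Nat.sub_sub]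

end Transversal

def modColoring (n : ℕ) {f : ℕ} (hf : 0 < f) : Fin n → Fin f :=
  fun x => ⟨x % f, Nat.mod_lt _ hf⟩

theorem div_le_card_filter_modColoring_eq {n f : ℕ} (hf : 0 < f) (j : Fin f) :
    n / f ≤ #{x | modColoring n hf x = j} := by
  have : #{x | modColoring n hf x = j} = n.count (· ≡ j [MOD f]) := by
    rw [Nat.count_eq_card_filter_range, ← card_map Fin.valEmbedding, ← Nat.Iio_eq_range,
      ← Fin.map_valEmbedding_univ, filter_map]
    congr 1
    ext x
    simp [modColoring, Nat.ModEq, Fin.ext_iff, Nat.mod_eq_of_lt j.2]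
  rw [this, Nat.count_modEq_card _ hf]
  exact Nat.le_add_right _ _

section Estimate

variable {f g : ℕ} {N : ℝ}

noncomputable def deletionConst (f g : ℕ) : ℝ := (2 * g * (2 * f) ^ f)⁻¹

noncomputable def keepProb (f g : ℕ) (N : ℝ) : ℝ :=
  deletionConst f g * N ^ (1 / g : ℝ) / N ^ (f - 1)

theorem deletionConst_pos (hf : 1 ≤ f) (hg : 1 ≤ g) : 0 < deletionConst f g := by
  have : (1 : ℝ) ≤ f := by exact_mod_cast hf
  have : (1 : ℝ) ≤ g := by exact_mod_cast hg
  unfold deletionConst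
  positivity

theorem deletionConst_lt_one (hf : 1 ≤ f) (hg : 1 ≤ g) : deletionConst f g < 1 := by
  have hf' : (1 : ℝ) ≤ 2 * f := by
    have : (1 : ℝ) ≤ f := by exact_mod_cast hf
    linarith
  have hg' : (1 : ℝ) ≤ g := by exact_mod_cast hg
  refine inv_lt_one_of_one_lt₀ ?_
  nlinarith [one_le_pow₀ (n := f) hf']

theorem keepProb_pos (hf : 1 ≤ f) (hg : 1 ≤ g) (hN : 1 ≤ N) : 0 < keepProb f g N := by
  have := deletionConst_pos hf hg
  have : 0 < N := by linarith
  unfold keepProb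
  positivity

theorem keepProb_mul_pow (hN : 1 ≤ N) :
    keepProb f g N * N ^ (f - 1) = deletionConst f g * N ^ (1 / g : ℝ) :=
  div_mul_cancel₀ _ (pow_pos (by linarith) _).ne'

theorem rpow_one_div_pow_le (hN : 1 ≤ N) {k : ℕ} (hkg : k ≤ g) :
    (N ^ (1 / g : ℝ)) ^ k ≤ N := by
  rw [← Real.rpow_natCast, ← Real.rpow_mul (by linarith)]
  refine Real.rpow_le_self_of_one_le hN ?_
  rcases Nat.eq_zero_or_pos g with rfl | hg
  · simp
  · rw [one_div_mul_eq_div, div_le_one (by positivity)]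
    exact_mod_cast hkg

theorem keepProb_lt_one (hf : 2 ≤ f) (hg : 1 ≤ g) (hN : 1 ≤ N) : keepProb f g N < 1 := by
  rw [keepProb, div_lt_one (pow_pos (by linarith) _)]
  calc deletionConst f g * N ^ (1 / g : ℝ) < N ^ (1 / g : ℝ) :=
        mul_lt_of_lt_one_left (by positivity) (deletionConst_lt_one (by omega) hg)
    _ ≤ N := by simpa using rpow_one_div_pow_le hN (k := 1) hg
    _ ≤ N ^ (f - 1) := le_self_pow₀ hN (by omega)

theorem keepProb_pow_mul_le (hf : 1 ≤ f) (hg : 1 ≤ g) (hN : 1 ≤ N) {k : ℕ}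
    (hk : k ∈ Icc 2 g) {b : ℝ} (hb : b ≤ (N ^ (f - 1)) ^ k) :
    keepProb f g N ^ k * b ≤ deletionConst f g ^ 2 * N := by
  have hc₀ := deletionConst_pos hf hg
  calc keepProb f g N ^ k * b ≤ keepProb f g N ^ k * (N ^ (f - 1)) ^ k :=
        mul_le_mul_of_nonneg_left hb (pow_nonneg (keepProb_pos hf hg hN).le _)
    _ = deletionConst f g ^ k * (N ^ (1 / g : ℝ)) ^ k := by
        rw [← mul_pow, keepProb_mul_pow hN, mul_pow]
    _ ≤ deletionConst f g ^ 2 * N :=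
        mul_le_mul
          (pow_le_pow_of_le_one hc₀.le (deletionConst_lt_one hf hg).le (mem_Icc.1 hk).1)
          (rpow_one_div_pow_le hN (mem_Icc.1 hk).2) (by positivity) (by positivity)

theorem deletion_estimate (hf : 2 ≤ f) (hg : 1 ≤ g) (hN : 1 ≤ N) {a : ℝ}
    (ha : (N / (2 * f)) ^ f ≤ a) {b : ℕ → ℝ}
    (hb : ∀ k ∈ Icc 2 g, b k ≤ (N ^ (f - 1)) ^ k) :
    deletionConst f g / (2 * (2 * f) ^ f) * N ^ (1 + 1 / g : ℝ)
      ≤ keepProb f g N * a - ∑ k ∈ Icc 2 g, keepProb f g N ^ k * b k := by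
  set c₀ := deletionConst f g
  set p := keepProb f g N
  have hc₀ : 0 < c₀ := deletionConst_pos (by omega) hg
  have hN₀ : 0 < N := by linarith
  have hf₀ : (0 : ℝ) < 2 * f := by positivity
  have hg₀ : (0 : ℝ) < g := by exact_mod_cast hg
  have hgc₀ : (g : ℝ) * c₀ = (2 * (2 * (f : ℝ)) ^ f)⁻¹ := by
    simp only [c₀, deletionConst]
    field_simp
  have hNpow : N ^ (1 + 1 / g : ℝ) = N ^ (1 / g : ℝ) * N := by
    rw [Real.rpow_add hN₀, Real.rpow_one, mul_comm]
  have hmain : c₀ / (2 * f) ^ f * N ^ (1 + 1 / g : ℝ) ≤ p * a := by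
    calc c₀ / (2 * f) ^ f * N ^ (1 + 1 / g : ℝ) = p * N ^ (f - 1) * N / (2 * f) ^ f := by
          rw [keepProb_mul_pow hN, hNpow]; ring
      _ = p * (N / (2 * f)) ^ f := by
          rw [div_pow, mul_assoc, ← pow_succ, Nat.sub_add_cancel (by omega)]; ring
      _ ≤ p * a := mul_le_mul_of_nonneg_left ha (keepProb_pos (by omega) hg hN).le
  have hsum : ∑ k ∈ Icc 2 g, p ^ k * b k ≤ c₀ / (2 * (2 * f) ^ f) * N := by
    calc ∑ k ∈ Icc 2 g, p ^ k * b k ≤ ∑ _k ∈ Icc 2 g, c₀ ^ 2 * N :=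
          sum_le_sum fun k hk => keepProb_pow_mul_le (by omega) hg hN hk (hb k hk)
      _ ≤ g * (c₀ ^ 2 * N) := by
          rw [sum_const, nsmul_eq_mul, Nat.card_Icc]
          gcongr
          exact_mod_cast Nat.sub_le_of_le_add (by omega)
      _ = c₀ / (2 * (2 * f) ^ f) * N := by
          rw [div_eq_mul_inv, ← hgc₀]; ring
  have hN₁ : N ≤ N ^ (1 + 1 / g : ℝ) := Real.self_le_rpow_of_one_le hN (by simp)
  have : c₀ / (2 * (2 * f) ^ f) * N ≤ c₀ / (2 * (2 * f) ^ f) * N ^ (1 + 1 / g : ℝ) :=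
    mul_le_mul_of_nonneg_left hN₁ (by positivity)
  have : c₀ / (2 * f) ^ f = 2 * (c₀ / (2 * (2 * f) ^ f)) := by field_simp
  nlinarith

end Estimate

theorem div_two_mul_le_natCast_div {n f : ℕ} (hf : 0 < f) (hfn : f ≤ n) :
    (n : ℝ) / (2 * f) ≤ (n / f : ℕ) := by
  have h₁ : n < f * (n / f + 1) := Nat.lt_mul_div_succ n hf
  have h₂ : 1 ≤ n / f := (Nat.one_le_div_iff hf).2 hfn
  rw [div_le_iff₀ (by positivity)]
  exact_mod_cast (show n ≤ n / f * (2 * f) by nlinarith)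

theorem stmt_13 (f g : ℕ) (hf : 2 ≤ f) (hg : 2 ≤ g) :
    ∃ c : ℝ, 0 < c ∧ ∀ n : ℕ, f ≤ n →
      ∃ (H : Finset (Finset (Fin n))) (χ : Fin n → Fin f),
        (∀ e ∈ H, e.card = f) ∧
        (∀ e ∈ H, ∀ p : Fin f, (e.filter fun x => χ x = p).card = 1) ∧
        c * (n : ℝ) ^ (1 + 1 / (g : ℝ)) ≤ (H.card : ℝ) ∧
        ∀ k : ℕ, 2 ≤ k → k ≤ g → ¬ HasBergeCycleLen H k := by
  refine ⟨deletionConst f g / (2 * (2 * f) ^ f),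
    div_pos (deletionConst_pos (by omega) (by omega)) (by positivity), fun n hn => ?_⟩
  have hf₀ : 0 < f := by omega
  have hN : (1 : ℝ) ≤ n := Nat.one_le_cast.2 (by omega)
  set χ := modColoring n hf₀
  obtain ⟨H, hHA, hfree, hH⟩ := exists_subset_forall_not_hasBergeCycleLen (transversals χ)
    (keepProb_pos (f := f) (g := g) (by omega) (by omega) hN)
    (keepProb_lt_one hf (by omega) hN) g
  refine ⟨H, χ, fun e he => card_of_mem_transversals (hHA he),
    fun e he => mem_transversals.1 (hHA he), (deletion_estimate hf (by omega) hN ?_ ?_).trans hH,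
    fun k hk hkg => hfree k (mem_Icc.2 ⟨hk, hkg⟩)⟩
  · have hA : (n / f) ^ f ≤ #(transversals χ) := by
      simpa [card_transversals] using
        pow_card_le_prod univ _ _ fun j _ => div_le_card_filter_modColoring_eq hf₀ j
    calc ((n : ℝ) / (2 * f)) ^ f ≤ ((n / f : ℕ) : ℝ) ^ f :=
          pow_le_pow_left₀ (by positivity) (div_two_mul_le_natCast_div hf₀ hn) f
      _ ≤ #(transversals χ) := by exact_mod_cast hA
  · intro k hk
    have := card_bergeCycles_le (mem_Icc.1 hk).1 fun x y hxy =>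
      card_transversals_containing_pair_le (χ := χ) hxy
    rw [Fintype.card_fin, ← pow_succ', show f - 2 + 1 = f - 1 by omega] at this
    exact_mod_cast this
end

section
/- Let G be a graph, T a K₃-forest (a graph built from triangles, each new triangle sharing at most one vertex with the previous graph), and T* the graph of Construction applied to T (each vertex v of T is blown up to {v} × {1,2}^m where m is the number of triangles, with edges determined by matching coordinates on the unique triangle containing each edge). Then T* contains no odd cycle of length at most 7. -/
/-- The vertex set of a triangle given as a triple. -/
def tripleVerts {V : Type*} (s : V × V × V) : Set V := {s.1, s.2.1, s.2.2}

/-- The triangle graph on the triple `s`. -/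
def triGraph {V : Type*} (s : V × V × V) : SimpleGraph V :=
  SimpleGraph.fromRel (fun a b =>
    (a = s.1 ∧ b = s.2.1) ∨ (a = s.2.1 ∧ b = s.2.2) ∨ (a = s.1 ∧ b = s.2.2))

/-- `T` is a `K₃`-forest: `T` is the union of a sequence of triangles, each with three
distinct vertices, each sharing at most one vertex with the union of the previous ones. -/
def IsK3Forest {V : Type*} (T : SimpleGraph V) : Prop :=
  ∃ l : List (V × V × V),
    (∀ i : Fin l.length,
      ((l.get i).1 ≠ (l.get i).2.1 ∧ (l.get i).2.1 ≠ (l.get i).2.2 ∧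
        (l.get i).1 ≠ (l.get i).2.2) ∧
      Set.Subsingleton
        (tripleVerts (l.get i) ∩ ⋃ (j : Fin l.length) (_ : j < i), tripleVerts (l.get j))) ∧
    T = l.foldr (fun s g => triGraph s ⊔ g) ⊥

/-- Both `u` and `v` are vertices of the triangle `s`. -/
def inTri {V : Type*} (u v : V) (s : V × V × V) : Prop :=
  u ∈ tripleVerts s ∧ v ∈ tripleVerts s

/-- The relation generating the graph `T⋆` of the Construction: `(u,x)` and `(v,y)` are
joined iff `uv ∈ E(T)` and, for the (unique) triangle `tri k` containing `uv`, the `k`-th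
coordinates match the labels of the edge `uv` at `u` and at `v` respectively. -/
def TstarRel {V : Type*} (T : SimpleGraph V) (m : ℕ) (tri : Fin m → V × V × V)
    (lab : V → V → Fin 2) :
    (V × (Fin m → Fin 2)) → (V × (Fin m → Fin 2)) → Prop :=
  fun p q => T.Adj p.1 q.1 ∧
    ∀ k, inTri p.1 q.1 (tri k) → (p.2 k = lab p.1 q.1 ∧ q.2 k = lab q.1 p.1)

/-- The graph `T⋆` given by the Construction applied to `T`. -/
def Tstar {V : Type*} (T : SimpleGraph V) (m : ℕ) (tri : Fin m → V × V × V)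
    (lab : V → V → Fin 2) : SimpleGraph (V × (Fin m → Fin 2)) :=
  SimpleGraph.fromRel (TstarRel T m tri lab)

/-! ### Auxiliary material -/

section Decidable

/-- swap `a` and `0`. -/
def swN (a t : ℕ) : ℕ := if t = a then 0 else if t = 0 then a else t

lemma swN_inj (a t t' : ℕ) : swN a t = swN a t' ↔ t = t' := by
  unfold swN; split_ifs <;> omega

lemma swN_lt (a t : ℕ) (ha : a < 4) (ht : t < 4) : swN a t < 4 := by
  unfold swN; split_ifs <;> omega

lemma swN_self (a : ℕ) : swN a a = 0 := by simp [swN]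

def allup (f : ℕ → Bool) (lo : ℕ) : (k : ℕ) → Bool
  | 0 => f lo
  | k+1 => allup f lo k && allup f (lo + 2^k) k

lemma allup_spec (f : ℕ → Bool) : ∀ (k lo N : ℕ), lo ≤ N → N < lo + 2^k →
    allup f lo k = true → f N = true := by
  intro k
  induction k with
  | zero =>
    intro lo N h1 h2 h
    have : N = lo := by simp at h2; omega
    subst this; exact h
  | succ k ih =>
    intro lo N h1 h2 h
    simp only [allup, Bool.and_eq_true] at h
    rcases le_or_gt (lo + 2^k) N with hc | hc
    · exact ih _ N hc (by rw [pow_succ] at h2; omega) h.2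
    · exact ih lo N h1 hc h.1

end Decidable

def chkA3 (d0 d1 d2 : ℕ) : Bool :=
  ((if d0 == d1 then 0 else 1) + (if d1 == d2 then 0 else 1) + (if d2 == d0 then 0 else 1)) % 2 == 0
  || ((!(d0 == d1) && (!(d1 == d2) && !(d0 == d2)))
  || ((!(d1 == d2) && (!(d2 == d0) && !(d1 == d0)))
  || ((!(d2 == d0) && (!(d0 == d1) && !(d2 == d1)))
  || ((!(d0 == d1) && ((d1 == d2) && !(d2 == d0)))
  || ((!(d1 == d2) && ((d2 == d0) && !(d0 == d1)))
  || ((!(d2 == d0) && ((d0 == d1) && !(d1 == d2)))))))))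

def chk3 (N : ℕ) : Bool := chkA3 (N / 16 % 4) (N / 4 % 4) (N % 4)

def chkA5 (d0 d1 d2 d3 d4 : ℕ) : Bool :=
  ((if d0 == d1 then 0 else 1) + (if d1 == d2 then 0 else 1) + (if d2 == d3 then 0 else 1) + (if d3 == d4 then 0 else 1) + (if d4 == d0 then 0 else 1)) % 2 == 0
  || ((!(d0 == d1) && (!(d1 == d2) && !(d0 == d2)))
  || ((!(d1 == d2) && (!(d2 == d3) && !(d1 == d3)))
  || ((!(d2 == d3) && (!(d3 == d4) && !(d2 == d4)))
  || ((!(d3 == d4) && (!(d4 == d0) && !(d3 == d0)))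
  || ((!(d4 == d0) && (!(d0 == d1) && !(d4 == d1)))
  || ((!(d0 == d1) && ((d1 == d2) && !(d2 == d3)))
  || ((!(d1 == d2) && ((d2 == d3) && !(d3 == d4)))
  || ((!(d2 == d3) && ((d3 == d4) && !(d4 == d0)))
  || ((!(d3 == d4) && ((d4 == d0) && !(d0 == d1)))
  || ((!(d4 == d0) && ((d0 == d1) && !(d1 == d2)))))))))))))

def chk5 (N : ℕ) : Bool := chkA5 (N / 256 % 4) (N / 64 % 4) (N / 16 % 4) (N / 4 % 4) (N % 4)

def chkA7 (d0 d1 d2 d3 d4 d5 d6 : ℕ) : Bool :=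
  ((if d0 == d1 then 0 else 1) + (if d1 == d2 then 0 else 1) + (if d2 == d3 then 0 else 1) + (if d3 == d4 then 0 else 1) + (if d4 == d5 then 0 else 1) + (if d5 == d6 then 0 else 1) + (if d6 == d0 then 0 else 1)) % 2 == 0
  || ((!(d0 == d1) && (!(d1 == d2) && !(d0 == d2)))
  || ((!(d1 == d2) && (!(d2 == d3) && !(d1 == d3)))
  || ((!(d2 == d3) && (!(d3 == d4) && !(d2 == d4)))
  || ((!(d3 == d4) && (!(d4 == d5) && !(d3 == d5)))
  || ((!(d4 == d5) && (!(d5 == d6) && !(d4 == d6)))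
  || ((!(d5 == d6) && (!(d6 == d0) && !(d5 == d0)))
  || ((!(d6 == d0) && (!(d0 == d1) && !(d6 == d1)))
  || ((!(d0 == d1) && ((d1 == d2) && !(d2 == d3)))
  || ((!(d1 == d2) && ((d2 == d3) && !(d3 == d4)))
  || ((!(d2 == d3) && ((d3 == d4) && !(d4 == d5)))
  || ((!(d3 == d4) && ((d4 == d5) && !(d5 == d6)))
  || ((!(d4 == d5) && ((d5 == d6) && !(d6 == d0)))
  || ((!(d5 == d6) && ((d6 == d0) && !(d0 == d1)))
  || ((!(d6 == d0) && ((d0 == d1) && !(d1 == d2)))))))))))))))))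

def chk7 (N : ℕ) : Bool := chkA7 (N / 4096 % 4) (N / 1024 % 4) (N / 256 % 4) (N / 64 % 4) (N / 16 % 4) (N / 4 % 4) (N % 4)


set_option maxHeartbeats 1000000 in
lemma chk3_alltrue : allup chk3 0 4 = true := by decide

set_option maxHeartbeats 1000000 in
lemma chk5_alltrue : allup chk5 0 8 = true := by decide

set_option maxHeartbeats 4000000 in
lemma chk7_alltrue : allup chk7 0 12 = true := by decide

lemma chk3_all (N : ℕ) (h : N < 16) : chk3 N = true :=
  allup_spec chk3 4 0 N (Nat.zero_le _) (by norm_num; omega) chk3_alltrue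

lemma chk5_all (N : ℕ) (h : N < 256) : chk5 N = true :=
  allup_spec chk5 8 0 N (Nat.zero_le _) (by norm_num; omega) chk5_alltrue

lemma chk7_all (N : ℕ) (h : N < 4096) : chk7 N = true :=
  allup_spec chk7 12 0 N (Nat.zero_le _) (by norm_num; omega) chk7_alltrue

lemma abs3 (g : ℕ → ℕ) (hlt : ∀ i, g i < 4) (hper : ∀ i, g (i + 3) = g i)
    (hB3 : ∀ i, g i ≠ g (i+1) → g (i+1) ≠ g (i+2) → g i = g (i+2))
    (hB5 : ∀ i, g i ≠ g (i+1) → g (i+1) = g (i+2) → g (i+2) ≠ g (i+3) → False)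
    (h0 : g 0 = 0)
    (hodd : Odd (((Finset.range 3).filter (fun i => g i ≠ g (i+1))).card)) : False := by
  have w3 : g 3 = g 0 := by simpa using hper 0
  have w4 : g 4 = g 1 := by simpa using hper 1
  have w5 : g 5 = g 2 := by simpa using hper 2
  have B3_0 : g 0 ≠ g 1 → g 1 ≠ g 2 → g 0 = g 2 := by
    have h := hB3 0; simp only [Nat.reduceAdd, w3, w4, w5] at h; exact h
  have B3_1 : g 1 ≠ g 2 → g 2 ≠ g 0 → g 1 = g 0 := by
    have h := hB3 1; simp only [Nat.reduceAdd, w3, w4, w5] at h; exact h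
  have B3_2 : g 2 ≠ g 0 → g 0 ≠ g 1 → g 2 = g 1 := by
    have h := hB3 2; simp only [Nat.reduceAdd, w3, w4, w5] at h; exact h
  have B5_0 : g 0 ≠ g 1 → g 1 = g 2 → g 2 ≠ g 0 → False := by
    have h := hB5 0; simp only [Nat.reduceAdd, w3, w4, w5] at h; exact h
  have B5_1 : g 1 ≠ g 2 → g 2 = g 0 → g 0 ≠ g 1 → False := by
    have h := hB5 1; simp only [Nat.reduceAdd, w3, w4, w5] at h; exact h
  have B5_2 : g 2 ≠ g 0 → g 0 = g 1 → g 1 ≠ g 2 → False := by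
    have h := hB5 2; simp only [Nat.reduceAdd, w3, w4, w5] at h; exact h
  have hsum : Odd (((if g 0 = g 1 then 0 else 1) + (if g 1 = g 2 then 0 else 1) + (if g 2 = g 0 then 0 else 1) : ℕ)) := by
    have h := hodd
    rw [Finset.card_filter] at h
    simp only [Finset.sum_range_succ, Finset.sum_range_zero, Nat.reduceAdd, w3, w4, w5, ne_eq, ite_not, zero_add] at h
    exact h
  set N : ℕ := 16 * g 0 + 4 * g 1 + g 2 with hN
  have hNlt : N < 16 := by have := hlt 0; have := hlt 1; have := hlt 2; omega
  have hc : chk3 N = true := chk3_all N hNlt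
  unfold chk3 at hc
  have hd0 : N / 16 % 4 = g 0 := by have := hlt 0; have := hlt 1; have := hlt 2; omega
  have hd1 : N / 4 % 4 = g 1 := by have := hlt 0; have := hlt 1; have := hlt 2; omega
  have hd2 : N % 4 = g 2 := by have := hlt 0; have := hlt 1; have := hlt 2; omega
  rw [hd0, hd1, hd2] at hc
  unfold chkA3 at hc
  simp only [Bool.or_eq_true, Bool.and_eq_true, Bool.not_eq_true', beq_eq_false_iff_ne, beq_iff_eq, ne_eq] at hc
  rcases hc with hc | hc | hc | hc | hc | hc | hc
  · rw [Nat.odd_iff] at hsum; omega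
  · exact hc.2.2 (B3_0 hc.1 hc.2.1)
  · exact hc.2.2 (B3_1 hc.1 hc.2.1)
  · exact hc.2.2 (B3_2 hc.1 hc.2.1)
  · exact B5_0 hc.1 hc.2.1 hc.2.2
  · exact B5_1 hc.1 hc.2.1 hc.2.2
  · exact B5_2 hc.1 hc.2.1 hc.2.2

lemma abs5 (g : ℕ → ℕ) (hlt : ∀ i, g i < 4) (hper : ∀ i, g (i + 5) = g i)
    (hB3 : ∀ i, g i ≠ g (i+1) → g (i+1) ≠ g (i+2) → g i = g (i+2))
    (hB5 : ∀ i, g i ≠ g (i+1) → g (i+1) = g (i+2) → g (i+2) ≠ g (i+3) → False)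
    (h0 : g 0 = 0)
    (hodd : Odd (((Finset.range 5).filter (fun i => g i ≠ g (i+1))).card)) : False := by
  have w5 : g 5 = g 0 := by simpa using hper 0
  have w6 : g 6 = g 1 := by simpa using hper 1
  have w7 : g 7 = g 2 := by simpa using hper 2
  have B3_0 : g 0 ≠ g 1 → g 1 ≠ g 2 → g 0 = g 2 := by
    have h := hB3 0; simp only [Nat.reduceAdd, w5, w6, w7] at h; exact h
  have B3_1 : g 1 ≠ g 2 → g 2 ≠ g 3 → g 1 = g 3 := by
    have h := hB3 1; simp only [Nat.reduceAdd, w5, w6, w7] at h; exact h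
  have B3_2 : g 2 ≠ g 3 → g 3 ≠ g 4 → g 2 = g 4 := by
    have h := hB3 2; simp only [Nat.reduceAdd, w5, w6, w7] at h; exact h
  have B3_3 : g 3 ≠ g 4 → g 4 ≠ g 0 → g 3 = g 0 := by
    have h := hB3 3; simp only [Nat.reduceAdd, w5, w6, w7] at h; exact h
  have B3_4 : g 4 ≠ g 0 → g 0 ≠ g 1 → g 4 = g 1 := by
    have h := hB3 4; simp only [Nat.reduceAdd, w5, w6, w7] at h; exact h
  have B5_0 : g 0 ≠ g 1 → g 1 = g 2 → g 2 ≠ g 3 → False := by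
    have h := hB5 0; simp only [Nat.reduceAdd, w5, w6, w7] at h; exact h
  have B5_1 : g 1 ≠ g 2 → g 2 = g 3 → g 3 ≠ g 4 → False := by
    have h := hB5 1; simp only [Nat.reduceAdd, w5, w6, w7] at h; exact h
  have B5_2 : g 2 ≠ g 3 → g 3 = g 4 → g 4 ≠ g 0 → False := by
    have h := hB5 2; simp only [Nat.reduceAdd, w5, w6, w7] at h; exact h
  have B5_3 : g 3 ≠ g 4 → g 4 = g 0 → g 0 ≠ g 1 → False := by
    have h := hB5 3; simp only [Nat.reduceAdd, w5, w6, w7] at h; exact h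
  have B5_4 : g 4 ≠ g 0 → g 0 = g 1 → g 1 ≠ g 2 → False := by
    have h := hB5 4; simp only [Nat.reduceAdd, w5, w6, w7] at h; exact h
  have hsum : Odd (((if g 0 = g 1 then 0 else 1) + (if g 1 = g 2 then 0 else 1) + (if g 2 = g 3 then 0 else 1) + (if g 3 = g 4 then 0 else 1) + (if g 4 = g 0 then 0 else 1) : ℕ)) := by
    have h := hodd
    rw [Finset.card_filter] at h
    simp only [Finset.sum_range_succ, Finset.sum_range_zero, Nat.reduceAdd, w5, w6, w7, ne_eq, ite_not, zero_add] at h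
    exact h
  set N : ℕ := 256 * g 0 + 64 * g 1 + 16 * g 2 + 4 * g 3 + g 4 with hN
  have hNlt : N < 256 := by have := hlt 0; have := hlt 1; have := hlt 2; have := hlt 3; have := hlt 4; omega
  have hc : chk5 N = true := chk5_all N hNlt
  unfold chk5 at hc
  have hd0 : N / 256 % 4 = g 0 := by have := hlt 0; have := hlt 1; have := hlt 2; have := hlt 3; have := hlt 4; omega
  have hd1 : N / 64 % 4 = g 1 := by have := hlt 0; have := hlt 1; have := hlt 2; have := hlt 3; have := hlt 4; omega
  have hd2 : N / 16 % 4 = g 2 := by have := hlt 0; have := hlt 1; have := hlt 2; have := hlt 3; have := hlt 4; omega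
  have hd3 : N / 4 % 4 = g 3 := by have := hlt 0; have := hlt 1; have := hlt 2; have := hlt 3; have := hlt 4; omega
  have hd4 : N % 4 = g 4 := by have := hlt 0; have := hlt 1; have := hlt 2; have := hlt 3; have := hlt 4; omega
  rw [hd0, hd1, hd2, hd3, hd4] at hc
  unfold chkA5 at hc
  simp only [Bool.or_eq_true, Bool.and_eq_true, Bool.not_eq_true', beq_eq_false_iff_ne, beq_iff_eq, ne_eq] at hc
  rcases hc with hc | hc | hc | hc | hc | hc | hc | hc | hc | hc | hc
  · rw [Nat.odd_iff] at hsum; omega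
  · exact hc.2.2 (B3_0 hc.1 hc.2.1)
  · exact hc.2.2 (B3_1 hc.1 hc.2.1)
  · exact hc.2.2 (B3_2 hc.1 hc.2.1)
  · exact hc.2.2 (B3_3 hc.1 hc.2.1)
  · exact hc.2.2 (B3_4 hc.1 hc.2.1)
  · exact B5_0 hc.1 hc.2.1 hc.2.2
  · exact B5_1 hc.1 hc.2.1 hc.2.2
  · exact B5_2 hc.1 hc.2.1 hc.2.2
  · exact B5_3 hc.1 hc.2.1 hc.2.2
  · exact B5_4 hc.1 hc.2.1 hc.2.2

lemma abs7 (g : ℕ → ℕ) (hlt : ∀ i, g i < 4) (hper : ∀ i, g (i + 7) = g i)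
    (hB3 : ∀ i, g i ≠ g (i+1) → g (i+1) ≠ g (i+2) → g i = g (i+2))
    (hB5 : ∀ i, g i ≠ g (i+1) → g (i+1) = g (i+2) → g (i+2) ≠ g (i+3) → False)
    (h0 : g 0 = 0)
    (hodd : Odd (((Finset.range 7).filter (fun i => g i ≠ g (i+1))).card)) : False := by
  have w7 : g 7 = g 0 := by simpa using hper 0
  have w8 : g 8 = g 1 := by simpa using hper 1
  have w9 : g 9 = g 2 := by simpa using hper 2
  have B3_0 : g 0 ≠ g 1 → g 1 ≠ g 2 → g 0 = g 2 := by
    have h := hB3 0; simp only [Nat.reduceAdd, w7, w8, w9] at h; exact h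
  have B3_1 : g 1 ≠ g 2 → g 2 ≠ g 3 → g 1 = g 3 := by
    have h := hB3 1; simp only [Nat.reduceAdd, w7, w8, w9] at h; exact h
  have B3_2 : g 2 ≠ g 3 → g 3 ≠ g 4 → g 2 = g 4 := by
    have h := hB3 2; simp only [Nat.reduceAdd, w7, w8, w9] at h; exact h
  have B3_3 : g 3 ≠ g 4 → g 4 ≠ g 5 → g 3 = g 5 := by
    have h := hB3 3; simp only [Nat.reduceAdd, w7, w8, w9] at h; exact h
  have B3_4 : g 4 ≠ g 5 → g 5 ≠ g 6 → g 4 = g 6 := by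
    have h := hB3 4; simp only [Nat.reduceAdd, w7, w8, w9] at h; exact h
  have B3_5 : g 5 ≠ g 6 → g 6 ≠ g 0 → g 5 = g 0 := by
    have h := hB3 5; simp only [Nat.reduceAdd, w7, w8, w9] at h; exact h
  have B3_6 : g 6 ≠ g 0 → g 0 ≠ g 1 → g 6 = g 1 := by
    have h := hB3 6; simp only [Nat.reduceAdd, w7, w8, w9] at h; exact h
  have B5_0 : g 0 ≠ g 1 → g 1 = g 2 → g 2 ≠ g 3 → False := by
    have h := hB5 0; simp only [Nat.reduceAdd, w7, w8, w9] at h; exact h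
  have B5_1 : g 1 ≠ g 2 → g 2 = g 3 → g 3 ≠ g 4 → False := by
    have h := hB5 1; simp only [Nat.reduceAdd, w7, w8, w9] at h; exact h
  have B5_2 : g 2 ≠ g 3 → g 3 = g 4 → g 4 ≠ g 5 → False := by
    have h := hB5 2; simp only [Nat.reduceAdd, w7, w8, w9] at h; exact h
  have B5_3 : g 3 ≠ g 4 → g 4 = g 5 → g 5 ≠ g 6 → False := by
    have h := hB5 3; simp only [Nat.reduceAdd, w7, w8, w9] at h; exact h
  have B5_4 : g 4 ≠ g 5 → g 5 = g 6 → g 6 ≠ g 0 → False := by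
    have h := hB5 4; simp only [Nat.reduceAdd, w7, w8, w9] at h; exact h
  have B5_5 : g 5 ≠ g 6 → g 6 = g 0 → g 0 ≠ g 1 → False := by
    have h := hB5 5; simp only [Nat.reduceAdd, w7, w8, w9] at h; exact h
  have B5_6 : g 6 ≠ g 0 → g 0 = g 1 → g 1 ≠ g 2 → False := by
    have h := hB5 6; simp only [Nat.reduceAdd, w7, w8, w9] at h; exact h
  have hsum : Odd (((if g 0 = g 1 then 0 else 1) + (if g 1 = g 2 then 0 else 1) + (if g 2 = g 3 then 0 else 1) + (if g 3 = g 4 then 0 else 1) + (if g 4 = g 5 then 0 else 1) + (if g 5 = g 6 then 0 else 1) + (if g 6 = g 0 then 0 else 1) : ℕ)) := by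
    have h := hodd
    rw [Finset.card_filter] at h
    simp only [Finset.sum_range_succ, Finset.sum_range_zero, Nat.reduceAdd, w7, w8, w9, ne_eq, ite_not, zero_add] at h
    exact h
  set N : ℕ := 4096 * g 0 + 1024 * g 1 + 256 * g 2 + 64 * g 3 + 16 * g 4 + 4 * g 5 + g 6 with hN
  have hNlt : N < 4096 := by have := hlt 0; have := hlt 1; have := hlt 2; have := hlt 3; have := hlt 4; have := hlt 5; have := hlt 6; omega
  have hc : chk7 N = true := chk7_all N hNlt
  unfold chk7 at hc
  have hd0 : N / 4096 % 4 = g 0 := by have := hlt 0; have := hlt 1; have := hlt 2; have := hlt 3; have := hlt 4; have := hlt 5; have := hlt 6; omega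
  have hd1 : N / 1024 % 4 = g 1 := by have := hlt 0; have := hlt 1; have := hlt 2; have := hlt 3; have := hlt 4; have := hlt 5; have := hlt 6; omega
  have hd2 : N / 256 % 4 = g 2 := by have := hlt 0; have := hlt 1; have := hlt 2; have := hlt 3; have := hlt 4; have := hlt 5; have := hlt 6; omega
  have hd3 : N / 64 % 4 = g 3 := by have := hlt 0; have := hlt 1; have := hlt 2; have := hlt 3; have := hlt 4; have := hlt 5; have := hlt 6; omega
  have hd4 : N / 16 % 4 = g 4 := by have := hlt 0; have := hlt 1; have := hlt 2; have := hlt 3; have := hlt 4; have := hlt 5; have := hlt 6; omega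
  have hd5 : N / 4 % 4 = g 5 := by have := hlt 0; have := hlt 1; have := hlt 2; have := hlt 3; have := hlt 4; have := hlt 5; have := hlt 6; omega
  have hd6 : N % 4 = g 6 := by have := hlt 0; have := hlt 1; have := hlt 2; have := hlt 3; have := hlt 4; have := hlt 5; have := hlt 6; omega
  rw [hd0, hd1, hd2, hd3, hd4, hd5, hd6] at hc
  unfold chkA7 at hc
  simp only [Bool.or_eq_true, Bool.and_eq_true, Bool.not_eq_true', beq_eq_false_iff_ne, beq_iff_eq, ne_eq] at hc
  rcases hc with hc | hc | hc | hc | hc | hc | hc | hc | hc | hc | hc | hc | hc | hc | hc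
  · rw [Nat.odd_iff] at hsum; omega
  · exact hc.2.2 (B3_0 hc.1 hc.2.1)
  · exact hc.2.2 (B3_1 hc.1 hc.2.1)
  · exact hc.2.2 (B3_2 hc.1 hc.2.1)
  · exact hc.2.2 (B3_3 hc.1 hc.2.1)
  · exact hc.2.2 (B3_4 hc.1 hc.2.1)
  · exact hc.2.2 (B3_5 hc.1 hc.2.1)
  · exact hc.2.2 (B3_6 hc.1 hc.2.1)
  · exact B5_0 hc.1 hc.2.1 hc.2.2
  · exact B5_1 hc.1 hc.2.1 hc.2.2
  · exact B5_2 hc.1 hc.2.1 hc.2.2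
  · exact B5_3 hc.1 hc.2.1 hc.2.2
  · exact B5_4 hc.1 hc.2.1 hc.2.2
  · exact B5_5 hc.1 hc.2.1 hc.2.2
  · exact B5_6 hc.1 hc.2.1 hc.2.2


lemma absN (n : ℕ) (hn : n = 3 ∨ n = 5 ∨ n = 7) (g : ℕ → ℕ) (hlt : ∀ i, g i < 4)
    (hper : ∀ i, g (i + n) = g i)
    (hB3 : ∀ i, g i ≠ g (i+1) → g (i+1) ≠ g (i+2) → g i = g (i+2))
    (hB5 : ∀ i, g i ≠ g (i+1) → g (i+1) = g (i+2) → g (i+2) ≠ g (i+3) → False)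
    (hodd : Odd (((Finset.range n).filter (fun i => g i ≠ g (i+1))).card)) : False := by
  set g' : ℕ → ℕ := fun i => swN (g 0) (g i) with hg'
  have hinj : ∀ i i', g' i = g' i' ↔ g i = g i' := fun i i' => swN_inj _ _ _
  have hlt' : ∀ i, g' i < 4 := fun i => swN_lt _ _ (hlt 0) (hlt i)
  have h0 : g' 0 = 0 := swN_self _
  have hper' : ∀ i, g' (i + n) = g' i := fun i => by
    simp only [hg']; rw [hper i]
  have hB3' : ∀ i, g' i ≠ g' (i+1) → g' (i+1) ≠ g' (i+2) → g' i = g' (i+2) := by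
    intro i h1 h2
    exact (hinj _ _).2 (hB3 i (fun e => h1 ((hinj _ _).2 e)) (fun e => h2 ((hinj _ _).2 e)))
  have hB5' : ∀ i, g' i ≠ g' (i+1) → g' (i+1) = g' (i+2) → g' (i+2) ≠ g' (i+3) → False := by
    intro i h1 h2 h3
    exact hB5 i (fun e => h1 ((hinj _ _).2 e)) ((hinj _ _).1 h2) (fun e => h3 ((hinj _ _).2 e))
  have hodd' : Odd (((Finset.range n).filter (fun i => g' i ≠ g' (i+1))).card) := by
    have he : (Finset.range n).filter (fun i => g' i ≠ g' (i+1)) =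
        (Finset.range n).filter (fun i => g i ≠ g (i+1)) := by
      apply Finset.filter_congr
      intro i _
      exact not_congr (hinj _ _)
    rw [he]; exact hodd
  rcases hn with rfl | rfl | rfl
  · exact abs3 g' hlt' hper' hB3' hB5' h0 hodd'
  · exact abs5 g' hlt' hper' hB3' hB5' h0 hodd'
  · exact abs7 g' hlt' hper' hB3' hB5' h0 hodd'

section GraphAux

variable {V : Type*}

lemma triGraph_mem {s : V × V × V} {a b : V} (h : (triGraph s).Adj a b) :
    a ∈ tripleVerts s ∧ b ∈ tripleVerts s := by
  rw [triGraph, SimpleGraph.fromRel_adj] at h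
  obtain ⟨-, h⟩ := h
  rcases h with (⟨rfl, rfl⟩ | ⟨rfl, rfl⟩ | ⟨rfl, rfl⟩) | (⟨rfl, rfl⟩ | ⟨rfl, rfl⟩ | ⟨rfl, rfl⟩) <;>
    simp [tripleVerts]

lemma foldr_adj (l : List (V × V × V)) (a b : V) :
    (l.foldr (fun s g => triGraph s ⊔ g) ⊥).Adj a b ↔
      ∃ i : Fin l.length, (triGraph (l.get i)).Adj a b := by
  induction l with
  | nil => simp
  | cons hd tl ih =>
    simp only [List.foldr_cons, SimpleGraph.sup_adj, ih]
    constructor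
    · rintro (h | ⟨i, h⟩)
      · exact ⟨⟨0, Nat.succ_pos _⟩, h⟩
      · exact ⟨i.succ, h⟩
    · rintro ⟨⟨iv, hi⟩, h⟩
      cases iv with
      | zero => exact Or.inl h
      | succ iv' => exact Or.inr ⟨⟨iv', Nat.lt_of_succ_lt_succ hi⟩, h⟩

lemma reach_mono {G H : SimpleGraph V} (h : ∀ a b, G.Adj a b → H.Adj a b)
    {p q : V} (hr : G.Reachable p q) : H.Reachable p q := by
  obtain ⟨wk⟩ := hr
  induction wk with
  | nil => exact SimpleGraph.Reachable.refl _
  | cons ha wtail ih => exact ((h _ _ ha).reachable).trans ih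

lemma walk_endpoints {G : SimpleGraph V} {A : Set V}
    (hG : ∀ a b, G.Adj a b → a ∈ A ∧ b ∈ A) {p q : V} (wk : G.Walk p q) :
    p = q ∨ (p ∈ A ∧ q ∈ A) := by
  induction wk with
  | nil => exact Or.inl rfl
  | cons ha wtail ih =>
    right
    refine ⟨(hG _ _ ha).1, ?_⟩
    rcases ih with rfl | hh
    · exact (hG _ _ ha).2
    · exact hh.2

lemma glue_walk {G : SimpleGraph V} {s : V × V × V} {A : Set V}
    (hG : ∀ a b, G.Adj a b → a ∈ A ∧ b ∈ A)
    (hsub : Set.Subsingleton (tripleVerts s ∩ A)) {x q : V}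
    (wk : (G ⊔ triGraph s).Walk x q) (hq : q ∈ A) :
    (x ∈ A → G.Reachable x q) ∧
      (x ∈ tripleVerts s → ∀ y, y ∈ tripleVerts s → y ∈ A → G.Reachable y q) := by
  induction wk with
  | @nil x0 =>
    constructor
    · intro _; exact SimpleGraph.Reachable.refl _
    · intro hx y hy hyA
      have h : y = x0 := hsub ⟨hy, hyA⟩ ⟨hx, hq⟩
      rw [h]
  | @cons x z q' ha wtail ih =>
    rcases (SimpleGraph.sup_adj _ _ _ _).1 ha with hg | ht
    · have hxA := (hG _ _ hg).1
      have hzA := (hG _ _ hg).2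
      have hreach : G.Reachable x q' := (hg.reachable).trans ((ih hq).1 hzA)
      constructor
      · intro _; exact hreach
      · intro hxs y hy hyA
        have : y = x := hsub ⟨hy, hyA⟩ ⟨hxs, hxA⟩
        rw [this]; exact hreach
    · have hxs := (triGraph_mem ht).1
      have hzs := (triGraph_mem ht).2
      constructor
      · intro hxA; exact (ih hq).2 hzs x hxs hxA
      · intro _ y hy hyA; exact (ih hq).2 hzs y hy hyA

lemma sep_aux (l : List (V × V × V))
    (hcond : ∀ i : Fin l.length, Set.Subsingleton
      (tripleVerts (l.get i) ∩ ⋃ (j : Fin l.length) (_ : j < i), tripleVerts (l.get j))) :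
    ∀ (r : ℕ) (j : Fin l.length), j.val < r → ∀ G : SimpleGraph V,
      (∀ p q, G.Adj p q → ∃ i : Fin l.length, i ≠ j ∧ i.val < r ∧ (triGraph (l.get i)).Adj p q) →
      ∀ p q, p ∈ tripleVerts (l.get j) → q ∈ tripleVerts (l.get j) → p ≠ q →
        ¬ G.Reachable p q := by
  intro r
  induction r with
  | zero => intro j hj; exact absurd hj (Nat.not_lt_zero _)
  | succ r ih =>
    intro j hj G hG p q hp hq hpq hreach
    by_cases hjr : j.val = r
    · have hGA : ∀ a b, G.Adj a b → a ∈ (⋃ (i : Fin l.length) (_ : i.val < r),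
          tripleVerts (l.get i)) ∧ b ∈ (⋃ (i : Fin l.length) (_ : i.val < r),
          tripleVerts (l.get i)) := by
        intro a b h
        obtain ⟨i, hij, hir, ht⟩ := hG a b h
        have hir' : i.val < r := by
          have : i.val ≠ j.val := fun hh => hij (Fin.ext hh)
          omega
        exact ⟨Set.mem_iUnion.2 ⟨i, Set.mem_iUnion.2 ⟨hir', (triGraph_mem ht).1⟩⟩,
          Set.mem_iUnion.2 ⟨i, Set.mem_iUnion.2 ⟨hir', (triGraph_mem ht).2⟩⟩⟩
      obtain ⟨wk⟩ := hreach
      rcases walk_endpoints hGA wk with rfl | ⟨hpA, hqA⟩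
      · exact hpq rfl
      · apply hpq
        obtain ⟨ip, hipm⟩ := Set.mem_iUnion.1 hpA
        obtain ⟨hip, hpi⟩ := Set.mem_iUnion.1 hipm
        obtain ⟨iq, hiqm⟩ := Set.mem_iUnion.1 hqA
        obtain ⟨hiq, hqi⟩ := Set.mem_iUnion.1 hiqm
        exact hcond j ⟨hp, Set.mem_iUnion.2 ⟨ip, Set.mem_iUnion.2
            ⟨Fin.lt_def.2 (by omega), hpi⟩⟩⟩
          ⟨hq, Set.mem_iUnion.2 ⟨iq, Set.mem_iUnion.2 ⟨Fin.lt_def.2 (by omega), hqi⟩⟩⟩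
    · have hjr' : j.val < r := by omega
      by_cases hrl : r < l.length
      · set r' : Fin l.length := ⟨r, hrl⟩ with hr'
        set H : SimpleGraph V := SimpleGraph.fromRel
          (fun a b => ∃ i : Fin l.length, i ≠ j ∧ i.val < r ∧ (triGraph (l.get i)).Adj a b)
          with hH
        have hHe : ∀ a b, H.Adj a b →
            ∃ i : Fin l.length, i ≠ j ∧ i.val < r ∧ (triGraph (l.get i)).Adj a b := by
          intro a b h
          rw [hH, SimpleGraph.fromRel_adj] at h
          rcases h.2 with ⟨i, h1, h2, h3⟩ | ⟨i, h1, h2, h3⟩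
          exacts [⟨i, h1, h2, h3⟩, ⟨i, h1, h2, h3.symm⟩]
        have hHA : ∀ a b, H.Adj a b → a ∈ (⋃ (i : Fin l.length) (_ : i.val < r),
            tripleVerts (l.get i)) ∧ b ∈ (⋃ (i : Fin l.length) (_ : i.val < r),
            tripleVerts (l.get i)) := by
          intro a b h
          obtain ⟨i, _, hir, ht⟩ := hHe a b h
          exact ⟨Set.mem_iUnion.2 ⟨i, Set.mem_iUnion.2 ⟨hir, (triGraph_mem ht).1⟩⟩,
            Set.mem_iUnion.2 ⟨i, Set.mem_iUnion.2 ⟨hir, (triGraph_mem ht).2⟩⟩⟩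
        have hsub : Set.Subsingleton (tripleVerts (l.get r') ∩
            ⋃ (i : Fin l.length) (_ : i.val < r), tripleVerts (l.get i)) := by
          intro a ha b hb
          obtain ⟨ha1, haA⟩ := ha
          obtain ⟨hb1, hbA⟩ := hb
          obtain ⟨ia, hiam⟩ := Set.mem_iUnion.1 haA
          obtain ⟨hia, hai⟩ := Set.mem_iUnion.1 hiam
          obtain ⟨ib, hibm⟩ := Set.mem_iUnion.1 hbA
          obtain ⟨hib, hbi⟩ := Set.mem_iUnion.1 hibm
          exact hcond r' ⟨ha1, Set.mem_iUnion.2 ⟨ia, Set.mem_iUnion.2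
              ⟨Fin.lt_def.2 hia, hai⟩⟩⟩
            ⟨hb1, Set.mem_iUnion.2 ⟨ib, Set.mem_iUnion.2 ⟨Fin.lt_def.2 hib, hbi⟩⟩⟩
        have hle : ∀ a b, G.Adj a b → (H ⊔ triGraph (l.get r')).Adj a b := by
          intro a b h
          obtain ⟨i, hij, hir, ht⟩ := hG a b h
          by_cases hi : i.val = r
          · have hieq : i = r' := Fin.ext hi
            exact (SimpleGraph.sup_adj _ _ _ _).2 (Or.inr (by rw [← hieq]; exact ht))
          · refine (SimpleGraph.sup_adj _ _ _ _).2 (Or.inl ?_)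
            rw [hH, SimpleGraph.fromRel_adj]
            exact ⟨ht.ne, Or.inl ⟨i, hij, by omega, ht⟩⟩
        obtain ⟨wk⟩ := reach_mono hle hreach
        have hpA : p ∈ (⋃ (i : Fin l.length) (_ : i.val < r), tripleVerts (l.get i)) :=
          Set.mem_iUnion.2 ⟨j, Set.mem_iUnion.2 ⟨hjr', hp⟩⟩
        have hqA : q ∈ (⋃ (i : Fin l.length) (_ : i.val < r), tripleVerts (l.get i)) :=
          Set.mem_iUnion.2 ⟨j, Set.mem_iUnion.2 ⟨hjr', hq⟩⟩
        have := (glue_walk hHA hsub wk hqA).1 hpA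
        exact ih j hjr' H hHe p q hp hq hpq this
      · refine ih j hjr' G (fun a b h => ?_) p q hp hq hpq hreach
        obtain ⟨i, hij, _, ht⟩ := hG a b h
        refine ⟨i, hij, ?_, ht⟩
        have := i.isLt
        omega

lemma triple_eq {a b c x y z : V} (hab : a ≠ b) (hbc : b ≠ c) (hac : a ≠ c)
    (hxy : x ≠ y) (hyz : y ≠ z) (hxz : x ≠ z)
    (hx : x ∈ ({a, b, c} : Set V)) (hy : y ∈ ({a, b, c} : Set V))
    (hz : z ∈ ({a, b, c} : Set V)) :
    ({a, b, c} : Set V) = {x, y, z} := by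
  simp only [Set.mem_insert_iff, Set.mem_singleton_iff] at hx hy hz
  rcases hx with rfl | rfl | rfl <;> rcases hy with rfl | rfl | rfl <;>
    rcases hz with rfl | rfl | rfl <;>
    first
      | (ext w; simp only [Set.mem_insert_iff, Set.mem_singleton_iff]; tauto)
      | simp_all

lemma lab_inj {s : V × V × V} {lab : V → V → Fin 2}
    (hl1 : lab s.1 s.2.1 ≠ lab s.1 s.2.2) (hl2 : lab s.2.1 s.1 ≠ lab s.2.1 s.2.2)
    (hl3 : lab s.2.2 s.1 ≠ lab s.2.2 s.2.1)
    {p a b : V} (hp : p ∈ tripleVerts s) (ha : a ∈ tripleVerts s) (hb : b ∈ tripleVerts s)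
    (hap : a ≠ p) (hbp : b ≠ p) (heq : lab p a = lab p b) : a = b := by
  simp only [tripleVerts, Set.mem_insert_iff, Set.mem_singleton_iff] at hp ha hb
  rcases hp with rfl | rfl | rfl <;> rcases ha with rfl | rfl | rfl <;>
    rcases hb with rfl | rfl | rfl <;> first | rfl | simp_all

open Classical in
noncomputable def code3 {C : Type*} (ca cb cc d : C) : ℕ :=
  if d = ca then 0 else if d = cb then 1 else if d = cc then 2 else 3

lemma code3_lt {C : Type*} (ca cb cc d : C) : code3 ca cb cc d < 4 := by
  unfold code3; split_ifs <;> omega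

lemma code3_iff {C : Type*} {ca cb cc : C} (hab : ca ≠ cb) (hbc : cb ≠ cc) (hac : ca ≠ cc)
    {d d' : C} (hd : d = ca ∨ d = cb ∨ d = cc) (hd' : d' = ca ∨ d' = cb ∨ d' = cc) :
    (code3 ca cb cc d = code3 ca cb cc d' ↔ d = d') := by
  have hba := hab.symm
  have hcb := hbc.symm
  have hca := hac.symm
  unfold code3
  rcases hd with rfl | rfl | rfl <;> rcases hd' with rfl | rfl | rfl <;> simp_all

end GraphAux

theorem stmt_16 {V : Type*} (T : SimpleGraph V) (hT : IsK3Forest T) (m : ℕ)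
    (tri : Fin m → V × V × V)
    (htri : ∀ k, T.Adj (tri k).1 (tri k).2.1 ∧ T.Adj (tri k).2.1 (tri k).2.2 ∧
      T.Adj (tri k).1 (tri k).2.2)
    (huniq : ∀ u v, T.Adj u v → ∃! k, inTri u v (tri k))
    (lab : V → V → Fin 2)
    (hlab : ∀ k, lab (tri k).1 (tri k).2.1 ≠ lab (tri k).1 (tri k).2.2 ∧
      lab (tri k).2.1 (tri k).1 ≠ lab (tri k).2.1 (tri k).2.2 ∧
      lab (tri k).2.2 (tri k).1 ≠ lab (tri k).2.2 (tri k).2.1) :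
    OddGirthGT (Tstar T m tri lab) 7 := by
  classical
  intro v w hcyc hwodd
  by_contra hgt
  push_neg at hgt
  obtain ⟨l, hlc, hlT⟩ := hT
  set n := w.length with hnw
  have hln : 3 ≤ n := hcyc.three_le_length
  have hn357 : n = 3 ∨ n = 5 ∨ n = 7 := by
    obtain ⟨t, ht⟩ := hwodd
    omega
  have hnpos : 0 < n := by omega
  -- the cyclically indexed vertex sequence of the walk
  set f : ℕ → (V × (Fin m → Fin 2)) := fun i => w.getVert (i % n) with hf
  have hfper : ∀ i, f (i + n) = f i := fun i => by
    simp only [hf, Nat.add_mod_right]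
  have hfadj : ∀ i, (Tstar T m tri lab).Adj (f i) (f (i + 1)) := by
    intro i
    have h1 : i % n < n := Nat.mod_lt _ hnpos
    have h2 : (Tstar T m tri lab).Adj (w.getVert (i % n)) (w.getVert (i % n + 1)) :=
      w.adj_getVert_succ (hnw ▸ h1)
    have h3 : f (i + 1) = w.getVert (i % n + 1) := by
      show w.getVert ((i + 1) % n) = _
      have e1 : (i + 1) % n = (i % n + 1) % n := by
        conv_lhs => rw [Nat.add_mod, Nat.mod_eq_of_lt (show 1 < n by omega)]
      rcases Nat.lt_or_ge (i % n + 1) n with h | h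
      · rw [e1, Nat.mod_eq_of_lt h]
      · have h4 : i % n + 1 = n := by omega
        rw [e1, h4, Nat.mod_self]
        rw [SimpleGraph.Walk.getVert_zero, hnw, SimpleGraph.Walk.getVert_length]
    rw [h3]
    exact h2
  set u : ℕ → V := fun i => (f i).1 with hu
  set xx : ℕ → (Fin m → Fin 2) := fun i => (f i).2 with hxx
  have hcons : ∀ i, T.Adj (u i) (u (i+1)) ∧ (∀ k', inTri (u i) (u (i+1)) (tri k') →
      (xx i k' = lab (u i) (u (i+1)) ∧ xx (i+1) k' = lab (u (i+1)) (u i))) := by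
    intro i
    have h := hfadj i
    rw [Tstar, SimpleGraph.fromRel_adj] at h
    rcases h with ⟨hne, h | h⟩
    · exact ⟨h.1, fun k' hk' => h.2 k' hk'⟩
    · exact ⟨h.1.symm, fun k' hk' => ⟨(h.2 k' ⟨hk'.2, hk'.1⟩).2, (h.2 k' ⟨hk'.2, hk'.1⟩).1⟩⟩
  have hTadj : ∀ i, T.Adj (u i) (u (i+1)) := fun i => (hcons i).1
  have hune : ∀ i, u i ≠ u (i+1) := fun i => (hTadj i).ne
  have huper : ∀ i, u (i + n) = u i := fun i => congrArg Prod.fst (hfper i)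
  -- the triangle of each edge of the walk
  have hex : ∀ i, ∃ kv : Fin m, inTri (u i) (u (i+1)) (tri kv) ∧
      ∀ k', inTri (u i) (u (i+1)) (tri k') → k' = kv := by
    intro i
    obtain ⟨kv, h1, h2⟩ := huniq _ _ (hTadj i)
    exact ⟨kv, h1, h2⟩
  choose kk hkk1 hkk2 using hex
  -- the star (backtracking) property
  have hstar : ∀ i, kk i = kk (i+1) → u i = u (i+2) := by
    intro i he
    have l1 : xx (i+1) (kk i) = lab (u (i+1)) (u i) := ((hcons i).2 (kk i) (hkk1 i)).2
    have l2 : xx (i+1) (kk i) = lab (u (i+1)) (u (i+2)) := by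
      rw [he]
      exact ((hcons (i+1)).2 (kk (i+1)) (hkk1 (i+1))).1
    have m1 : u i ∈ tripleVerts (tri (kk i)) := (hkk1 i).1
    have m2 : u (i+1) ∈ tripleVerts (tri (kk i)) := (hkk1 i).2
    have m3 : u (i+2) ∈ tripleVerts (tri (kk i)) := by
      rw [he]; exact (hkk1 (i+1)).2
    exact lab_inj (hlab (kk i)).1 (hlab (kk i)).2.1 (hlab (kk i)).2.2 m2 m1 m3
      (hune i) ((hune (i+1)).symm) (l1.symm.trans l2)
  -- periodicity of the triangle indices
  have hkkper : ∀ i, kk (i + n) = kk i := by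
    intro i
    have h1 : inTri (u (i+n)) (u (i+n+1)) (tri (kk i)) := by
      have e1 : i + n + 1 = (i + 1) + n := by omega
      rw [huper i, e1, huper (i+1)]
      exact hkk1 i
    exact (hkk2 (i+n) (kk i) h1).symm
  -- pick a triangle index with odd multiplicity
  have hk0 : ∃ k0 : Fin m, Odd (((Finset.range n).filter (fun i => kk i = k0)).card) := by
    by_contra hco
    push_neg at hco
    simp only [Nat.not_odd_iff_even] at hco
    have hsum : (Finset.range n).card =
        ∑ b : Fin m, ((Finset.range n).filter (fun i => kk i = b)).card :=
      Finset.card_eq_sum_card_fiberwise (fun x _ => Finset.mem_univ _)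
    have : Even n := by
      have : Even ((Finset.range n).card) := by
        rw [hsum]
        exact Finset.even_sum _ (fun b _ => hco b)
      simpa using this
    exact absurd hwodd (Nat.not_odd_iff_even.2 this)
  obtain ⟨k0, hk0odd⟩ := hk0
  -- adjacency in T comes from a triangle of the list
  have hadj_iff : ∀ p q : V, T.Adj p q ↔
      ∃ i : Fin l.length, (triGraph (l.get i)).Adj p q := by
    intro p q
    rw [hlT]
    exact foldr_adj l p q
  -- abbreviations for the vertices of tri k0
  have hdxy : (tri k0).1 ≠ (tri k0).2.1 := (htri k0).1.ne
  have hdyz : (tri k0).2.1 ≠ (tri k0).2.2 := (htri k0).2.1.ne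
  have hdxz : (tri k0).1 ≠ (tri k0).2.2 := (htri k0).2.2.ne
  have hxm : (tri k0).1 ∈ tripleVerts (tri k0) := by simp [tripleVerts]
  have hym : (tri k0).2.1 ∈ tripleVerts (tri k0) := by simp [tripleVerts]
  have hzm : (tri k0).2.2 ∈ tripleVerts (tri k0) := by simp [tripleVerts]
  -- find the list triangle containing all vertices of tri k0
  obtain ⟨i1, he1⟩ := (hadj_iff _ _).1 (htri k0).1
  obtain ⟨i2, he2⟩ := (hadj_iff _ _).1 (htri k0).2.1
  obtain ⟨i3, he3⟩ := (hadj_iff _ _).1 (htri k0).2.2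
  have hm1 := triGraph_mem he1
  have hm2 := triGraph_mem he2
  have hm3 := triGraph_mem he3
  have hcond2 : ∀ (i : Fin l.length) (p q : V), p ∈ tripleVerts (l.get i) →
      q ∈ tripleVerts (l.get i) →
      (∃ j' : Fin l.length, j' < i ∧ p ∈ tripleVerts (l.get j')) →
      (∃ j' : Fin l.length, j' < i ∧ q ∈ tripleVerts (l.get j')) → p = q := by
    rintro i p q hp hq ⟨jp, hjp, hpj⟩ ⟨jq, hjq, hqj⟩
    exact (hlc i).2 ⟨hp, Set.mem_iUnion.2 ⟨jp, Set.mem_iUnion.2 ⟨hjp, hpj⟩⟩⟩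
      ⟨hq, Set.mem_iUnion.2 ⟨jq, Set.mem_iUnion.2 ⟨hjq, hqj⟩⟩⟩
  have hshare : ∀ (i i' : Fin l.length), i ≠ i' → ∀ p q : V, p ≠ q →
      p ∈ tripleVerts (l.get i) → q ∈ tripleVerts (l.get i) →
      p ∈ tripleVerts (l.get i') → q ∈ tripleVerts (l.get i') → False := by
    intro i i' hne p q hpq hpi hqi hpi' hqi'
    rcases hne.lt_or_gt with h | h
    · exact hpq (hcond2 i' p q hpi' hqi' ⟨i, h, hpi⟩ ⟨i, h, hqi⟩)
    · exact hpq (hcond2 i p q hpi hqi ⟨i', h, hpi'⟩ ⟨i', h, hqi'⟩)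
  have hj : ∃ jj : Fin l.length, (tri k0).1 ∈ tripleVerts (l.get jj) ∧
      (tri k0).2.1 ∈ tripleVerts (l.get jj) ∧ (tri k0).2.2 ∈ tripleVerts (l.get jj) := by
    by_cases h12 : i1 = i2
    · exact ⟨i1, hm1.1, hm1.2, by rw [h12]; exact hm2.2⟩
    · by_cases h31 : i3 = i1
      · exact (hshare i1 i2 h12 (tri k0).2.1 (tri k0).2.2 hdyz hm1.2
          (by rw [← h31]; exact hm3.2) hm2.1 hm2.2).elim
      · by_cases h32 : i3 = i2
        · exact (hshare i1 i2 h12 (tri k0).1 (tri k0).2.1 hdxy hm1.1 hm1.2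
            (by rw [← h32]; exact hm3.1) hm2.1).elim
        · exfalso
          have hv12 : i1.val ≠ i2.val := fun hh => h12 (Fin.ext hh)
          have hv31 : i3.val ≠ i1.val := fun hh => h31 (Fin.ext hh)
          have hv32 : i3.val ≠ i2.val := fun hh => h32 (Fin.ext hh)
          have H : (i1 < i3 ∧ i2 < i3) ∨ (i3 < i1 ∧ i2 < i1) ∨ (i3 < i2 ∧ i1 < i2) := by
            simp only [Fin.lt_def]
            omega
          rcases H with ⟨ha, hb⟩ | ⟨ha, hb⟩ | ⟨ha, hb⟩
          · exact hdxz (hcond2 i3 _ _ hm3.1 hm3.2 ⟨i1, ha, hm1.1⟩ ⟨i2, hb, hm2.2⟩)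
          · exact hdxy (hcond2 i1 _ _ hm1.1 hm1.2 ⟨i3, ha, hm3.1⟩ ⟨i2, hb, hm2.1⟩)
          · exact hdyz (hcond2 i2 _ _ hm2.1 hm2.2 ⟨i1, hb, hm1.2⟩ ⟨i3, ha, hm3.2⟩)
  obtain ⟨j, hxj, hyj, hzj⟩ := hj
  have hjeq : tripleVerts (l.get j) = tripleVerts (tri k0) :=
    triple_eq (hlc j).1.1 (hlc j).1.2.1 (hlc j).1.2.2 hdxy hdyz hdxz hxj hyj hzj
  -- the graph U of all other triangles
  set U : SimpleGraph V := SimpleGraph.fromRel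
    (fun p q => ∃ i : Fin l.length, i ≠ j ∧ (triGraph (l.get i)).Adj p q) with hU
  have hUelim : ∀ p q, U.Adj p q →
      ∃ i : Fin l.length, i ≠ j ∧ (triGraph (l.get i)).Adj p q := by
    intro p q h
    rw [hU, SimpleGraph.fromRel_adj] at h
    rcases h.2 with ⟨i, h1, h2⟩ | ⟨i, h1, h2⟩
    exacts [⟨i, h1, h2⟩, ⟨i, h1, h2.symm⟩]
  have hUintro : ∀ p q, T.Adj p q → ¬ inTri p q (tri k0) → U.Adj p q := by
    intro p q hpq hnin
    obtain ⟨i, hi⟩ := (hadj_iff _ _).1 hpq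
    have hij : i ≠ j := by
      rintro rfl
      exact hnin ⟨hjeq ▸ (triGraph_mem hi).1, hjeq ▸ (triGraph_mem hi).2⟩
    rw [hU, SimpleGraph.fromRel_adj]
    exact ⟨hpq.ne, Or.inl ⟨i, hij, hi⟩⟩
  have hsep : ∀ p q, p ∈ tripleVerts (tri k0) → q ∈ tripleVerts (tri k0) → p ≠ q →
      ¬ U.Reachable p q := by
    intro p q hp hq hpq
    refine sep_aux l (fun i => (hlc i).2) l.length j j.isLt U (fun p' q' h => ?_) p q
      (hjeq ▸ hp) (hjeq ▸ hq) hpq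
    obtain ⟨i, hij, ha⟩ := hUelim p' q' h
    exact ⟨i, hij, i.isLt, ha⟩
  set ρ : V → U.ConnectedComponent := U.connectedComponentMk with hρ
  have hrinj : ∀ p q, p ∈ tripleVerts (tri k0) → q ∈ tripleVerts (tri k0) →
      ρ p = ρ q → p = q := by
    intro p q hp hq h
    by_contra hne
    exact hsep p q hp hq hne (SimpleGraph.ConnectedComponent.exact h)
  -- the coded sequence
  set g : ℕ → ℕ := fun i => code3 (ρ (tri k0).1) (ρ (tri k0).2.1) (ρ (tri k0).2.2) (ρ (u i))
    with hg
  have hρd1 : ρ (tri k0).1 ≠ ρ (tri k0).2.1 := fun h => hdxy (hrinj _ _ hxm hym h)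
  have hρd2 : ρ (tri k0).2.1 ≠ ρ (tri k0).2.2 := fun h => hdyz (hrinj _ _ hym hzm h)
  have hρd3 : ρ (tri k0).1 ≠ ρ (tri k0).2.2 := fun h => hdxz (hrinj _ _ hxm hzm h)
  have hgmem : ∀ i, u i ∈ tripleVerts (tri k0) →
      (ρ (u i) = ρ (tri k0).1 ∨ ρ (u i) = ρ (tri k0).2.1 ∨ ρ (u i) = ρ (tri k0).2.2) := by
    intro i hi
    have : u i = (tri k0).1 ∨ u i = (tri k0).2.1 ∨ u i = (tri k0).2.2 := by
      simpa [tripleVerts] using hi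
    rcases this with h | h | h
    · exact Or.inl (by rw [h])
    · exact Or.inr (Or.inl (by rw [h]))
    · exact Or.inr (Or.inr (by rw [h]))
  have hgcode : ∀ i i', u i ∈ tripleVerts (tri k0) → u i' ∈ tripleVerts (tri k0) →
      (g i = g i' ↔ u i = u i') := by
    intro i i' hi hi'
    rw [hg]
    simp only
    rw [code3_iff hρd1 hρd2 hρd3 (hgmem i hi) (hgmem i' hi')]
    constructor
    · intro h; exact hrinj _ _ hi hi' h
    · intro h; rw [h]
  have hB2 : ∀ i, kk i ≠ k0 → g i = g (i+1) := by
    intro i hne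
    have hnin : ¬ inTri (u i) (u (i+1)) (tri k0) := fun h => hne (hkk2 i k0 h).symm
    have hadj := hUintro _ _ (hTadj i) hnin
    have hρeq : ρ (u i) = ρ (u (i+1)) := SimpleGraph.ConnectedComponent.sound hadj.reachable
    rw [hg]
    simp only
    rw [hρeq]
  have hchg : ∀ i, g i ≠ g (i+1) ↔ kk i = k0 := by
    intro i
    constructor
    · intro h
      by_contra hne
      exact h (hB2 i hne)
    · intro he hgeq
      have h1 : u i ∈ tripleVerts (tri k0) := he ▸ (hkk1 i).1
      have h2 : u (i+1) ∈ tripleVerts (tri k0) := he ▸ (hkk1 i).2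
      exact hune i ((hgcode i (i+1) h1 h2).1 hgeq)
  have hB3 : ∀ i, g i ≠ g (i+1) → g (i+1) ≠ g (i+2) → g i = g (i+2) := by
    intro i h1 h2
    have e1 := (hchg i).1 h1
    have e2 := (hchg (i+1)).1 h2
    have := hstar i (e1.trans e2.symm)
    rw [hg]
    simp only
    rw [this]
  have hB5 : ∀ i, g i ≠ g (i+1) → g (i+1) = g (i+2) → g (i+2) ≠ g (i+3) → False := by
    intro i h1 h2 h3
    have e1 := (hchg i).1 h1
    have e3 := (hchg (i+2)).1 h3
    have m2 : u (i+1) ∈ tripleVerts (tri k0) := e1 ▸ (hkk1 i).2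
    have m3 : u (i+2) ∈ tripleVerts (tri k0) := e3 ▸ (hkk1 (i+2)).1
    exact hune (i+1) ((hgcode (i+1) (i+2) m2 m3).1 h2)
  have hgper : ∀ i, g (i + n) = g i := by
    intro i
    rw [hg]
    simp only
    rw [huper i]
  have hglt : ∀ i, g i < 4 := fun i => code3_lt _ _ _ _
  have hgodd : Odd (((Finset.range n).filter (fun i => g i ≠ g (i+1))).card) := by
    have he : (Finset.range n).filter (fun i => g i ≠ g (i+1)) =
        (Finset.range n).filter (fun i => kk i = k0) := by
      apply Finset.filter_congr
      intro i _
      exact hchg i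
    rw [he]
    exact hk0odd
  exact absN n hn357 g hglt hgper hB3 hB5 hgodd
end
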